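/- arXiv:0804.3104 — 7 statements merged into one kernel-verified Lean document; each statement's English description precedes it below -/
import Mathlib

section
/- For every ε > 0 there exists δ > 0 with the following property: if Q : [0,1] → [0,1] is an increasing homeomorphism with Q(0) = 0 and Q(1) = 1 which is M-quasisymmetric for some M ≤ 1 + δ, meaning M⁻¹ ≤ (Q(x+t) − Q(x))/(Q(x) − Q(x−t)) ≤ M whenever x−t, x, x+t ∈ [0,1] and t > 0, then |Q(x) − x| ≤ ε for all x ∈ [0,1]. -/
/-!
The ratio condition at the midpoint `m` of `[a, b]` places `(Q m - Q a) / (Q b - Q a)` in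
`[1 / (1 + M), M / (1 + M)]`. So, for `M ≤ 2`, bisection shrinks image lengths by the factor
`2 / 3`, and `Q m - m` differs from the average of the endpoint errors by at most
`(M - 1) / 2` times the image length `Q b - Q a`. Following the bisection towards `x`,
the endpoint errors are bounded by the geometric series `(M - 1) / 2 * ∑ (2 / 3) ^ k`,
i.e. by `3 / 2 * (M - 1)`, and monotonicity of `Q` carries the bound to `x`.
-/

open Set

theorem midpoint_ratio_bounds {M L u : ℝ} (hM1 : 1 ≤ M) (hM2 : M ≤ 2) (hu : 0 ≤ u)
    (hlow : L ≤ (1 + M) * u) (hupp : (1 + M) * u ≤ M * L) :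
    u ≤ 2 / 3 * L ∧ L - u ≤ 2 / 3 * L ∧ |u - L / 2| ≤ (M - 1) / 2 * L := by
  have hLu : 0 ≤ L - u := by nlinarith
  rw [abs_le]
  refine ⟨by nlinarith, by nlinarith, by nlinarith [mul_nonneg (sub_nonneg.2 hM1) hLu],
    by nlinarith [mul_nonneg (sub_nonneg.2 hM1) hu]⟩

def IsQuasisymmetricOnUnitInterval (M : ℝ) (Q : ℝ → ℝ) : Prop :=
  ∀ x t : ℝ, 0 < t → x - t ∈ Icc (0:ℝ) 1 → x ∈ Icc (0:ℝ) 1 → x + t ∈ Icc (0:ℝ) 1 →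
    M⁻¹ ≤ (Q (x + t) - Q x) / (Q x - Q (x - t)) ∧
      (Q (x + t) - Q x) / (Q x - Q (x - t)) ≤ M

namespace IsQuasisymmetricOnUnitInterval

variable {M : ℝ} {Q : ℝ → ℝ}

theorem midpoint_bounds (hQ : IsQuasisymmetricOnUnitInterval M Q)
    (hmono : StrictMonoOn Q (Icc 0 1)) {a b : ℝ} (ha : 0 ≤ a) (hab : a < b) (hb : b ≤ 1) :
    Q b - Q a ≤ (1 + M) * (Q ((a + b) / 2) - Q a) ∧
      (1 + M) * (Q ((a + b) / 2) - Q a) ≤ M * (Q b - Q a) := by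
  set m := (a + b) / 2
  have hma : m - (b - a) / 2 = a := by ring
  have hmb : m + (b - a) / 2 = b := by ring
  have haI : a ∈ Icc (0:ℝ) 1 := ⟨ha, by linarith⟩
  have hbI : b ∈ Icc (0:ℝ) 1 := ⟨by linarith, hb⟩
  have hmI : m ∈ Icc (0:ℝ) 1 := ⟨by linarith, by linarith⟩
  obtain ⟨hlow, hupp⟩ := hQ m ((b - a) / 2) (by linarith) (by rwa [hma]) hmI (by rwa [hmb])
  rw [hma, hmb] at hlow hupp
  have hu : 0 < Q m - Q a := sub_pos.2 (hmono haI hmI (by linarith))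
  have hv : 0 < Q b - Q m := sub_pos.2 (hmono hmI hbI (by linarith))
  have hM : 0 < M := (div_pos hv hu).trans_le hupp
  rw [div_le_iff₀ hu] at hupp
  rw [le_div_iff₀ hu, inv_mul_le_iff₀ hM] at hlow
  constructor <;> linarith

theorem one_le (hQ : IsQuasisymmetricOnUnitInterval M Q) (hmono : StrictMonoOn Q (Icc 0 1)) :
    1 ≤ M := by
  obtain ⟨hlow, hupp⟩ := hQ.midpoint_bounds hmono le_rfl zero_lt_one le_rfl
  have hL : 0 < Q 1 - Q 0 := sub_pos.2 (hmono ⟨le_rfl, zero_le_one⟩ ⟨zero_le_one, le_rfl⟩ one_pos)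
  exact le_of_mul_le_mul_right (by linarith) hL

theorem midpoint_step (hQ : IsQuasisymmetricOnUnitInterval M Q)
    (hmono : StrictMonoOn Q (Icc 0 1)) (hM : M ≤ 2) {a b L d : ℝ} (ha : 0 ≤ a) (hab : a < b)
    (hb : b ≤ 1) (hL : Q b - Q a ≤ L) (hda : |Q a - a| ≤ d) (hdb : |Q b - b| ≤ d) :
    Q ((a + b) / 2) - Q a ≤ 2 / 3 * L ∧ Q b - Q ((a + b) / 2) ≤ 2 / 3 * L ∧
      |Q ((a + b) / 2) - (a + b) / 2| ≤ d + (M - 1) / 2 * L := by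
  obtain ⟨hlow, hupp⟩ := hQ.midpoint_bounds hmono ha hab hb
  have hu : 0 ≤ Q ((a + b) / 2) - Q a :=
    sub_nonneg.2 (hmono.monotoneOn ⟨ha, by linarith⟩ ⟨by linarith, by linarith⟩ (by linarith))
  obtain ⟨hleft, hright, hmid⟩ := midpoint_ratio_bounds (hQ.one_le hmono) hM hu hlow hupp
  have hexcess : 0 ≤ (M - 1) / 2 := by linarith [hQ.one_le hmono]
  have hm : Q ((a + b) / 2) - (a + b) / 2 =
      ((Q a - a) + (Q b - b)) / 2 + ((Q ((a + b) / 2) - Q a) - (Q b - Q a) / 2) := by ring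
  rw [abs_le] at hda hdb hmid ⊢
  have hdev := mul_le_mul_of_nonneg_left hL hexcess
  refine ⟨by linarith, by linarith, by rw [hm]; linarith, by rw [hm]; linarith⟩

theorem exists_bisection_bracket (hQ : IsQuasisymmetricOnUnitInterval M Q)
    (hmono : StrictMonoOn Q (Icc 0 1)) (h0 : Q 0 = 0) (h1 : Q 1 = 1) (hM : M ≤ 2) (n : ℕ)
    {x : ℝ} (hx : x ∈ Icc (0:ℝ) 1) :
    ∃ a b, 0 ≤ a ∧ a ≤ x ∧ x ≤ b ∧ b ≤ 1 ∧ b - a = (1 / 2) ^ n ∧ Q b - Q a ≤ (2 / 3) ^ n ∧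
      |Q a - a| ≤ 3 / 2 * (M - 1) * (1 - (2 / 3) ^ n) ∧
      |Q b - b| ≤ 3 / 2 * (M - 1) * (1 - (2 / 3) ^ n) := by
  induction n with
  | zero => exact ⟨0, 1, le_rfl, hx.1, hx.2, le_rfl, by norm_num, by simp [h0, h1], by simp [h0],
      by simp [h1]⟩
  | succ n ih =>
    obtain ⟨a, b, ha, hax, hxb, hb, hlen, hL, hda, hdb⟩ := ih
    have hab : a < b := by linarith [pow_pos (one_half_pos (α := ℝ)) n]
    obtain ⟨hleft, hright, hmid⟩ := hQ.midpoint_step hmono hM ha hab hb hL hda hdb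
    have hgrow : 3 / 2 * (M - 1) * (1 - (2 / 3) ^ (n + 1)) =
        3 / 2 * (M - 1) * (1 - (2 / 3) ^ n) + (M - 1) / 2 * (2 / 3) ^ n := by ring
    have hgrow_nonneg : 0 ≤ (M - 1) / 2 * (2 / 3) ^ n := by
      have := hQ.one_le hmono; positivity
    rw [hgrow, pow_succ, pow_succ]
    rcases le_total x ((a + b) / 2) with hxm | hmx
    · exact ⟨a, (a + b) / 2, ha, hax, hxm, by linarith, by linarith, by linarith, by linarith,
        hmid⟩
    · exact ⟨(a + b) / 2, b, by linarith, hmx, hxb, hb, by linarith, by linarith, hmid,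
        by linarith⟩

theorem abs_sub_le (hQ : IsQuasisymmetricOnUnitInterval M Q)
    (hmono : StrictMonoOn Q (Icc 0 1)) (h0 : Q 0 = 0) (h1 : Q 1 = 1) (hM : M ≤ 2)
    {x : ℝ} (hx : x ∈ Icc (0:ℝ) 1) :
    |Q x - x| ≤ 3 / 2 * (M - 1) := by
  refine le_of_forall_pos_lt_add fun η hη => ?_
  obtain ⟨n, hn⟩ := exists_pow_lt_of_lt_one hη one_half_lt_one
  obtain ⟨a, b, ha, hax, hxb, hb, hlen, -, hda, hdb⟩ :=
    hQ.exists_bisection_bracket hmono h0 h1 hM n hx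
  have hQa : Q a ≤ Q x := hmono.monotoneOn ⟨ha, hax.trans hx.2⟩ hx hax
  have hQb : Q x ≤ Q b := hmono.monotoneOn hx ⟨hx.1.trans hxb, hb⟩ hxb
  have hshrink : 3 / 2 * (M - 1) * (1 - (2 / 3) ^ n) ≤ 3 / 2 * (M - 1) :=
    mul_le_of_le_one_right (by linarith [hQ.one_le hmono]) (sub_le_self _ (by positivity))
  rw [abs_le] at hda hdb
  rw [abs_lt]
  constructor <;> linarith

end IsQuasisymmetricOnUnitInterval

/-- For every ε > 0 there exists δ > 0 such that any increasing
homeomorphism `Q` of `[0,1]` fixing `0` and `1` which is `M`-quasisymmetric for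
some `M ≤ 1 + δ` satisfies `|Q x - x| ≤ ε` on `[0,1]`. -/
theorem stmt_0 :
    ∀ ε : ℝ, 0 < ε → ∃ δ : ℝ, 0 < δ ∧
      ∀ (Q : ℝ → ℝ) (M : ℝ), M ≤ 1 + δ →
        StrictMonoOn Q (Set.Icc 0 1) →
        ContinuousOn Q (Set.Icc 0 1) →
        Set.MapsTo Q (Set.Icc 0 1) (Set.Icc 0 1) →
        Q 0 = 0 → Q 1 = 1 →
        (∀ x t : ℝ, 0 < t → x - t ∈ Set.Icc (0:ℝ) 1 → x ∈ Set.Icc (0:ℝ) 1 →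
          x + t ∈ Set.Icc (0:ℝ) 1 →
          M⁻¹ ≤ (Q (x + t) - Q x) / (Q x - Q (x - t)) ∧
            (Q (x + t) - Q x) / (Q x - Q (x - t)) ≤ M) →
        ∀ x ∈ Set.Icc (0:ℝ) 1, |Q x - x| ≤ ε := by
  intro ε hε
  refine ⟨min 1 (2 / 3 * ε), by positivity, fun Q M hM hmono _ _ h0 h1 hQ x hx => ?_⟩
  have hδ₁ := min_le_left 1 (2 / 3 * ε)
  have hδε := min_le_right 1 (2 / 3 * ε)
  calc |Q x - x| ≤ 3 / 2 * (M - 1) :=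
        IsQuasisymmetricOnUnitInterval.abs_sub_le hQ hmono h0 h1 (by linarith) hx
    _ ≤ ε := by linarith
end

section
/- For every ε > 0 there exists δ > 0 with the following property: let x ∈ ℝ, y > 0, and let H be a strictly increasing continuous map on [x−y, x+y] which is (1+δ)-quasisymmetric on [x−y, x+y], i.e. (1+δ)⁻¹ ≤ (H(u+s) − H(u))/(H(u) − H(u−s)) ≤ 1+δ whenever u−s, u, u+s ∈ [x−y, x+y] and s > 0. Then for every k with 0 < k ≤ 1, both |(H(x+ky) − H(x))/(H(x) − H(x−y)) − k| ≤ ε and |(H(x) − H(x−ky))/(H(x+y) − H(x)) − k| ≤ ε. -/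
/-!
Rescale `[x, x + y]` to `[0, 1]`. `K`-quasisymmetry says that halving an interval splits the
increment of `H` in a ratio within `[K⁻¹, K]`, so each half carries at least the fraction
`(1 + K)⁻¹` of it, and by induction every dyadic interval of level `n` carries at least
`(1 + K)⁻ⁿ` of the total increment. Squeezing `t` between neighbouring dyadic points gives
`|(H(x + ty) - H x) / (H(x + y) - H x) - t| ≤ 1 - (2 / (1 + K))ⁿ + (1 + K)⁻ⁿ`, and multiplying by
the distortion `ρ_H(x, y) ∈ [K⁻¹, K]` costs a factor `K` and an additive `K - 1`. As `K → 1` the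
bound tends to `2⁻ⁿ`. The left-hand side follows by applying this to `u ↦ -H(2x - u)`.
-/

open Set Topology

noncomputable def distortion (H : ℝ → ℝ) (x y : ℝ) : ℝ := (H (x + y) - H x) / (H x - H (x - y))

noncomputable def skewDistortion (H : ℝ → ℝ) (x y k : ℝ) : ℝ :=
  (H (x + k * y) - H x) / (H x - H (x - y))

def QuasisymmetricOn (K : ℝ) (H : ℝ → ℝ) (s : Set ℝ) : Prop :=
  ∀ u t, 0 < t → u - t ∈ s → u ∈ s → u + t ∈ s → distortion H u t ∈ Icc K⁻¹ K

theorem inv_mem_Icc_inv_self {K r : ℝ} (hK : 0 < K) (hr : r ∈ Icc K⁻¹ K) : r⁻¹ ∈ Icc K⁻¹ K := by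
  have hr0 : 0 < r := (inv_pos.2 hK).trans_le hr.1
  exact ⟨inv_anti₀ hr0 hr.2, (inv_le_comm₀ hK hr0).1 hr.1⟩

theorem abs_sub_one_le_of_mem_Icc_inv {K r : ℝ} (hK : 0 < K) (hr : r ∈ Icc K⁻¹ K) :
    |r - 1| ≤ K - 1 := by
  have : 2 - K ≤ K⁻¹ := by
    have h := mul_inv_cancel₀ hK.ne'
    nlinarith [mul_nonneg (sq_nonneg (K - 1)) (inv_pos.2 hK).le]
  exact abs_sub_le_iff.2 ⟨by linarith [hr.2], by linarith [hr.1]⟩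

theorem add_sub_mem_Icc {a b u : ℝ} (hu : u ∈ Icc a b) : a + b - u ∈ Icc a b :=
  ⟨by linarith [hu.2], by linarith [hu.1]⟩

theorem StrictMonoOn.reflect {H : ℝ → ℝ} {a b : ℝ} (hH : StrictMonoOn H (Icc a b)) :
    StrictMonoOn (fun u => -H (a + b - u)) (Icc a b) := fun _ hu _ hv huv =>
  neg_lt_neg (hH (add_sub_mem_Icc hv) (add_sub_mem_Icc hu) (by linarith))

theorem distortion_reflect (H : ℝ → ℝ) (c u t : ℝ) :
    distortion (fun v => -H (c - v)) u t = (distortion H (c - u) t)⁻¹ := by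
  simp only [distortion, inv_div]
  rw [show c - (u + t) = c - u - t by ring, show c - (u - t) = c - u + t by ring]
  ring

theorem QuasisymmetricOn.reflect {K : ℝ} {H : ℝ → ℝ} {a b : ℝ} (hK : 0 < K)
    (hH : QuasisymmetricOn K H (Icc a b)) :
    QuasisymmetricOn K (fun u => -H (a + b - u)) (Icc a b) := by
  intro u t ht hl hu hr
  rw [distortion_reflect]
  refine inv_mem_Icc_inv_self hK (hH _ t ht ?_ (add_sub_mem_Icc hu) ?_)
  · simpa [sub_sub] using add_sub_mem_Icc hr
  · simpa [sub_add] using add_sub_mem_Icc hl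

-- The right-hand side is the paper's `ρ_H(x, -y, k)`.
theorem skewDistortion_reflect (H : ℝ → ℝ) (x y k : ℝ) :
    skewDistortion (fun u => -H (x - y + (x + y) - u)) x y k =
      (H x - H (x - k * y)) / (H (x + y) - H x) := by
  simp only [skewDistortion]
  rw [show x - y + (x + y) - (x + k * y) = x - k * y by ring,
    show x - y + (x + y) - x = x by ring, show x - y + (x + y) - (x - y) = x + y by ring]
  ring

theorem inv_one_add_mul_add_le {K A B : ℝ} (hA : 0 < A) (hB : 0 < B) (h : B / A ∈ Icc K⁻¹ K) :
    (1 + K)⁻¹ * (A + B) ≤ A ∧ (1 + K)⁻¹ * (A + B) ≤ B := by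
  have hK : 0 < K := (div_pos hB hA).trans_le h.2
  have hBA : B ≤ K * A := (div_le_iff₀ hA).1 h.2
  have hAB : A ≤ K * B := (inv_mul_le_iff₀ hK).1 ((le_div_iff₀ hA).1 h.1)
  simp only [inv_mul_le_iff₀ (by linarith : (0:ℝ) < 1 + K)]
  constructor <;> linarith

theorem QuasisymmetricOn.comp_affine {K x y : ℝ} {H : ℝ → ℝ} {s t : Set ℝ}
    (hqs : QuasisymmetricOn K H t) (hy : 0 < y) (hst : MapsTo (fun u => x + u * y) s t) :
    QuasisymmetricOn K (fun u => H (x + u * y)) s := by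
  intro u h hh hl hu hr
  have := hqs (x + u * y) (h * y) (by positivity) (by simpa [sub_mul, add_sub_assoc] using hst hl)
    (hst hu) (by simpa [add_mul, add_assoc] using hst hr)
  simpa [distortion, sub_mul, add_mul, add_sub_assoc, add_assoc] using this

theorem QuasisymmetricOn.inv_one_add_mul_le {K : ℝ} {G : ℝ → ℝ} {s : Set ℝ}
    (hqs : QuasisymmetricOn K G s) (hG : StrictMonoOn G s) {u h : ℝ} (hh : 0 < h)
    (hl : u - h ∈ s) (hu : u ∈ s) (hr : u + h ∈ s) :
    (1 + K)⁻¹ * (G (u + h) - G (u - h)) ≤ G u - G (u - h) ∧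
      (1 + K)⁻¹ * (G (u + h) - G (u - h)) ≤ G (u + h) - G u := by
  have := inv_one_add_mul_add_le (sub_pos.2 (hG hl hu (by linarith)))
    (sub_pos.2 (hG hu hr (by linarith))) (hqs u h hh hl hu hr)
  rwa [sub_add_sub_cancel'] at this

theorem dyadic_increment_ge {G : ℝ → ℝ} {c : ℝ} (hc : 0 ≤ c)
    (hsplit : ∀ u h, 0 < h → u - h ∈ Icc 0 1 → u ∈ Icc 0 1 → u + h ∈ Icc 0 1 →
      c * (G (u + h) - G (u - h)) ≤ G u - G (u - h) ∧
        c * (G (u + h) - G (u - h)) ≤ G (u + h) - G u)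
    (n : ℕ) : ∀ p w, 0 ≤ p → 0 < w → p + 2 ^ n * w ≤ 1 → ∀ j : ℕ, j < 2 ^ n →
      c ^ n * (G (p + 2 ^ n * w) - G p) ≤ G (p + (j + 1) * w) - G (p + j * w) := by
  induction n with
  | zero =>
    intro p w _ _ _ j hj
    obtain rfl : j = 0 := by simpa using hj
    simp
  | succ n ih =>
    intro p w hp hw hpw j hj
    have hw' : 0 < 2 ^ n * w := by positivity
    rw [show (2 : ℝ) ^ (n + 1) * w = 2 ^ n * w + 2 ^ n * w by ring, ← add_assoc] at hpw ⊢
    have := hsplit (p + 2 ^ n * w) _ hw'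
      (by rw [add_sub_cancel_right]; exact ⟨hp, by linarith⟩) ⟨by positivity, by linarith⟩
      ⟨by positivity, hpw⟩
    rw [add_sub_cancel_right] at this
    obtain ⟨hleft, hright⟩ := this
    -- split off the leading binary digit of `j`
    rcases lt_or_ge j (2 ^ n) with hj' | hj'
    · calc c ^ (n + 1) * (G (p + 2 ^ n * w + 2 ^ n * w) - G p)
            = c ^ n * (c * (G (p + 2 ^ n * w + 2 ^ n * w) - G p)) := by ring
        _ ≤ c ^ n * (G (p + 2 ^ n * w) - G p) := by gcongr
        _ ≤ _ := ih p w hp hw (by linarith) j hj'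
    · obtain ⟨i, rfl⟩ := Nat.exists_eq_add_of_le hj'
      have hi : i < 2 ^ n := by rw [pow_succ] at hj; omega
      calc c ^ (n + 1) * (G (p + 2 ^ n * w + 2 ^ n * w) - G p)
            = c ^ n * (c * (G (p + 2 ^ n * w + 2 ^ n * w) - G p)) := by ring
        _ ≤ c ^ n * (G (p + 2 ^ n * w + 2 ^ n * w) - G (p + 2 ^ n * w)) := by gcongr
        _ ≤ G (p + 2 ^ n * w + (i + 1) * w) - G (p + 2 ^ n * w + i * w) :=
          ih _ w (by positivity) hw hpw i hi
        _ = _ := by push_cast; ring_nf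

theorem mul_le_sub_of_forall_le_sub_succ {f : ℕ → ℝ} {d : ℝ} {m : ℕ}
    (hf : ∀ l < m, d ≤ f (l + 1) - f l) {i j : ℕ} (hij : i ≤ j) (hjm : j ≤ m) :
    ((j : ℝ) - i) * d ≤ f j - f i := by
  rw [← Finset.sum_Ico_sub f hij]
  have := Finset.card_nsmul_le_sum (Finset.Ico i j) (fun l => f (l + 1) - f l) d
    fun l hl => hf l (by rw [Finset.mem_Ico] at hl; omega)
  simpa [nsmul_eq_mul, Nat.cast_sub hij] using this

theorem abs_div_sub_le_of_dyadic {G : ℝ → ℝ} {c : ℝ} {n : ℕ} (hc : 0 ≤ c) (hc2 : 2 * c ≤ 1)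
    (hG : MonotoneOn G (Icc 0 1)) (hG01 : G 0 < G 1)
    (hdy : ∀ j : ℕ, j < 2 ^ n → c ^ n * (G 1 - G 0) ≤ G ((j + 1) / 2 ^ n) - G (j / 2 ^ n))
    {t : ℝ} (ht : t ∈ Icc 0 1) :
    |(G t - G 0) / (G 1 - G 0) - t| ≤ 1 - (2 * c) ^ n + c ^ n := by
  have hD : 0 < G 1 - G 0 := sub_pos.2 hG01
  have h2n : (0 : ℝ) < 2 ^ n := by positivity
  have htn : 0 ≤ t * 2 ^ n := by positivity [ht.1]
  have hsum (i j : ℕ) (hij : i ≤ j) (hj : j ≤ 2 ^ n) :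
      ((j : ℝ) - i) * (c ^ n * (G 1 - G 0)) ≤ G (j / 2 ^ n) - G (i / 2 ^ n) :=
    mul_le_sub_of_forall_le_sub_succ (f := fun l : ℕ => G (l / 2 ^ n))
      (fun l hl => by simpa using hdy l hl) hij hj
  set a := ⌊t * 2 ^ n⌋₊
  set b := ⌈t * 2 ^ n⌉₊
  have hb : b ≤ 2 ^ n := Nat.ceil_le.2 (by push_cast; nlinarith [ht.2])
  have ha : a ≤ 2 ^ n := (Nat.floor_le_ceil _).trans hb
  have ha_ge : t * 2 ^ n - 1 ≤ a := by linarith [Nat.lt_floor_add_one (t * 2 ^ n)]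
  have hb_le : (b : ℝ) ≤ t * 2 ^ n + 1 := (Nat.ceil_lt_add_one htn).le
  have hGa : G (a / 2 ^ n) ≤ G t := by
    refine hG ⟨by positivity, ?_⟩ ht ?_ <;> rw [div_le_iff₀ h2n]
    · rw [one_mul]; exact_mod_cast ha
    · exact Nat.floor_le htn
  have hGb : G t ≤ G (b / 2 ^ n) := by
    refine hG ht ⟨by positivity, ?_⟩ ?_
    · rw [div_le_one h2n]; exact_mod_cast hb
    · rw [le_div_iff₀ h2n]; exact Nat.le_ceil _
  have hlow := hsum 0 a (Nat.zero_le _) ha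
  have hup := hsum b (2 ^ n) hb le_rfl
  simp only [Nat.cast_zero, zero_div, sub_zero, Nat.cast_pow, Nat.cast_ofNat, div_self h2n.ne']
    at hlow hup
  have hφlow : a * c ^ n ≤ (G t - G 0) / (G 1 - G 0) := by
    rw [le_div_iff₀ hD]; linarith
  have hφup : (G t - G 0) / (G 1 - G 0) ≤ 1 - (2 ^ n - b) * c ^ n := by
    rw [div_le_iff₀ hD]; linarith
  have h2c : 2 ^ n * c ^ n ≤ 1 := by rw [← mul_pow]; exact pow_le_one₀ (by positivity) hc2
  have hcn : 0 ≤ c ^ n := by positivity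
  rw [mul_pow, abs_sub_le_iff]
  constructor
  · nlinarith [mul_le_mul_of_nonneg_right hb_le hcn, mul_le_mul_of_nonneg_left h2c ht.1]
  · nlinarith [mul_le_mul_of_nonneg_right ha_ge hcn,
      mul_nonneg (sub_nonneg.2 ht.2) (sub_nonneg.2 h2c)]

theorem abs_mul_sub_le_of_mem_Icc_inv {φ k r K E : ℝ} (hK : 0 < K) (hk : |k| ≤ 1) (hφ : |φ - k| ≤ E)
    (hr : r ∈ Icc K⁻¹ K) : |φ * r - k| ≤ E * K + (K - 1) := by
  have hr0 : 0 < r := (inv_pos.2 hK).trans_le hr.1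
  calc |φ * r - k| = |(φ - k) * r + k * (r - 1)| := by ring_nf
    _ ≤ |φ - k| * |r| + |k| * |r - 1| := by rw [← abs_mul, ← abs_mul]; exact abs_add_le _ _
    _ ≤ E * K + 1 * (K - 1) := by
      gcongr
      · exact (abs_nonneg _).trans hφ
      · rw [abs_of_pos hr0]; exact hr.2
      · exact abs_sub_one_le_of_mem_Icc_inv hK hr
    _ = E * K + (K - 1) := by ring

noncomputable def distortionError (n : ℕ) (K : ℝ) : ℝ :=
  (1 - (2 * (1 + K)⁻¹) ^ n + (1 + K)⁻¹ ^ n) * K + (K - 1)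

theorem abs_skewDistortion_sub_le {H : ℝ → ℝ} {x y K k : ℝ} (n : ℕ) (hy : 0 < y) (hK : 1 ≤ K)
    (hH : StrictMonoOn H (Icc (x - y) (x + y))) (hqs : QuasisymmetricOn K H (Icc (x - y) (x + y)))
    (hk : k ∈ Icc 0 1) : |skewDistortion H x y k - k| ≤ distortionError n K := by
  set G := fun t => H (x + t * y)
  have hmaps : MapsTo (fun t => x + t * y) (Icc 0 1) (Icc (x - y) (x + y)) := fun t ht =>
    ⟨by nlinarith [ht.1], by nlinarith [ht.2]⟩
  have hG : StrictMonoOn G (Icc 0 1) :=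
    hH.comp (fun a _ b _ hab => show x + a * y < x + b * y by nlinarith) hmaps
  have hG01 : G 0 < G 1 := hG ⟨le_rfl, zero_le_one⟩ ⟨zero_le_one, le_rfl⟩ zero_lt_one
  have hc : 2 * (1 + K)⁻¹ ≤ 1 := by
    rw [← div_eq_mul_inv, div_le_one (by linarith)]; linarith
  have hdy := dyadic_increment_ge (G := G) (c := (1 + K)⁻¹) (by positivity)
    (fun u h hh hl hu hr => (hqs.comp_affine hy hmaps).inv_one_add_mul_le hG hh hl hu hr)
    n 0 (1 / 2 ^ n) le_rfl (by positivity) (by simp)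
  have h2n : (2 : ℝ) ^ n ≠ 0 := by positivity
  have happrox := abs_div_sub_le_of_dyadic (by positivity) hc hG.monotoneOn hG01
    (fun j hj => by simpa only [zero_add, mul_one_div, mul_one_div_cancel h2n] using hdy j hj) hk
  have hr : distortion H x y ∈ Icc K⁻¹ K :=
    hqs x y hy ⟨le_rfl, by linarith⟩ ⟨by linarith, by linarith⟩ ⟨by linarith, le_rfl⟩
  have hsplit : skewDistortion H x y k = (G k - G 0) / (G 1 - G 0) * distortion H x y := by
    have hD : H (x + y) - H x ≠ 0 := by simpa [G] using (sub_pos.2 hG01).ne'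
    simp only [G, skewDistortion, distortion, zero_mul, add_zero, one_mul]
    rw [div_mul_div_cancel₀ hD]
  rw [hsplit]
  exact abs_mul_sub_le_of_mem_Icc_inv (by linarith) (abs_le.2 ⟨by linarith [hk.1], hk.2⟩) happrox hr

theorem exists_distortionError_lt {ε : ℝ} (hε : 0 < ε) :
    ∃ δ > 0, ∃ n, distortionError n (1 + δ) < ε := by
  obtain ⟨n, hn⟩ := exists_pow_lt_of_lt_one hε (by norm_num : (1 / 2 : ℝ) < 1)
  have hcont : ContinuousAt (fun δ : ℝ => distortionError n (1 + δ)) 0 := by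
    unfold distortionError; fun_prop (disch := norm_num)
  have h0 : distortionError n (1 + 0) < ε := by norm_num [distortionError, hn]
  have hev : ∀ᶠ δ in 𝓝[>] 0, distortionError n (1 + δ) < ε ∧ 0 < δ :=
    ((hcont.eventually (gt_mem_nhds h0)).filter_mono nhdsWithin_le_nhds).and self_mem_nhdsWithin
  obtain ⟨δ, hδε, hδ⟩ := hev.exists
  exact ⟨δ, hδ, n, hδε⟩

/-- For every ε > 0 there exists δ > 0 such that for any strictly
increasing continuous map `H` on `[x-y, x+y]` which is `(1+δ)`-quasisymmetric
there, the skew quasisymmetric distortion functions are within `ε` of `k` for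
all `0 < k ≤ 1`. -/
theorem stmt_1 :
    ∀ ε : ℝ, 0 < ε → ∃ δ : ℝ, 0 < δ ∧
      ∀ (x y : ℝ) (H : ℝ → ℝ), 0 < y →
        StrictMonoOn H (Set.Icc (x - y) (x + y)) →
        ContinuousOn H (Set.Icc (x - y) (x + y)) →
        (∀ u s : ℝ, 0 < s → u - s ∈ Set.Icc (x - y) (x + y) →
          u ∈ Set.Icc (x - y) (x + y) → u + s ∈ Set.Icc (x - y) (x + y) →
          (1 + δ)⁻¹ ≤ (H (u + s) - H u) / (H u - H (u - s)) ∧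
            (H (u + s) - H u) / (H u - H (u - s)) ≤ 1 + δ) →
        ∀ k : ℝ, 0 < k → k ≤ 1 →
          |(H (x + k * y) - H x) / (H x - H (x - y)) - k| ≤ ε ∧
          |(H x - H (x - k * y)) / (H (x + y) - H x) - k| ≤ ε := by
  intro ε hε
  obtain ⟨δ, hδ, n, hn⟩ := exists_distortionError_lt hε
  refine ⟨δ, hδ, fun x y H hy hH _ hqs k hk0 hk1 => ⟨?_, ?_⟩⟩
  · exact (abs_skewDistortion_sub_le n hy (by linarith) hH hqs ⟨hk0.le, hk1⟩).trans hn.le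
  · rw [← skewDistortion_reflect]
    exact (abs_skewDistortion_sub_le n hy (by linarith) hH.reflect
      (QuasisymmetricOn.reflect (by linarith) hqs)
      ⟨hk0.le, hk1⟩).trans hn.le
end

section
/- Let d ≥ 2 be an integer and let F : ℝ → ℝ be an increasing homeomorphism with F(x+1) = F(x) + d for all x and F(0) = 0. Suppose F is continuously differentiable, F′ is α-Hölder continuous for some 0 < α ≤ 1, and there are constants C > 0, λ > 1 with (Fⁿ)′(x) ≥ Cλⁿ for all x ∈ ℝ and n ≥ 1. Then there exists D > 0 such that for all n ≥ 1, all x ∈ ℝ and all 0 < t ≤ 1, (1 + D t^α)⁻¹ ≤ (F⁻ⁿ(x+t) − F⁻ⁿ(x))/(F⁻ⁿ(x) − F⁻ⁿ(x−t)) ≤ 1 + D t^α, and for all t > 1 this ratio lies between (1+D)⁻¹ and 1+D. In particular F is uniformly symmetric. -/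
open Filter

/-- `Finv F n` is the inverse of the `n`-th iterate `F^[n]`. -/
noncomputable def Finv (F : ℝ → ℝ) (n : ℕ) : ℝ → ℝ := Function.invFun (F^[n])

/-- A lifted circle endomorphism `F` is uniformly symmetric if there is a bounded
positive function `ε(t)` with `ε(t) → 0` as `t → 0⁺` controlling the
quasisymmetric distortion of all inverse branches `F⁻ⁿ`. -/
def UnifSymm (F : ℝ → ℝ) : Prop :=
  ∃ ε : ℝ → ℝ, (∀ t : ℝ, 0 < t → 0 < ε t) ∧ (∃ B : ℝ, ∀ t : ℝ, 0 < t → ε t ≤ B) ∧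
    Tendsto ε (nhdsWithin 0 (Set.Ioi 0)) (nhds 0) ∧
    ∀ x t : ℝ, 0 < t → ∀ n : ℕ, 1 ≤ n →
      1 / (1 + ε t) ≤ (Finv F n (x + t) - Finv F n x) / (Finv F n x - Finv F n (x - t)) ∧
      (Finv F n (x + t) - Finv F n x) / (Finv F n x - Finv F n (x - t)) ≤ 1 + ε t

set_option maxHeartbeats 4000000 in
/-- a `C^{1+α}` expanding circle endomorphism is uniformly
symmetric, with symmetry modulus `ε(t) ≤ D t^α` for `0 < t ≤ 1`. -/
theorem stmt_2 (d : ℕ) (hd : 2 ≤ d) (F F' : ℝ → ℝ)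
    (hmono : StrictMono F) (hbij : Function.Bijective F)
    (hdeg : ∀ x : ℝ, F (x + 1) = F x + d) (hF0 : F 0 = 0)
    (hderiv : ∀ x : ℝ, HasDerivAt F (F' x) x) (hcont : Continuous F')
    (α : ℝ) (hα0 : 0 < α) (hα1 : α ≤ 1) (L : ℝ)
    (hHolder : ∀ x y : ℝ, |F' x - F' y| ≤ L * |x - y| ^ α)
    (C lam : ℝ) (hC : 0 < C) (hlam : 1 < lam)
    (hexp : ∀ (n : ℕ) (x : ℝ), 1 ≤ n → C * lam ^ n ≤ deriv (F^[n]) x) :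
    ∃ D : ℝ, 0 < D ∧
      (∀ (n : ℕ), 1 ≤ n → ∀ x : ℝ,
        (∀ t : ℝ, 0 < t → t ≤ 1 →
          (1 + D * t ^ α)⁻¹ ≤
              (Finv F n (x + t) - Finv F n x) / (Finv F n x - Finv F n (x - t)) ∧
            (Finv F n (x + t) - Finv F n x) / (Finv F n x - Finv F n (x - t)) ≤
              1 + D * t ^ α) ∧
        (∀ t : ℝ, 1 < t →
          (1 + D)⁻¹ ≤
              (Finv F n (x + t) - Finv F n x) / (Finv F n x - Finv F n (x - t)) ∧
            (Finv F n (x + t) - Finv F n x) / (Finv F n x - Finv F n (x - t)) ≤ 1 + D)) ∧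
      UnifSymm F := by
  classical
  have hlam0 : (0:ℝ) < lam := lt_trans one_pos hlam
  have hCl : 0 < C * lam := mul_pos hC hlam0
  have hGmono : ∀ n, StrictMono (F^[n]) := fun n => hmono.iterate n
  have hGbij : ∀ n, Function.Bijective (F^[n]) := fun n => hbij.iterate n
  have hgr : ∀ (n : ℕ) (y : ℝ), F^[n] (Finv F n y) = y := fun n y =>
    Function.rightInverse_invFun (hGbij n).surjective y
  have hgl : ∀ (n : ℕ) (x : ℝ), Finv F n (F^[n] x) = x := fun n x =>
    Function.leftInverse_invFun (hGbij n).injective x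
  have hgmono : ∀ n, StrictMono (Finv F n) := by
    intro n a b hab
    rcases lt_trichotomy (Finv F n a) (Finv F n b) with h | h | h
    · exact h
    · exfalso
      have h2 := congrArg (F^[n]) h
      rw [hgr, hgr] at h2
      exact hab.ne h2
    · exfalso
      have h2 := hGmono n h
      rw [hgr, hgr] at h2
      exact absurd h2 (not_lt.mpr hab.le)
  have hP : ∀ (n : ℕ) (x : ℝ),
      HasDerivAt (F^[n]) (∏ k ∈ Finset.range n, F' (F^[k] x)) x := by
    intro n
    induction n with
    | zero => intro x; simpa using (hasDerivAt_id x)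
    | succ n ih =>
      intro x
      have h1 : HasDerivAt (F ∘ F^[n])
          (F' (F^[n] x) * ∏ k ∈ Finset.range n, F' (F^[k] x)) x :=
        (hderiv (F^[n] x)).comp x (ih x)
      have h2 : F^[n+1] = F ∘ F^[n] := Function.iterate_succ' F n
      rw [h2, Finset.prod_range_succ]
      convert h1 using 1
      ring
  have hm : ∀ x, C * lam ≤ F' x := by
    intro x
    have h := hexp 1 x le_rfl
    rw [pow_one] at h
    have h2 : deriv (F^[1]) x = F' x := by
      rw [Function.iterate_one]; exact (hderiv x).deriv
    rwa [h2] at h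
  have hF'pos : ∀ x, 0 < F' x := fun x => lt_of_lt_of_le hCl (hm x)
  have hPpos : ∀ (n : ℕ) (x : ℝ), 0 < ∏ k ∈ Finset.range n, F' (F^[k] x) :=
    fun n x => Finset.prod_pos fun k _ => hF'pos _
  have hL : 0 ≤ L := by
    have h := hHolder 0 1
    have h2 : |(0:ℝ) - 1| ^ α = 1 := by
      rw [show |(0:ℝ) - 1| = 1 by norm_num, Real.one_rpow]
    rw [h2, mul_one] at h
    exact le_trans (abs_nonneg _) h
  have hexpand : ∀ (j : ℕ), 1 ≤ j → ∀ a b : ℝ, a ≤ b →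
      C * lam ^ j * (b - a) ≤ F^[j] b - F^[j] a := by
    intro j hj a b hab
    rcases eq_or_lt_of_le hab with rfl | hab
    · simp
    · obtain ⟨c, hc, hcs⟩ := exists_hasDerivAt_eq_slope (F^[j])
        (fun w => ∏ k ∈ Finset.range j, F' (F^[k] w)) hab
        (fun z _ => (hP j z).continuousAt.continuousWithinAt)
        (fun z _ => hP j z)
      have h1 : C * lam ^ j ≤ (F^[j] b - F^[j] a) / (b - a) := by
        have h2 := hexp j c hj
        rw [(hP j c).deriv] at h2
        rw [hcs] at h2
        exact h2
      calc C * lam ^ j * (b - a) ≤ (F^[j] b - F^[j] a) / (b - a) * (b - a) :=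
            mul_le_mul_of_nonneg_right h1 (by linarith)
        _ = F^[j] b - F^[j] a := div_mul_cancel₀ _ (by linarith [hab] : b - a ≠ 0)
  -- the distortion constant
  set K1 : ℝ := L / (C * lam) * ((1 / C) ^ α * (lam ^ α - 1)⁻¹) with hK1def
  clear_value K1
  have hlamα : 1 < lam ^ α := by
    have := Real.rpow_lt_rpow_of_exponent_lt hlam hα0
    rwa [Real.rpow_zero] at this
  have hK1 : 0 ≤ K1 := by
    rw [hK1def]
    exact mul_nonneg (div_nonneg hL hCl.le)
      (mul_nonneg (Real.rpow_nonneg (by positivity) _) (inv_nonneg.mpr (by linarith)))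
  have hfactor : ∀ a b : ℝ, F' a ≤ F' b * Real.exp (L / (C * lam) * |a - b| ^ α) := by
    intro a b
    have hT : 0 ≤ |a - b| ^ α := Real.rpow_nonneg (abs_nonneg _) _
    have h1 : F' a ≤ F' b + L * |a - b| ^ α := by
      have h := hHolder a b
      have h2 : F' a - F' b ≤ |F' a - F' b| := le_abs_self _
      linarith
    have h2 : L * |a - b| ^ α ≤ F' b * (L / (C * lam) * |a - b| ^ α) := by
      have h3 : F' b * (L / (C * lam) * |a - b| ^ α)
          = (F' b / (C * lam)) * (L * |a - b| ^ α) := by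
        field_simp
      rw [h3]
      have h4 : 1 ≤ F' b / (C * lam) := (one_le_div hCl).mpr (hm b)
      exact le_mul_of_one_le_left (mul_nonneg hL hT) h4
    have h3 : 1 + L / (C * lam) * |a - b| ^ α
        ≤ Real.exp (L / (C * lam) * |a - b| ^ α) := by
      linarith [Real.add_one_le_exp (L / (C * lam) * |a - b| ^ α)]
    calc F' a ≤ F' b + F' b * (L / (C * lam) * |a - b| ^ α) := by linarith
      _ = F' b * (1 + L / (C * lam) * |a - b| ^ α) := by ring
      _ ≤ F' b * Real.exp (L / (C * lam) * |a - b| ^ α) :=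
          mul_le_mul_of_nonneg_left h3 (hF'pos b).le
  have hgeom : ∀ n : ℕ,
      (∑ k ∈ Finset.range n, ((lam ^ α)⁻¹) ^ (n - k)) ≤ (lam ^ α - 1)⁻¹ := by
    intro n
    set r : ℝ := (lam ^ α)⁻¹ with hrdef
    have hr0 : 0 < r := inv_pos.mpr (by linarith)
    have hr1 : r < 1 := by
      rw [hrdef, inv_lt_one_iff₀]; right; exact hlamα
    have hre : ∑ k ∈ Finset.range n, r ^ (n - k) = ∑ k ∈ Finset.range n, r ^ (k + 1) := by
      have := Finset.sum_range_reflect (fun j => r ^ (j + 1)) n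
      rw [← this]
      apply Finset.sum_congr rfl
      intro k hk
      have hk' : k < n := Finset.mem_range.mp hk
      congr 1
      omega
    rw [hre]
    have h1 : ∑ k ∈ Finset.range n, r ^ (k + 1) = r * ∑ k ∈ Finset.range n, r ^ k := by
      rw [Finset.mul_sum]
      apply Finset.sum_congr rfl
      intro k _
      rw [pow_succ]; ring
    have hg : (0:ℝ) < 1 - r := by linarith
    have h2 : ∑ k ∈ Finset.range n, r ^ k ≤ (1 - r)⁻¹ := by
      rw [geom_sum_eq hr1.ne n]
      have hrn : 0 ≤ r ^ n := pow_nonneg hr0.le n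
      have he : (r ^ n - 1) / (r - 1) = (1 - r ^ n) / (1 - r) := by
        rw [div_eq_div_iff (by linarith) (by linarith)]; ring
      rw [he, div_le_iff₀ hg, inv_mul_cancel₀ hg.ne']
      linarith
    have h3 : r * (1 - r)⁻¹ = (lam ^ α - 1)⁻¹ := by
      have hx : (0:ℝ) < lam ^ α := Real.rpow_pos_of_pos hlam0 α
      rw [hrdef]
      rw [show 1 - (lam ^ α)⁻¹ = (lam ^ α - 1) / (lam ^ α) by field_simp]
      rw [inv_div]
      field_simp
    rw [h1]
    calc r * ∑ k ∈ Finset.range n, r ^ k ≤ r * (1 - r)⁻¹ :=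
          mul_le_mul_of_nonneg_left h2 hr0.le
      _ = (lam ^ α - 1)⁻¹ := h3
  have hdist : ∀ (n : ℕ) (a b u v : ℝ), a ≤ u → u ≤ b → a ≤ v → v ≤ b →
      (∏ k ∈ Finset.range n, F' (F^[k] u)) ≤
        Real.exp (K1 * (F^[n] b - F^[n] a) ^ α) *
          ∏ k ∈ Finset.range n, F' (F^[k] v) := by
    intro n a b u v hau hub hav hvb
    have hab : a ≤ b := le_trans hau hub
    have hs0 : 0 ≤ F^[n] b - F^[n] a := sub_nonneg.mpr ((hGmono n).monotone hab)
    set s : ℝ := F^[n] b - F^[n] a with hsdef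
    have hstep : ∀ k, k < n → |F^[k] u - F^[k] v| ≤ s / (C * lam ^ (n - k)) := by
      intro k hk
      have hj : 1 ≤ n - k := by omega
      have hpos : 0 < C * lam ^ (n - k) := mul_pos hC (pow_pos hlam0 _)
      have hab' : F^[k] a ≤ F^[k] b := (hGmono k).monotone hab
      have h1 : C * lam ^ (n - k) * (F^[k] b - F^[k] a) ≤ s := by
        have h2 := hexpand (n - k) hj (F^[k] a) (F^[k] b) hab'
        rw [← Function.iterate_add_apply, ← Function.iterate_add_apply,
          Nat.sub_add_cancel hk.le] at h2
        exact h2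
      have h2 : |F^[k] u - F^[k] v| ≤ F^[k] b - F^[k] a := by
        have h3 := (hGmono k).monotone hau
        have h4 := (hGmono k).monotone hub
        have h5 := (hGmono k).monotone hav
        have h6 := (hGmono k).monotone hvb
        rw [abs_sub_le_iff]
        constructor <;> linarith
      rw [le_div_iff₀ hpos]
      calc |F^[k] u - F^[k] v| * (C * lam ^ (n - k))
          ≤ (F^[k] b - F^[k] a) * (C * lam ^ (n - k)) :=
            mul_le_mul_of_nonneg_right h2 hpos.le
        _ = C * lam ^ (n - k) * (F^[k] b - F^[k] a) := by ring
        _ ≤ s := h1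
    have h4 : (∏ k ∈ Finset.range n, F' (F^[k] u)) ≤
        ∏ k ∈ Finset.range n,
          (F' (F^[k] v) * Real.exp (L / (C * lam) * |F^[k] u - F^[k] v| ^ α)) :=
      Finset.prod_le_prod (fun k _ => (hF'pos _).le) (fun k _ => hfactor _ _)
    have h5 : (∏ k ∈ Finset.range n,
          (F' (F^[k] v) * Real.exp (L / (C * lam) * |F^[k] u - F^[k] v| ^ α)))
        = (∏ k ∈ Finset.range n, F' (F^[k] v)) *
            Real.exp (∑ k ∈ Finset.range n, L / (C * lam) * |F^[k] u - F^[k] v| ^ α) := by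
      rw [Finset.prod_mul_distrib, Real.exp_sum]
    have hrw : ∀ j : ℕ, (s / (C * lam ^ j)) ^ α
        = s ^ α * (1 / C) ^ α * ((lam ^ α)⁻¹) ^ j := by
      intro j
      have hljpos : (0:ℝ) < lam ^ j := pow_pos hlam0 j
      have he1 : s / (C * lam ^ j) = s * (1 / C) * (lam ^ j)⁻¹ := by
        field_simp
      rw [he1, Real.mul_rpow (by positivity) (by positivity),
        Real.mul_rpow hs0 (by positivity), Real.inv_rpow hljpos.le]
      congr 1
      rw [inv_pow]
      congr 1
      rw [← Real.rpow_natCast lam j, ← Real.rpow_mul hlam0.le, mul_comm (j:ℝ) α,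
        Real.rpow_mul hlam0.le, Real.rpow_natCast]
    have h6 : (∑ k ∈ Finset.range n, L / (C * lam) * |F^[k] u - F^[k] v| ^ α)
        ≤ K1 * s ^ α := by
      have hterm : ∀ k ∈ Finset.range n,
          L / (C * lam) * |F^[k] u - F^[k] v| ^ α
            ≤ (L / (C * lam) * (s ^ α * (1 / C) ^ α)) * ((lam ^ α)⁻¹) ^ (n - k) := by
        intro k hk
        have hk' : k < n := Finset.mem_range.mp hk
        have h7 : |F^[k] u - F^[k] v| ^ α ≤ (s / (C * lam ^ (n - k))) ^ α :=
          Real.rpow_le_rpow (abs_nonneg _) (hstep k hk') hα0.le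
        rw [hrw (n - k)] at h7
        calc L / (C * lam) * |F^[k] u - F^[k] v| ^ α
            ≤ L / (C * lam) * (s ^ α * (1 / C) ^ α * ((lam ^ α)⁻¹) ^ (n - k)) :=
              mul_le_mul_of_nonneg_left h7 (div_nonneg hL hCl.le)
          _ = (L / (C * lam) * (s ^ α * (1 / C) ^ α)) * ((lam ^ α)⁻¹) ^ (n - k) := by
              ring
      have hc0 : 0 ≤ L / (C * lam) * (s ^ α * (1 / C) ^ α) := by
        apply mul_nonneg (div_nonneg hL hCl.le)
        exact mul_nonneg (Real.rpow_nonneg hs0 _) (Real.rpow_nonneg (by positivity) _)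
      calc (∑ k ∈ Finset.range n, L / (C * lam) * |F^[k] u - F^[k] v| ^ α)
          ≤ ∑ k ∈ Finset.range n,
              (L / (C * lam) * (s ^ α * (1 / C) ^ α)) * ((lam ^ α)⁻¹) ^ (n - k) :=
            Finset.sum_le_sum hterm
        _ = (L / (C * lam) * (s ^ α * (1 / C) ^ α)) *
              ∑ k ∈ Finset.range n, ((lam ^ α)⁻¹) ^ (n - k) := by
            rw [← Finset.mul_sum]
        _ ≤ (L / (C * lam) * (s ^ α * (1 / C) ^ α)) * (lam ^ α - 1)⁻¹ :=
            mul_le_mul_of_nonneg_left (hgeom n) hc0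
        _ = K1 * s ^ α := by rw [hK1def]; ring
    calc (∏ k ∈ Finset.range n, F' (F^[k] u))
        ≤ (∏ k ∈ Finset.range n, F' (F^[k] v)) *
            Real.exp (∑ k ∈ Finset.range n, L / (C * lam) * |F^[k] u - F^[k] v| ^ α) := by
          rw [← h5]; exact h4
      _ ≤ (∏ k ∈ Finset.range n, F' (F^[k] v)) * Real.exp (K1 * s ^ α) :=
          mul_le_mul_of_nonneg_left (Real.exp_le_exp.mpr h6) (hPpos n v).le
      _ = Real.exp (K1 * s ^ α) * ∏ k ∈ Finset.range n, F' (F^[k] v) := by ring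
  have hmvt : ∀ (n : ℕ) (x y : ℝ), x < y → ∃ u, Finv F n x ≤ u ∧ u ≤ Finv F n y ∧
      y - x = (∏ k ∈ Finset.range n, F' (F^[k] u)) * (Finv F n y - Finv F n x) := by
    intro n x y hxy
    have hab : Finv F n x < Finv F n y := hgmono n hxy
    obtain ⟨c, hc, hcs⟩ := exists_hasDerivAt_eq_slope (F^[n])
      (fun w => ∏ k ∈ Finset.range n, F' (F^[k] w)) hab
      (fun z _ => (hP n z).continuousAt.continuousWithinAt)
      (fun z _ => hP n z)
    refine ⟨c, hc.1.le, hc.2.le, ?_⟩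
    rw [hgr, hgr] at hcs
    rw [hcs, div_mul_cancel₀]
    exact sub_ne_zero.mpr hab.ne'
  have hkey : ∀ (n : ℕ) (w s₁ s₂ : ℝ), 0 < s₁ → 0 < s₂ →
      (Finv F n (w + s₁) - Finv F n w) * s₂ ≤
        Real.exp (K1 * (s₁ + s₂) ^ α) * (s₁ * (Finv F n w - Finv F n (w - s₂))) ∧
      (Finv F n w - Finv F n (w - s₂)) * s₁ ≤
        Real.exp (K1 * (s₁ + s₂) ^ α) * (s₂ * (Finv F n (w + s₁) - Finv F n w)) := by
    intro n w s₁ s₂ h1 h2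
    obtain ⟨u, hu1, hu2, hu3⟩ := hmvt n w (w + s₁) (by linarith)
    obtain ⟨v, hv1, hv2, hv3⟩ := hmvt n (w - s₂) w (by linarith)
    have hgg : Finv F n (w - s₂) ≤ Finv F n w :=
      ((hgmono n).monotone (by linarith))
    have hdu := hdist n (Finv F n (w - s₂)) (Finv F n (w + s₁)) u v
      (le_trans hgg hu1) hu2 hv1 (le_trans hv2 ((hgmono n).monotone (by linarith)))
    have hdv := hdist n (Finv F n (w - s₂)) (Finv F n (w + s₁)) v u
      hv1 (le_trans hv2 ((hgmono n).monotone (by linarith)))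
      (le_trans hgg hu1) hu2
    rw [hgr, hgr] at hdu hdv
    have hss : w + s₁ - (w - s₂) = s₁ + s₂ := by ring
    rw [hss] at hdu hdv
    set E := Real.exp (K1 * (s₁ + s₂) ^ α) with hEdef
    set Pu := ∏ k ∈ Finset.range n, F' (F^[k] u) with hPu
    set Pv := ∏ k ∈ Finset.range n, F' (F^[k] v) with hPv
    set A := Finv F n (w + s₁) - Finv F n w with hA
    set B := Finv F n w - Finv F n (w - s₂) with hB
    have hApos : 0 < A := sub_pos.mpr (hgmono n (by linarith))
    have hBpos : 0 < B := sub_pos.mpr (hgmono n (by linarith))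
    have hu3' : s₁ = Pu * A := by rw [hPu, hA]; convert hu3 using 2; ring
    have hv3' : s₂ = Pv * B := by rw [hPv, hB]; convert hv3 using 2; ring
    constructor
    · have e1 : Pv * (A * B) ≤ (E * Pu) * (A * B) :=
        mul_le_mul_of_nonneg_right hdv (by positivity)
      calc A * s₂ = A * (Pv * B) := by rw [← hv3']
        _ = Pv * (A * B) := by ring
        _ ≤ (E * Pu) * (A * B) := e1
        _ = E * ((Pu * A) * B) := by ring
        _ = E * (s₁ * B) := by rw [← hu3']
    · have e1 : Pu * (A * B) ≤ (E * Pv) * (A * B) :=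
        mul_le_mul_of_nonneg_right hdu (by positivity)
      calc B * s₁ = B * (Pu * A) := by rw [← hu3']
        _ = Pu * (A * B) := by ring
        _ ≤ (E * Pv) * (A * B) := e1
        _ = E * ((Pv * B) * A) := by ring
        _ = E * (s₂ * A) := by rw [← hv3']
  -- periodicity facts
  have hdegk : ∀ (k : ℕ) (y : ℝ), F (y + (k : ℝ)) = F y + (d : ℝ) * k := by
    intro k
    induction k with
    | zero => intro y; simp
    | succ k ih =>
      intro y
      have h1 : (y + ((k + 1 : ℕ) : ℝ)) = (y + k) + 1 := by push_cast; ring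
      rw [h1, hdeg, ih]
      push_cast; ring
  have hperk : ∀ (n k : ℕ) (z : ℝ), F^[n] (z + (k : ℝ)) = F^[n] z + (k : ℝ) * (d : ℝ) ^ n := by
    intro n
    induction n with
    | zero => intro k z; simp
    | succ n ih =>
      intro k z
      rw [Function.iterate_succ_apply', Function.iterate_succ_apply', ih]
      have h1 : F^[n] z + (k : ℝ) * (d : ℝ) ^ n = F^[n] z + ((k * d ^ n : ℕ) : ℝ) := by
        push_cast; ring
      rw [h1, hdegk]
      push_cast; ring
  have hgper : ∀ (n k : ℕ) (y : ℝ),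
      Finv F n (y + (k : ℝ) * (d : ℝ) ^ n) = Finv F n y + (k : ℝ) := by
    intro n k y
    have h1 : F^[n] (Finv F n y + (k : ℝ)) = y + (k : ℝ) * (d : ℝ) ^ n := by
      rw [hperk, hgr]
    calc Finv F n (y + (k : ℝ) * (d : ℝ) ^ n)
        = Finv F n (F^[n] (Finv F n y + (k : ℝ))) := by rw [h1]
      _ = Finv F n y + (k : ℝ) := hgl n _
  have hd0 : (0:ℝ) < (d:ℝ) := by
    have : (2:ℝ) ≤ (d:ℝ) := by exact_mod_cast hd
    linarith
  have hdpow : ∀ n : ℕ, (0:ℝ) < (d:ℝ) ^ n := fun n => pow_pos hd0 n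
  have hfloor_up : ∀ (n : ℕ) (y s : ℝ), 0 ≤ s →
      Finv F n (y + s) - Finv F n y ≤ s / (d : ℝ) ^ n + 1 := by
    intro n y s hs
    set k := ⌈s / (d : ℝ) ^ n⌉₊ with hkdef
    have hk1 : s ≤ (k : ℝ) * (d : ℝ) ^ n := by
      rw [← div_le_iff₀ (hdpow n)]
      exact Nat.le_ceil _
    have hk2 : (k : ℝ) < s / (d : ℝ) ^ n + 1 := Nat.ceil_lt_add_one (by positivity)
    have h3 := (hgmono n).monotone (show y + s ≤ y + (k : ℝ) * (d : ℝ) ^ n by linarith)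
    rw [hgper n k y] at h3
    linarith
  have hfloor_low : ∀ (n k : ℕ) (y s : ℝ), (k : ℝ) * (d : ℝ) ^ n ≤ s →
      (k : ℝ) ≤ Finv F n (y + s) - Finv F n y := by
    intro n k y s hks
    have h3 := (hgmono n).monotone (show y + (k : ℝ) * (d : ℝ) ^ n ≤ y + s by linarith)
    rw [hgper n k y] at h3
    linarith
  -- the constants
  set E1 : ℝ := K1 * 2 ^ α with hE1def
  clear_value E1
  have hE1nn : 0 ≤ E1 := by
    rw [hE1def]
    exact mul_nonneg hK1 (Real.rpow_nonneg (by norm_num) _)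
  set D1 : ℝ := E1 * Real.exp E1 with hD1def
  clear_value D1
  have hD1nn : 0 ≤ D1 := by
    rw [hD1def]; exact mul_nonneg hE1nn (Real.exp_pos _).le
  set D2 : ℝ := ((d : ℝ) + 1) * Real.exp (K1 * (2 * ((d : ℝ) + 1))) with hD2def
  clear_value D2
  have hD2pos : 0 < D2 := by
    rw [hD2def]; exact mul_pos (by linarith) (Real.exp_pos _)
  set D : ℝ := D1 + D2 + 3 with hDdef
  clear_value D
  have hDpos : 0 < D := by rw [hDdef]; linarith
  have hD3 : 3 ≤ D := by rw [hDdef]; linarith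
  have hD2leD : D2 ≤ 1 + D := by rw [hDdef]; linarith
  -- ratio helper
  have hratio : ∀ A B c : ℝ, 0 < A → 0 < B → 0 < c → A ≤ c * B → B ≤ c * A →
      c⁻¹ ≤ A / B ∧ A / B ≤ c := by
    intro A B c hA hB hc h1 h2
    constructor
    · rw [le_div_iff₀ hB]
      have h3 : c⁻¹ * B ≤ c⁻¹ * (c * A) :=
        mul_le_mul_of_nonneg_left h2 (inv_nonneg.mpr hc.le)
      rw [inv_mul_cancel_left₀ hc.ne'] at h3
      linarith
    · rw [div_le_iff₀ hB]
      linarith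
  -- small scale: t ≤ 1
  have main1 : ∀ (n : ℕ) (x t : ℝ), 0 < t → t ≤ 1 →
      (Finv F n (x + t) - Finv F n x) ≤ (1 + D1 * t ^ α) * (Finv F n x - Finv F n (x - t)) ∧
      (Finv F n x - Finv F n (x - t)) ≤ (1 + D1 * t ^ α) * (Finv F n (x + t) - Finv F n x) := by
    intro n x t ht ht1
    obtain ⟨k1, k2⟩ := hkey n x t t ht ht
    have htα : 0 < t ^ α := Real.rpow_pos_of_pos ht _
    have hEt : K1 * (t + t) ^ α = E1 * t ^ α := by
      rw [show t + t = 2 * t by ring, Real.mul_rpow (by norm_num) ht.le, hE1def]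
      ring
    rw [hEt] at k1 k2
    set q : ℝ := E1 * t ^ α with hqdef
    clear_value q
    have hq0 : 0 ≤ q := by rw [hqdef]; exact mul_nonneg hE1nn htα.le
    have htα1 : t ^ α ≤ 1 := Real.rpow_le_one ht.le ht1 hα0.le
    have hqE : q ≤ E1 := by
      calc q = E1 * t ^ α := hqdef
        _ ≤ E1 * 1 := mul_le_mul_of_nonneg_left htα1 hE1nn
        _ = E1 := by ring
    have hexp_le : Real.exp q ≤ 1 + D1 * t ^ α := by
      have t1 : Real.exp q - q * Real.exp q ≤ 1 := by
        have ha := Real.add_one_le_exp (-q)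
        have hb : Real.exp (-q) * Real.exp q = 1 := by
          rw [← Real.exp_add]; simp
        nlinarith [Real.exp_pos q]
      have t2 : q * Real.exp q ≤ q * Real.exp E1 :=
        mul_le_mul_of_nonneg_left (Real.exp_le_exp.mpr hqE) hq0
      have t3 : q * Real.exp E1 = D1 * t ^ α := by
        rw [hqdef, hD1def]; ring
      linarith
    have hA : 0 < Finv F n (x + t) - Finv F n x := sub_pos.mpr (hgmono n (by linarith))
    have hB : 0 < Finv F n x - Finv F n (x - t) := sub_pos.mpr (hgmono n (by linarith))
    have hc1 : 0 < 1 + D1 * t ^ α := by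
      have := mul_nonneg hD1nn htα.le
      linarith
    constructor
    · have h1 : (Finv F n (x + t) - Finv F n x) * t ≤
          ((1 + D1 * t ^ α) * (Finv F n x - Finv F n (x - t))) * t := by
        calc (Finv F n (x + t) - Finv F n x) * t
            ≤ Real.exp q * (t * (Finv F n x - Finv F n (x - t))) := k1
          _ ≤ (1 + D1 * t ^ α) * (t * (Finv F n x - Finv F n (x - t))) :=
              mul_le_mul_of_nonneg_right hexp_le (by positivity)
          _ = ((1 + D1 * t ^ α) * (Finv F n x - Finv F n (x - t))) * t := by ring
      exact le_of_mul_le_mul_right h1 ht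
    · have h1 : (Finv F n x - Finv F n (x - t)) * t ≤
          ((1 + D1 * t ^ α) * (Finv F n (x + t) - Finv F n x)) * t := by
        calc (Finv F n x - Finv F n (x - t)) * t
            ≤ Real.exp q * (t * (Finv F n (x + t) - Finv F n x)) := k2
          _ ≤ (1 + D1 * t ^ α) * (t * (Finv F n (x + t) - Finv F n x)) :=
              mul_le_mul_of_nonneg_right hexp_le (by positivity)
          _ = ((1 + D1 * t ^ α) * (Finv F n (x + t) - Finv F n x)) * t := by ring
      exact le_of_mul_le_mul_right h1 ht
  -- large scale: t > 1
  have main2 : ∀ (n : ℕ), 1 ≤ n → ∀ (x t : ℝ), 1 < t →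
      (Finv F n (x + t) - Finv F n x) ≤ (1 + D) * (Finv F n x - Finv F n (x - t)) ∧
      (Finv F n x - Finv F n (x - t)) ≤ (1 + D) * (Finv F n (x + t) - Finv F n x) := by
    intro n hn x t ht
    have hA : 0 < Finv F n (x + t) - Finv F n x := sub_pos.mpr (hgmono n (by linarith))
    have hB : 0 < Finv F n x - Finv F n (x - t) := sub_pos.mpr (hgmono n (by linarith))
    have hxt : x - t + t = x := by ring
    by_cases hcase : (d : ℝ) ^ n ≤ t
    · -- extremely large t
      set k := ⌊t / (d : ℝ) ^ n⌋₊ with hkdef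
      have hP0 := hdpow n
      have htP1 : (1:ℝ) ≤ t / (d : ℝ) ^ n := (one_le_div hP0).mpr hcase
      have hk1 : (1:ℕ) ≤ k := Nat.le_floor (by rw [Nat.cast_one]; exact htP1)
      have hk1' : (1:ℝ) ≤ (k : ℝ) := by exact_mod_cast hk1
      have hkt : (k : ℝ) * (d : ℝ) ^ n ≤ t :=
        (le_div_iff₀ hP0).mp (Nat.floor_le (by positivity))
      have hub : t / (d : ℝ) ^ n < (k : ℝ) + 1 := Nat.lt_floor_add_one _
      clear_value k
      have hA1 : (k : ℝ) ≤ Finv F n (x + t) - Finv F n x := hfloor_low n k x t hkt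
      have hA2 : Finv F n (x + t) - Finv F n x ≤ t / (d : ℝ) ^ n + 1 :=
        hfloor_up n x t (by linarith)
      have hB1 : (k : ℝ) ≤ Finv F n x - Finv F n (x - t) := by
        have h5 := hfloor_low n k (x - t) t hkt
        rwa [hxt] at h5
      have hB2 : Finv F n x - Finv F n (x - t) ≤ t / (d : ℝ) ^ n + 1 := by
        have h5 := hfloor_up n (x - t) t (by linarith)
        rwa [hxt] at h5
      constructor
      · have h6 : Finv F n (x + t) - Finv F n x
            ≤ 3 * (Finv F n x - Finv F n (x - t)) := by linarith
        have h7 : 3 * (Finv F n x - Finv F n (x - t))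
            ≤ (1 + D) * (Finv F n x - Finv F n (x - t)) :=
          mul_le_mul_of_nonneg_right (by linarith) hB.le
        linarith
      · have h6 : Finv F n x - Finv F n (x - t)
            ≤ 3 * (Finv F n (x + t) - Finv F n x) := by linarith
        have h7 : 3 * (Finv F n (x + t) - Finv F n x)
            ≤ (1 + D) * (Finv F n (x + t) - Finv F n x) :=
          mul_le_mul_of_nonneg_right (by linarith) hA.le
        linarith
    · push_neg at hcase
      have hex : ∃ m : ℕ, t < (d : ℝ) ^ (m + 1) :=
        ⟨n - 1, by rwa [Nat.sub_add_cancel hn]⟩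
      set m := Nat.find hex with hmdef
      have h1 : t < (d : ℝ) ^ (m + 1) := Nat.find_spec hex
      have h2 : (d : ℝ) ^ m ≤ t := by
        rcases Nat.eq_zero_or_pos m with h | h
        · rw [h, pow_zero]; linarith
        · have h5 := Nat.find_min hex (show m - 1 < m by omega)
          rw [Nat.sub_add_cancel h] at h5
          exact not_lt.mp h5
      have h3 : m + 1 ≤ n := by
        have h5 : m ≤ n - 1 := Nat.find_min' hex (by rwa [Nat.sub_add_cancel hn])
        omega
      clear_value m
      set p := n - m with hpdef
      have hmp : m + p = n := by omega
      clear_value p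
      have hd2 : (2:ℝ) ≤ (d : ℝ) := by exact_mod_cast hd
      have htp1 : (1:ℝ) ≤ Finv F m (x + t) - Finv F m x := by
        have h5 := hfloor_low m 1 x t (by rw [Nat.cast_one, one_mul]; exact h2)
        rwa [Nat.cast_one] at h5
      have htdm : t / (d : ℝ) ^ m < (d : ℝ) := by
        rw [div_lt_iff₀ (hdpow m)]
        calc t < (d : ℝ) ^ (m + 1) := h1
          _ = (d : ℝ) * (d : ℝ) ^ m := by rw [pow_succ]; ring
      have htp2 : Finv F m (x + t) - Finv F m x ≤ (d : ℝ) + 1 := by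
        have h5 := hfloor_up m x t (by linarith)
        linarith
      have htm1 : (1:ℝ) ≤ Finv F m x - Finv F m (x - t) := by
        have h5 := hfloor_low m 1 (x - t) t (by rw [Nat.cast_one, one_mul]; exact h2)
        rw [hxt] at h5
        rwa [Nat.cast_one] at h5
      have htm2 : Finv F m x - Finv F m (x - t) ≤ (d : ℝ) + 1 := by
        have h5 := hfloor_up m (x - t) t (by linarith)
        rw [hxt] at h5
        linarith
      have hcomp : ∀ z, Finv F n z = Finv F p (Finv F m z) := by
        intro z
        have h4 : F^[n] (Finv F p (Finv F m z)) = z := by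
          rw [← hmp, Function.iterate_add_apply, hgr, hgr]
        calc Finv F n z = Finv F n (F^[n] (Finv F p (Finv F m z))) := by rw [h4]
          _ = Finv F p (Finv F m z) := hgl n _
      set y := Finv F m x with hydef
      set tp := Finv F m (x + t) - y with htpdef
      set tm := y - Finv F m (x - t) with htmdef
      have hytp : y + tp = Finv F m (x + t) := by rw [htpdef]; ring
      have hytm : y - tm = Finv F m (x - t) := by rw [htmdef]; ring
      have hApeq : Finv F n (x + t) - Finv F n x
          = Finv F p (Finv F m (x + t)) - Finv F p y := by
        rw [hcomp (x + t), hcomp x, ← hydef]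
      have hBpeq : Finv F n x - Finv F n (x - t)
          = Finv F p y - Finv F p (Finv F m (x - t)) := by
        rw [hcomp x, hcomp (x - t), ← hydef]
      obtain ⟨k1, k2⟩ := hkey p y tp tm (by linarith) (by linarith)
      rw [hytp, hytm] at k1 k2
      set A' := Finv F p (Finv F m (x + t)) - Finv F p y with hA'def
      set B' := Finv F p y - Finv F p (Finv F m (x - t)) with hB'def
      clear_value A' B' y tp tm
      have hA'pos : 0 < A' := by rw [← hApeq]; exact hA
      have hB'pos : 0 < B' := by rw [← hBpeq]; exact hB
      have hEb : Real.exp (K1 * (tp + tm) ^ α) ≤ Real.exp (K1 * (2 * ((d : ℝ) + 1))) := by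
        apply Real.exp_le_exp.mpr
        apply mul_le_mul_of_nonneg_left ?_ hK1
        calc (tp + tm) ^ α ≤ (2 * ((d : ℝ) + 1)) ^ α :=
              Real.rpow_le_rpow (by linarith) (by linarith) hα0.le
          _ ≤ 2 * ((d : ℝ) + 1) := by
              have h9 : (1:ℝ) ≤ 2 * ((d : ℝ) + 1) := by linarith
              calc (2 * ((d : ℝ) + 1)) ^ α ≤ (2 * ((d : ℝ) + 1)) ^ (1:ℝ) :=
                    Real.rpow_le_rpow_of_exponent_le h9 hα1
                _ = 2 * ((d : ℝ) + 1) := Real.rpow_one _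
      have hc : A' ≤ D2 * B' := by
        have c1 : A' ≤ A' * tm := le_mul_of_one_le_right hA'pos.le htm1
        have c2 : Real.exp (K1 * (tp + tm) ^ α) * (tp * B')
            ≤ Real.exp (K1 * (2 * ((d : ℝ) + 1))) * (((d : ℝ) + 1) * B') :=
          mul_le_mul hEb (mul_le_mul_of_nonneg_right htp2 hB'pos.le)
            (mul_nonneg (by linarith) hB'pos.le) (Real.exp_pos _).le
        have c3 : Real.exp (K1 * (2 * ((d : ℝ) + 1))) * (((d : ℝ) + 1) * B') = D2 * B' := by
          rw [hD2def]; ring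
        linarith
      have hc' : B' ≤ D2 * A' := by
        have c1 : B' ≤ B' * tp := le_mul_of_one_le_right hB'pos.le htp1
        have c2 : Real.exp (K1 * (tp + tm) ^ α) * (tm * A')
            ≤ Real.exp (K1 * (2 * ((d : ℝ) + 1))) * (((d : ℝ) + 1) * A') :=
          mul_le_mul hEb (mul_le_mul_of_nonneg_right htm2 hA'pos.le)
            (mul_nonneg (by linarith) hA'pos.le) (Real.exp_pos _).le
        have c3 : Real.exp (K1 * (2 * ((d : ℝ) + 1))) * (((d : ℝ) + 1) * A') = D2 * A' := by
          rw [hD2def]; ring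
        linarith
      constructor
      · rw [hApeq, hBpeq]
        have h7 : D2 * B' ≤ (1 + D) * B' :=
          mul_le_mul_of_nonneg_right hD2leD hB'pos.le
        linarith
      · rw [hBpeq, hApeq]
        have h7 : D2 * A' ≤ (1 + D) * A' :=
          mul_le_mul_of_nonneg_right hD2leD hA'pos.le
        linarith
  -- final packaging
  have hmain : ∀ (n : ℕ), 1 ≤ n → ∀ x : ℝ,
      (∀ t : ℝ, 0 < t → t ≤ 1 →
        (1 + D * t ^ α)⁻¹ ≤
            (Finv F n (x + t) - Finv F n x) / (Finv F n x - Finv F n (x - t)) ∧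
          (Finv F n (x + t) - Finv F n x) / (Finv F n x - Finv F n (x - t)) ≤
            1 + D * t ^ α) ∧
      (∀ t : ℝ, 1 < t →
        (1 + D)⁻¹ ≤
            (Finv F n (x + t) - Finv F n x) / (Finv F n x - Finv F n (x - t)) ∧
          (Finv F n (x + t) - Finv F n x) / (Finv F n x - Finv F n (x - t)) ≤ 1 + D) := by
    intro n hn x
    constructor
    · intro t ht ht1
      obtain ⟨m1, m2⟩ := main1 n x t ht ht1
      have hA : 0 < Finv F n (x + t) - Finv F n x := sub_pos.mpr (hgmono n (by linarith))
      have hB : 0 < Finv F n x - Finv F n (x - t) := sub_pos.mpr (hgmono n (by linarith))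
      have htα : 0 < t ^ α := Real.rpow_pos_of_pos ht _
      have hD1D : 1 + D1 * t ^ α ≤ 1 + D * t ^ α := by
        have h8 : D1 * t ^ α ≤ D * t ^ α :=
          mul_le_mul_of_nonneg_right (by rw [hDdef]; linarith) htα.le
        linarith
      have hc1 : 0 < 1 + D1 * t ^ α := by
        have h8 := mul_nonneg hD1nn htα.le
        linarith
      obtain ⟨r1, r2⟩ := hratio _ _ _ hA hB hc1 m1 m2
      constructor
      · refine le_trans ?_ r1
        exact inv_anti₀ hc1 hD1D
      · linarith
    · intro t ht
      obtain ⟨m1, m2⟩ := main2 n hn x t ht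
      have hA : 0 < Finv F n (x + t) - Finv F n x := sub_pos.mpr (hgmono n (by linarith))
      have hB : 0 < Finv F n x - Finv F n (x - t) := sub_pos.mpr (hgmono n (by linarith))
      exact hratio _ _ _ hA hB (by linarith) m1 m2
  refine ⟨D, hDpos, fun n hn x => hmain n hn x, ?_⟩
  refine ⟨fun t => D * (min t 1) ^ α, ?_, ⟨D, ?_⟩, ?_, ?_⟩
  · intro t ht
    exact mul_pos hDpos (Real.rpow_pos_of_pos (lt_min ht one_pos) _)
  · intro t ht
    have h0 : (0:ℝ) < min t 1 := lt_min ht one_pos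
    have h1 : (min t 1) ^ α ≤ 1 := Real.rpow_le_one h0.le (min_le_right t 1) hα0.le
    have h2 : D * (min t 1) ^ α ≤ D * 1 := mul_le_mul_of_nonneg_left h1 hDpos.le
    simpa using h2
  · have hcontat : ContinuousAt (fun t : ℝ => D * (min t 1) ^ α) 0 := by
      apply ContinuousAt.mul continuousAt_const
      have h1 : ContinuousAt (fun t : ℝ => min t 1) 0 :=
        (continuous_id.min continuous_const).continuousAt
      exact h1.rpow_const (Or.inr hα0.le)
    have h3 : Tendsto (fun t : ℝ => D * (min t 1) ^ α) (nhdsWithin 0 (Set.Ioi 0))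
        (nhds (D * (min (0:ℝ) 1) ^ α)) :=
      hcontat.tendsto.mono_left nhdsWithin_le_nhds
    have h4 : D * (min (0:ℝ) 1) ^ α = 0 := by
      rw [min_eq_left zero_le_one, Real.zero_rpow hα0.ne', mul_zero]
    rwa [h4] at h3
  · intro x t ht n hn
    simp only [one_div]
    rcases le_or_gt t 1 with h | h
    · rw [min_eq_left h]
      exact (hmain n hn x).1 t ht h
    · rw [min_eq_right h.le, Real.one_rpow, mul_one]
      exact (hmain n hn x).2 t h
end

section
/- Let d ≥ 2 and let F : ℝ → ℝ be an increasing homeomorphism with F(x+1) = F(x) + d for all x and F(0) = 0. Suppose F is continuously differentiable, there are constants C > 0, λ > 1 with (Fⁿ)′(x) ≥ Cλⁿ for all x ∈ ℝ and n ≥ 1, and the modulus of continuity ω(t) = sup{|F′(x) − F′(y)| : |x−y| ≤ t} satisfies the Dini condition ∫₀¹ ω(t)/t dt < ∞. Then F is uniformly symmetric: there is M ≥ 1 such that (F⁻ⁿ(x+t) − F⁻ⁿ(x))/(F⁻ⁿ(x) − F⁻ⁿ(x−t)) ∈ [M⁻¹, M] for all x ∈ ℝ, t > 0, n ≥ 1,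 and for every η > 0 there is δ > 0 such that this ratio lies in [(1+η)⁻¹, 1+η] for all x ∈ ℝ, all 0 < t ≤ δ and all n ≥ 1. -/
open MeasureTheory Set

/-- The modulus of continuity `ω(t) = sup {|F' x - F' y| : |x - y| ≤ t}`. -/
noncomputable def modCont (F' : ℝ → ℝ) (t : ℝ) : ℝ :=
  sSup {a : ℝ | ∃ x y : ℝ, |x - y| ≤ t ∧ a = |F' x - F' y|}

section ModulusOfContinuity

variable {F' : ℝ → ℝ} {B : ℝ}

lemma modCont_nonneg (F' : ℝ → ℝ) (t : ℝ) : 0 ≤ modCont F' t :=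
  Real.sSup_nonneg <| by rintro a ⟨x, y, -, rfl⟩; exact abs_nonneg _

lemma bddAbove_modCont_set (hB : ∀ x, |F' x| ≤ B) (t : ℝ) :
    BddAbove {a : ℝ | ∃ x y : ℝ, |x - y| ≤ t ∧ a = |F' x - F' y|} :=
  ⟨B + B, by
    rintro a ⟨x, y, -, rfl⟩
    exact (abs_sub _ _).trans (add_le_add (hB x) (hB y))⟩

lemma abs_sub_le_modCont (hB : ∀ x, |F' x| ≤ B) (x y : ℝ) :
    |F' x - F' y| ≤ modCont F' |x - y| :=
  le_csSup (bddAbove_modCont_set hB _) ⟨x, y, le_rfl, rfl⟩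

lemma monotone_modCont (hB : ∀ x, |F' x| ≤ B) : Monotone (modCont F') := by
  intro t t' htt'
  obtain he | hne :=
    Set.eq_empty_or_nonempty {a : ℝ | ∃ x y : ℝ, |x - y| ≤ t ∧ a = |F' x - F' y|}
  · rw [modCont, he, Real.sSup_empty]
    exact modCont_nonneg F' t'
  · exact csSup_le_csSup (bddAbove_modCont_set hB t') hne
      fun a ⟨x, y, hxy, ha⟩ => ⟨x, y, hxy.trans htt', ha⟩

end ModulusOfContinuity

section Derivatives

variable {F F' : ℝ → ℝ} {C lam : ℝ}

lemma periodic_deriv {c : ℝ} (hdeg : ∀ x, F (x + 1) = F x + c)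
    (hderiv : ∀ x, HasDerivAt F (F' x) x) : Function.Periodic F' 1 := by
  intro x
  have h₁ : HasDerivAt (fun y => F (y + 1)) (F' (x + 1)) x :=
    (hderiv (x + 1)).comp_add_const x 1
  have h₂ : HasDerivAt (fun y => F (y + 1)) (F' x) x := by
    simpa only [hdeg] using (hderiv x).add_const c
  exact h₁.unique h₂

lemma exists_forall_abs_deriv_le {c : ℝ} (hdeg : ∀ x, F (x + 1) = F x + c)
    (hderiv : ∀ x, HasDerivAt F (F' x) x) (hcont : Continuous F') :
    ∃ B, ∀ x, |F' x| ≤ B := by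
  obtain ⟨B, hB⟩ := isBounded_iff_forall_norm_le.1
    ((periodic_deriv hdeg hderiv).isBounded_of_continuous one_ne_zero hcont)
  exact ⟨B, fun x => hB _ (mem_range_self x)⟩

lemma hasDerivAt_iterate (hderiv : ∀ x, HasDerivAt F (F' x) x) (n : ℕ) (x : ℝ) :
    HasDerivAt F^[n] (∏ i ∈ Finset.range n, F' (F^[i] x)) x := by
  induction n with
  | zero => simpa using hasDerivAt_id x
  | succ n ih =>
    rw [Function.iterate_succ', Finset.prod_range_succ, mul_comm]
    exact (hderiv (F^[n] x)).comp x ih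

lemma le_prod_deriv_iterate (hderiv : ∀ x, HasDerivAt F (F' x) x)
    (hexp : ∀ (n : ℕ) (x : ℝ), 1 ≤ n → C * lam ^ n ≤ deriv (F^[n]) x)
    {n : ℕ} (hn : 1 ≤ n) (x : ℝ) :
    C * lam ^ n ≤ ∏ i ∈ Finset.range n, F' (F^[i] x) :=
  (hasDerivAt_iterate hderiv n x).deriv ▸ hexp n x hn

lemma mul_le_derivative (hderiv : ∀ x, HasDerivAt F (F' x) x)
    (hexp : ∀ (n : ℕ) (x : ℝ), 1 ≤ n → C * lam ^ n ≤ deriv (F^[n]) x) (x : ℝ) :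
    C * lam ≤ F' x := by
  simpa using le_prod_deriv_iterate hderiv hexp le_rfl x

lemma mul_sub_le_iterate_sub (hderiv : ∀ x, HasDerivAt F (F' x) x)
    (hexp : ∀ (n : ℕ) (x : ℝ), 1 ≤ n → C * lam ^ n ≤ deriv (F^[n]) x)
    {n : ℕ} (hn : 1 ≤ n) {a b : ℝ} (hab : a ≤ b) :
    C * lam ^ n * (b - a) ≤ F^[n] b - F^[n] a :=
  mul_sub_le_image_sub_of_le_deriv (fun x => (hasDerivAt_iterate hderiv n x).differentiableAt)
    (fun x => hexp n x hn) hab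

end Derivatives

noncomputable def distortionSum (ω : ℝ → ℝ) (lam r : ℝ) (k : ℕ) : ℝ :=
  ∑ i ∈ Finset.range k, ω (r / lam ^ (i + 1))

section DiniSums

variable {ω : ℝ → ℝ} {lam : ℝ}

lemma mul_log_le_integral (hω : Monotone ω) {a b : ℝ} (ha : 0 < a) (hab : a ≤ b)
    (hint : IntervalIntegrable (fun u => ω u / u) volume a b) :
    ω a * Real.log (b / a) ≤ ∫ u in a..b, ω u / u := by
  have hpos : ∀ u ∈ uIcc a b, 0 < u := fun u hu => ha.trans_le (by
    rw [uIcc_of_le hab] at hu; exact hu.1)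
  rw [← integral_inv_of_pos ha (ha.trans_le hab), ← intervalIntegral.integral_const_mul]
  refine intervalIntegral.integral_mono_on hab
    ((intervalIntegral.intervalIntegrable_inv (fun u hu => (hpos u hu).ne')
      continuousOn_id).const_mul _) hint fun u hu => ?_
  rw [div_eq_mul_inv]
  exact mul_le_mul_of_nonneg_right (hω hu.1) (inv_nonneg.2 (ha.le.trans hu.1))

lemma distortionSum_mul_log_le (hlam : 1 < lam) (hω : Monotone ω) (hω₀ : ∀ t, 0 ≤ ω t)
    {r : ℝ} (hr : 0 < r) (hint : IntervalIntegrable (fun u => ω u / u) volume 0 r) (k : ℕ) :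
    distortionSum ω lam r k * Real.log lam ≤ ∫ u in 0..r, ω u / u := by
  have hpos : ∀ j : ℕ, 0 < r / lam ^ j := fun j => div_pos hr (pow_pos (by linarith) j)
  have hle : ∀ j : ℕ, r / lam ^ (j + 1) ≤ r / lam ^ j := fun j =>
    div_le_div_of_nonneg_left hr.le (pow_pos (by linarith) j)
      (pow_le_pow_right₀ hlam.le (Nat.le_succ j))
  have hle_r : ∀ j : ℕ, r / lam ^ j ≤ r := fun j => div_le_self hr.le (one_le_pow₀ hlam.le)
  have hint' : ∀ {a b}, 0 ≤ a → a ≤ r → 0 ≤ b → b ≤ r →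
      IntervalIntegrable (fun u => ω u / u) volume a b := fun ha₀ ha hb₀ hb =>
    hint.mono_set (uIcc_subset_uIcc (by rw [uIcc_of_le hr.le]; exact ⟨ha₀, ha⟩)
      (by rw [uIcc_of_le hr.le]; exact ⟨hb₀, hb⟩))
  suffices h : ∀ k : ℕ, distortionSum ω lam r k * Real.log lam ≤
      ∫ u in r / lam ^ k..r, ω u / u from
    (h k).trans (intervalIntegral.integral_mono_interval (hpos k).le (hle_r k) le_rfl
      (ae_restrict_of_forall_mem measurableSet_Ioc fun u hu => div_nonneg (hω₀ u) hu.1.le) hint)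
  intro k
  induction k with
  | zero => simp [distortionSum]
  | succ k ih =>
    have hstep := mul_log_le_integral hω (hpos (k + 1)) (hle k)
      (hint' (hpos _).le (hle_r _) (hpos _).le (hle_r _))
    rw [show r / lam ^ k / (r / lam ^ (k + 1)) = lam by
      field_simp; ring] at hstep
    rw [distortionSum, Finset.sum_range_succ, ← distortionSum, add_mul,
      ← intervalIntegral.integral_add_adjacent_intervals
        (hint' (hpos _).le (hle_r _) (hpos _).le (hle_r _))
        (hint' (hpos _).le (hle_r _) hr.le le_rfl)]
    exact (add_le_add ih hstep).trans_eq (add_comm _ _)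

lemma exists_forall_distortionSum_le (hlam : 1 < lam) (hω : Monotone ω) (hω₀ : ∀ t, 0 ≤ ω t)
    (hint : IntervalIntegrable (fun u => ω u / u) volume 0 1) {r : ℝ} (hr : 0 < r) :
    ∃ K, ∀ k, distortionSum ω lam r k ≤ K := by
  obtain ⟨J, hJ⟩ := pow_unbounded_of_one_lt r hlam
  have hJ₀ : 0 < lam ^ J := pow_pos (by linarith) J
  have hr' : 0 < r / lam ^ J := div_pos hr hJ₀
  have hr'₁ : r / lam ^ J ≤ 1 := (div_le_one hJ₀).2 hJ.le
  refine ⟨distortionSum ω lam r J +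
    (∫ u in 0..r / lam ^ J, ω u / u) / Real.log lam, fun k => ?_⟩
  have hsplit : distortionSum ω lam r (J + k) =
      distortionSum ω lam r J + distortionSum ω lam (r / lam ^ J) k := by
    simp only [distortionSum, Finset.sum_range_add, div_div, ← pow_add, add_assoc]
  calc distortionSum ω lam r k ≤ distortionSum ω lam r (J + k) :=
        Finset.sum_le_sum_of_subset_of_nonneg (Finset.range_subset_range.2 (by omega))
          fun _ _ _ => hω₀ _
    _ = _ := hsplit
    _ ≤ _ := by
        gcongr
        rw [le_div_iff₀ (Real.log_pos hlam)]
        exact distortionSum_mul_log_le hlam hω hω₀ hr'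
          (hint.mono_set (uIcc_subset_uIcc_left (by simp [uIcc_of_le, hr'.le, hr'₁]))) k

lemma exists_pos_forall_distortionSum_le (hlam : 1 < lam) (hω : Monotone ω)
    (hω₀ : ∀ t, 0 ≤ ω t) (hint : IntervalIntegrable (fun u => ω u / u) volume 0 1)
    {ε : ℝ} (hε : 0 < ε) :
    ∃ r₀ > 0, ∀ r, 0 < r → r ≤ r₀ → ∀ k, distortionSum ω lam r k ≤ ε := by
  have hL := Real.log_pos hlam
  have hcont := intervalIntegral.continuousOn_primitive_interval' hint left_mem_uIcc 0
    left_mem_uIcc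
  obtain ⟨δ, hδ, hsmall⟩ := Metric.continuousWithinAt_iff.1 hcont (ε * Real.log lam)
    (by positivity)
  refine ⟨min (δ / 2) 1, by positivity, fun r hr hr₀ k => ?_⟩
  have hr₁ : r ≤ 1 := hr₀.trans (min_le_right _ _)
  have hI := @hsmall r (by rw [uIcc_of_le zero_le_one]; exact ⟨hr.le, hr₁⟩)
    (by rw [Real.dist_eq, sub_zero, abs_of_pos hr]; linarith [min_le_left (δ / 2) 1])
  rw [intervalIntegral.integral_same, Real.dist_eq, sub_zero] at hI
  have := distortionSum_mul_log_le hlam hω hω₀ hr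
    (hint.mono_set (uIcc_subset_uIcc_left (by simp [uIcc_of_le, hr.le, hr₁]))) k
  exact ((mul_lt_mul_iff_of_pos_right hL).1
    (this.trans_lt ((le_abs_self _).trans_lt hI))).le

end DiniSums

lemma Finset.prod_le_prod_mul_exp_sum {ι : Type*} (s : Finset ι) {f g e : ι → ℝ} {m : ℝ}
    (hm : 0 < m) (hf : ∀ i ∈ s, m ≤ f i) (hg : ∀ i ∈ s, 0 ≤ g i) (he : ∀ i ∈ s, 0 ≤ e i)
    (hfg : ∀ i ∈ s, g i ≤ f i + e i) :
    ∏ i ∈ s, g i ≤ (∏ i ∈ s, f i) * Real.exp ((∑ i ∈ s, e i) / m) := by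
  rw [Finset.sum_div, Real.exp_sum, ← Finset.prod_mul_distrib]
  refine Finset.prod_le_prod hg fun i hi => ?_
  have hfi : 0 < f i := hm.trans_le (hf i hi)
  have hei : e i ≤ f i * (e i / m) := by
    rw [mul_div_assoc', le_div_iff₀ hm]
    linarith [mul_le_mul_of_nonneg_right (hf i hi) (he i hi)]
  calc g i ≤ f i * (e i / m + 1) := by linarith [hfg i hi]
    _ ≤ f i * Real.exp (e i / m) :=
        mul_le_mul_of_nonneg_left (Real.add_one_le_exp _) hfi.le

section Distortion

variable {F F' : ℝ → ℝ} {C lam B : ℝ}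

lemma abs_iterate_sub_le (hmono : StrictMono F) (hderiv : ∀ x, HasDerivAt F (F' x) x)
    (hC : 0 < C) (hlam : 0 < lam)
    (hexp : ∀ (n : ℕ) (x : ℝ), 1 ≤ n → C * lam ^ n ≤ deriv (F^[n]) x)
    {i k : ℕ} (hik : i < k) {a c ξ ζ s : ℝ} (hξ : ξ ∈ Icc a c) (hζ : ζ ∈ Icc a c)
    (hs : F^[k] c - F^[k] a ≤ s) :
    |F^[i] ζ - F^[i] ξ| ≤ s / C / lam ^ (k - i) := by
  have hmonoᵢ := (hmono.iterate i).monotone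
  have hexpand := mul_sub_le_iterate_sub hderiv hexp (n := k - i) (by omega)
    (hmonoᵢ (hξ.1.trans hξ.2))
  rw [← Function.iterate_add_apply, ← Function.iterate_add_apply,
    Nat.sub_add_cancel hik.le] at hexpand
  rw [div_div, le_div_iff₀ (by positivity)]
  calc |F^[i] ζ - F^[i] ξ| * (C * lam ^ (k - i))
      ≤ (F^[i] c - F^[i] a) * (C * lam ^ (k - i)) := by
        refine mul_le_mul_of_nonneg_right (abs_sub_le_iff.2 ⟨?_, ?_⟩) (by positivity)
        · linarith [hmonoᵢ hζ.2, hmonoᵢ hξ.1]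
        · linarith [hmonoᵢ hξ.2, hmonoᵢ hζ.1]
    _ ≤ s := by linarith

lemma prod_deriv_iterate_le (hmono : StrictMono F) (hderiv : ∀ x, HasDerivAt F (F' x) x)
    (hC : 0 < C) (hlam : 0 < lam)
    (hexp : ∀ (n : ℕ) (x : ℝ), 1 ≤ n → C * lam ^ n ≤ deriv (F^[n]) x)
    (hB : ∀ x, |F' x| ≤ B) {k : ℕ} {a c ξ ζ s : ℝ} (hξ : ξ ∈ Icc a c) (hζ : ζ ∈ Icc a c)
    (hs : F^[k] c - F^[k] a ≤ s) :
    ∏ i ∈ Finset.range k, F' (F^[i] ζ) ≤ (∏ i ∈ Finset.range k, F' (F^[i] ξ)) *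
      Real.exp (distortionSum (modCont F') lam (s / C) k / (C * lam)) := by
  have hm : 0 < C * lam := mul_pos hC hlam
  have hreflect : ∑ i ∈ Finset.range k, modCont F' (s / C / lam ^ (k - i)) =
      distortionSum (modCont F') lam (s / C) k := by
    rw [distortionSum, ← Finset.sum_range_reflect]
    refine Finset.sum_congr rfl fun i hi => ?_
    rw [show k - (k - 1 - i) = i + 1 by have := Finset.mem_range.1 hi; omega]
  rw [← hreflect]
  refine Finset.prod_le_prod_mul_exp_sum _ hm (fun i _ => mul_le_derivative hderiv hexp _)
    (fun i _ => hm.le.trans (mul_le_derivative hderiv hexp _)) (fun i _ => modCont_nonneg F' _)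
    fun i hi => ?_
  have hdist := abs_iterate_sub_le hmono hderiv hC hlam hexp (Finset.mem_range.1 hi) hξ hζ hs
  linarith [le_of_abs_le (abs_sub_le_modCont hB (F^[i] ζ) (F^[i] ξ)),
    monotone_modCont hB hdist]

lemma div_mem_Icc_of_iterate (hmono : StrictMono F) (hderiv : ∀ x, HasDerivAt F (F' x) x)
    (hC : 0 < C) (hlam : 0 < lam)
    (hexp : ∀ (n : ℕ) (x : ℝ), 1 ≤ n → C * lam ^ n ≤ deriv (F^[n]) x)
    (hB : ∀ x, |F' x| ≤ B) {k : ℕ} {a b c s L : ℝ} (hab : a < b) (hbc : b < c)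
    (hs : F^[k] c - F^[k] a ≤ s) (hL : distortionSum (modCont F') lam (s / C) k ≤ L) :
    (c - b) / (b - a) ∈ Icc ((F^[k] c - F^[k] b) / (F^[k] b - F^[k] a) *
      (Real.exp (L / (C * lam)))⁻¹) ((F^[k] c - F^[k] b) / (F^[k] b - F^[k] a) *
      Real.exp (L / (C * lam))) := by
  have hm : 0 < C * lam := mul_pos hC hlam
  have hcont : Continuous F^[k] :=
    continuous_iff_continuousAt.2 fun x => (hasDerivAt_iterate hderiv k x).continuousAt
  obtain ⟨ξ, hξ, hPξ⟩ := exists_hasDerivAt_eq_slope (F^[k]) _ hbc hcont.continuousOn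
    fun x _ => hasDerivAt_iterate hderiv k x
  obtain ⟨ζ, hζ, hPζ⟩ := exists_hasDerivAt_eq_slope (F^[k]) _ hab hcont.continuousOn
    fun x _ => hasDerivAt_iterate hderiv k x
  set P := fun x => ∏ i ∈ Finset.range k, F' (F^[i] x)
  set E := Real.exp (L / (C * lam))
  have hP : ∀ x, 0 < P x := fun x =>
    Finset.prod_pos fun i _ => hm.trans_le (mul_le_derivative hderiv hexp _)
  have hE : ∀ x ∈ Icc a c, ∀ y ∈ Icc a c, P y ≤ P x * E := fun x hx y hy =>
    (prod_deriv_iterate_le hmono hderiv hC hlam hexp hB hx hy hs).trans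
      (mul_le_mul_of_nonneg_left (Real.exp_le_exp.2 (by gcongr)) (hP x).le)
  have hξI : ξ ∈ Icc a c := ⟨hab.trans hξ.1 |>.le, hξ.2.le⟩
  have hζI : ζ ∈ Icc a c := ⟨hζ.1.le, hζ.2.trans hbc |>.le⟩
  have hratio : (c - b) / (b - a) =
      (F^[k] c - F^[k] b) / (F^[k] b - F^[k] a) * (P ζ / P ξ) := by
    have h₁ : F^[k] b - F^[k] a ≠ 0 := sub_ne_zero.2 ((hmono.iterate k) hab).ne'
    have h₂ : F^[k] c - F^[k] b ≠ 0 := sub_ne_zero.2 ((hmono.iterate k) hbc).ne'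
    rw [show P ξ = _ from hPξ, show P ζ = _ from hPζ]
    field_simp
  have hρ : 0 ≤ (F^[k] c - F^[k] b) / (F^[k] b - F^[k] a) :=
    div_nonneg (sub_nonneg.2 ((hmono.iterate k).monotone hbc.le))
      (sub_nonneg.2 ((hmono.iterate k).monotone hab.le))
  rw [hratio]
  refine ⟨mul_le_mul_of_nonneg_left ?_ hρ, mul_le_mul_of_nonneg_left ?_ hρ⟩
  · rw [inv_le_iff_one_le_mul₀' (Real.exp_pos _), mul_div_assoc', le_div_iff₀ (hP ξ), one_mul]
    exact (hE ζ hζI ξ hξI).trans_eq (mul_comm _ _)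
  · rw [div_le_iff₀ (hP ξ), mul_comm]
    exact hE ξ hξI ζ hζI

end Distortion

noncomputable def pullbackRatio (F : ℝ → ℝ) (n : ℕ) (x p q : ℝ) : ℝ :=
  (Finv F n (x + p) - Finv F n x) / (Finv F n x - Finv F n (x - q))

section Inverse

variable {F F' : ℝ → ℝ} {C lam B : ℝ} {d : ℕ}

lemma iterate_Finv (hbij : Function.Bijective F) (n : ℕ) (y : ℝ) : F^[n] (Finv F n y) = y :=
  Function.rightInverse_invFun (hbij.iterate n).2 y

lemma Finv_iterate (hbij : Function.Bijective F) (n : ℕ) (x : ℝ) : Finv F n (F^[n] x) = x :=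
  Function.leftInverse_invFun (hbij.iterate n).1 x

lemma strictMono_Finv (hmono : StrictMono F) (hbij : Function.Bijective F) (n : ℕ) :
    StrictMono (Finv F n) := fun a b hab =>
  (hmono.iterate n).lt_iff_lt.1 (by rwa [iterate_Finv hbij, iterate_Finv hbij])

lemma Finv_add (hbij : Function.Bijective F) (m k : ℕ) (y : ℝ) :
    Finv F (m + k) y = Finv F k (Finv F m y) := by
  conv_lhs => rw [← iterate_Finv hbij m y, ← iterate_Finv hbij k (Finv F m y),
    ← Function.iterate_add_apply, Finv_iterate hbij]

lemma map_add_nat (hdeg : ∀ x, F (x + 1) = F x + d) (j : ℕ) (x : ℝ) :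
    F (x + j) = F x + d * j := by
  induction j with
  | zero => simp
  | succ j ih => rw [Nat.cast_succ, ← add_assoc, hdeg, ih]; ring

lemma iterate_add_nat (hdeg : ∀ x, F (x + 1) = F x + d) (n j : ℕ) (x : ℝ) :
    F^[n] (x + j) = F^[n] x + (d : ℝ) ^ n * j := by
  induction n generalizing x with
  | zero => simp
  | succ n ih =>
    rw [Function.iterate_succ_apply', Function.iterate_succ_apply', ih,
      show (d : ℝ) ^ n * j = ((d ^ n * j : ℕ) : ℝ) by push_cast; ring, map_add_nat hdeg]
    push_cast; ring

lemma Finv_add_pow_mul (hbij : Function.Bijective F) (hdeg : ∀ x, F (x + 1) = F x + d)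
    (n j : ℕ) (y : ℝ) : Finv F n (y + (d : ℝ) ^ n * j) = Finv F n y + j := by
  have h := iterate_add_nat hdeg n j (Finv F n y)
  rw [iterate_Finv hbij] at h
  rw [← h, Finv_iterate hbij]

lemma Finv_add_sub_mem_Icc (hmono : StrictMono F) (hbij : Function.Bijective F)
    (hdeg : ∀ x, F (x + 1) = F x + d) {n a b : ℕ} {t : ℝ} (ha : (d : ℝ) ^ n * a ≤ t)
    (hb : t ≤ (d : ℝ) ^ n * b) (y : ℝ) : Finv F n (y + t) - Finv F n y ∈ Icc (a : ℝ) b := by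
  have hFinv := (strictMono_Finv hmono hbij n).monotone
  have ha' := hFinv (add_le_add_right ha y)
  have hb' := hFinv (add_le_add_right hb y)
  rw [Finv_add_pow_mul hbij hdeg] at ha' hb'
  exact ⟨by linarith, by linarith⟩

lemma pullbackRatio_add (hbij : Function.Bijective F) (m k : ℕ) (x t : ℝ) :
    pullbackRatio F (m + k) x t t = pullbackRatio F k (Finv F m x)
      (Finv F m (x + t) - Finv F m x) (Finv F m x - Finv F m (x - t)) := by
  simp only [pullbackRatio, Finv_add hbij, add_sub_cancel, sub_sub_cancel]

lemma pullbackRatio_mem_Icc (hmono : StrictMono F) (hbij : Function.Bijective F)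
    (hderiv : ∀ x, HasDerivAt F (F' x) x) (hC : 0 < C) (hlam : 0 < lam)
    (hexp : ∀ (n : ℕ) (x : ℝ), 1 ≤ n → C * lam ^ n ≤ deriv (F^[n]) x)
    (hB : ∀ x, |F' x| ≤ B) {k : ℕ} {u p q s L : ℝ} (hp : 0 < p) (hq : 0 < q)
    (hpq : p + q ≤ s) (hL : distortionSum (modCont F') lam (s / C) k ≤ L) :
    pullbackRatio F k u p q ∈
      Icc (p / q * (Real.exp (L / (C * lam)))⁻¹) (p / q * Real.exp (L / (C * lam))) := by
  have hFinv := strictMono_Finv hmono hbij k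
  have h := div_mem_Icc_of_iterate hmono hderiv hC hlam hexp hB (k := k)
    (hFinv (show u - q < u by linarith)) (hFinv (show u < u + p by linarith))
    (by simp only [iterate_Finv hbij]; linarith) hL
  simp only [iterate_Finv hbij, add_sub_cancel_left, sub_sub_cancel] at h
  exact h

end Inverse

lemma div_mem_Icc_div_of_mem_Icc {a b N D : ℝ} (ha : 0 < a) (hN : N ∈ Icc a b)
    (hD : D ∈ Icc a b) : N / D ∈ Icc (b / a)⁻¹ (b / a) := by
  have hD₀ : 0 < D := ha.trans_le hD.1
  rw [inv_div]
  constructor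
  · rw [div_le_div_iff₀ (ha.trans_le (hN.1.trans hN.2)) hD₀]
    nlinarith [mul_le_mul_of_nonneg_right hN.1 hD₀.le, mul_le_mul_of_nonneg_left hD.2
      (ha.le.trans hN.1)]
  · rw [div_le_div_iff₀ hD₀ ha]
    nlinarith [mul_le_mul_of_nonneg_right hN.2 ha.le, mul_le_mul_of_nonneg_left hD.1
      (ha.le.trans (hN.1.trans hN.2))]

lemma mem_Icc_inv_mul {r ρ M E : ℝ} (hE : 0 ≤ E) (hρ : ρ ∈ Icc M⁻¹ M)
    (hr : r ∈ Icc (ρ * E⁻¹) (ρ * E)) : r ∈ Icc (M * E)⁻¹ (M * E) :=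
  ⟨by rw [mul_inv]; exact (mul_le_mul_of_nonneg_right hρ.1 (inv_nonneg.2 hE)).trans hr.1,
    hr.2.trans (mul_le_mul_of_nonneg_right hρ.2 hE)⟩

lemma Icc_inv_subset_Icc_inv {M M' : ℝ} (hM : 1 ≤ M) (h : M ≤ M') :
    Icc M⁻¹ M ⊆ Icc M'⁻¹ M' :=
  Icc_subset_Icc (inv_anti₀ (by linarith) h) h

section LargeScales

variable {F : ℝ → ℝ} {d : ℕ}

lemma pullbackRatio_mem_Icc_of_pow_le (hmono : StrictMono F) (hbij : Function.Bijective F)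
    (hdeg : ∀ x, F (x + 1) = F x + d) (hd : 0 < d) {n : ℕ} {t : ℝ} (ht : (d : ℝ) ^ n ≤ t)
    (x : ℝ) : pullbackRatio F n x t t ∈ Icc 2⁻¹ 2 := by
  have hdn : (0 : ℝ) < (d : ℝ) ^ n := by positivity
  set j := ⌊t / (d : ℝ) ^ n⌋₊
  have hj : (1 : ℝ) ≤ j := by
    exact_mod_cast Nat.le_floor (by rwa [Nat.cast_one, le_div_iff₀ hdn, one_mul])
  have hjt : (d : ℝ) ^ n * j ≤ t := by
    rw [mul_comm, ← le_div_iff₀ hdn]; exact Nat.floor_le (div_nonneg (hdn.le.trans ht) hdn.le)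
  have htj : t ≤ (d : ℝ) ^ n * ((j + 1 : ℕ) : ℝ) := by
    rw [mul_comm, ← div_le_iff₀ hdn]; push_cast; exact (Nat.lt_floor_add_one _).le
  have hN := Finv_add_sub_mem_Icc hmono hbij hdeg hjt htj x
  have hD := Finv_add_sub_mem_Icc hmono hbij hdeg hjt htj (x - t)
  rw [sub_add_cancel] at hD
  refine Icc_inv_subset_Icc_inv ?_ ?_ (div_mem_Icc_div_of_mem_Icc (by positivity) hN hD)
  · rw [le_div_iff₀ (by positivity)]; push_cast; linarith
  · rw [div_le_iff₀ (by positivity)]; push_cast; linarith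

lemma pullbackRatio_mem_Icc_of_pow_le_of_le_pow_succ (hmono : StrictMono F)
    (hbij : Function.Bijective F) (hdeg : ∀ x, F (x + 1) = F x + d) {E : ℝ} (hE : 0 ≤ E)
    (hdist : ∀ (k : ℕ) (u p q : ℝ), 0 < p → 0 < q → p + q ≤ 2 * d →
      pullbackRatio F k u p q ∈ Icc (p / q * E⁻¹) (p / q * E))
    {m n : ℕ} (hmn : m ≤ n) {t : ℝ} (ht₁ : (d : ℝ) ^ m ≤ t) (ht₂ : t ≤ (d : ℝ) ^ (m + 1))
    (x : ℝ) : pullbackRatio F n x t t ∈ Icc (d * E)⁻¹ (d * E) := by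
  obtain ⟨k, rfl⟩ := Nat.exists_eq_add_of_le hmn
  have h₁ : (d : ℝ) ^ m * ((1 : ℕ) : ℝ) ≤ t := by rwa [Nat.cast_one, mul_one]
  have h₂ : t ≤ (d : ℝ) ^ m * d := by rwa [← pow_succ]
  have hp := Finv_add_sub_mem_Icc hmono hbij hdeg h₁ h₂ x
  have hq := Finv_add_sub_mem_Icc hmono hbij hdeg h₁ h₂ (x - t)
  rw [sub_add_cancel] at hq
  rw [Nat.cast_one] at hp hq
  rw [pullbackRatio_add hbij]
  refine mem_Icc_inv_mul hE (by simpa using div_mem_Icc_div_of_mem_Icc one_pos hp hq)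
    (hdist k _ _ _ (by linarith [hp.1]) (by linarith [hq.1]) (by linarith [hp.2, hq.2]))

lemma pullbackRatio_mem_Icc_of_distortion (hd : 2 ≤ d) (hmono : StrictMono F)
    (hbij : Function.Bijective F) (hdeg : ∀ x, F (x + 1) = F x + d) {E : ℝ} (hE : 1 ≤ E)
    (hdist : ∀ (k : ℕ) (u p q : ℝ), 0 < p → 0 < q → p + q ≤ 2 * d →
      pullbackRatio F k u p q ∈ Icc (p / q * E⁻¹) (p / q * E))
    (n : ℕ) (x : ℝ) {t : ℝ} (ht : 0 < t) : pullbackRatio F n x t t ∈ Icc (d * E)⁻¹ (d * E) := by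
  have hd' : (2 : ℝ) ≤ d := by exact_mod_cast hd
  rcases lt_or_ge t 1 with ht₁ | ht₁
  · have h := hdist n x t t ht ht (by linarith)
    rw [div_self ht.ne', one_mul, one_mul] at h
    exact Icc_inv_subset_Icc_inv hE (by nlinarith) h
  obtain ⟨m, hm₁, hm₂⟩ := exists_nat_pow_near ht₁ (by linarith : (1 : ℝ) < d)
  rcases le_or_gt m n with hmn | hnm
  · exact pullbackRatio_mem_Icc_of_pow_le_of_le_pow_succ hmono hbij hdeg (by linarith) hdist
      hmn hm₁ hm₂.le x
  · exact Icc_inv_subset_Icc_inv (by norm_num) (by nlinarith)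
      (pullbackRatio_mem_Icc_of_pow_le hmono hbij hdeg (by omega)
        ((pow_le_pow_right₀ (by linarith) hnm.le).trans hm₁) x)

end LargeScales

theorem stmt_3_general (d : ℕ) (hd : 2 ≤ d) (F F' : ℝ → ℝ)
    (hmono : StrictMono F) (hbij : Function.Bijective F)
    (hdeg : ∀ x : ℝ, F (x + 1) = F x + d)
    (hderiv : ∀ x : ℝ, HasDerivAt F (F' x) x) (hcont : Continuous F')
    (C lam : ℝ) (hC : 0 < C) (hlam : 1 < lam)
    (hexp : ∀ (n : ℕ) (x : ℝ), 1 ≤ n → C * lam ^ n ≤ deriv (F^[n]) x)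
    (hDini : MeasureTheory.IntegrableOn (fun t => modCont F' t / t) (Set.Ioc 0 1)) :
    (∃ M : ℝ, 1 ≤ M ∧ ∀ x t : ℝ, 0 < t → ∀ n : ℕ, 1 ≤ n →
      M⁻¹ ≤ (Finv F n (x + t) - Finv F n x) / (Finv F n x - Finv F n (x - t)) ∧
        (Finv F n (x + t) - Finv F n x) / (Finv F n x - Finv F n (x - t)) ≤ M) ∧
    (∀ η : ℝ, 0 < η → ∃ δ : ℝ, 0 < δ ∧ ∀ x t : ℝ, 0 < t → t ≤ δ → ∀ n : ℕ, 1 ≤ n →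
      (1 + η)⁻¹ ≤ (Finv F n (x + t) - Finv F n x) / (Finv F n x - Finv F n (x - t)) ∧
        (Finv F n (x + t) - Finv F n x) / (Finv F n x - Finv F n (x - t)) ≤ 1 + η) := by
  obtain ⟨B, hB⟩ := exists_forall_abs_deriv_le hdeg hderiv hcont
  have hd' : (2 : ℝ) ≤ d := by exact_mod_cast hd
  have hlam₀ : 0 < lam := by linarith
  have hm : 0 < C * lam := mul_pos hC hlam₀
  have hint : IntervalIntegrable (fun t => modCont F' t / t) volume 0 1 :=
    (intervalIntegrable_iff_integrableOn_Ioc_of_le zero_le_one).2 hDini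
  constructor
  · obtain ⟨K, hK⟩ := exists_forall_distortionSum_le hlam (monotone_modCont hB)
      (modCont_nonneg F') hint (div_pos (by linarith) hC : 0 < 2 * (d : ℝ) / C)
    have hE : 1 ≤ Real.exp (K / (C * lam)) :=
      Real.one_le_exp (div_nonneg (by simpa [distortionSum] using hK 0) hm.le)
    refine ⟨d * Real.exp (K / (C * lam)), ?_, fun x t ht n _ =>
      pullbackRatio_mem_Icc_of_distortion hd hmono hbij hdeg hE
        (fun k u p q hp hq hpq =>
          pullbackRatio_mem_Icc hmono hbij hderiv hC hlam₀ hexp hB hp hq hpq (hK k)) n x ht⟩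
    nlinarith
  · intro η hη
    obtain ⟨r₀, hr₀, hsmall⟩ := exists_pos_forall_distortionSum_le hlam (monotone_modCont hB)
      (modCont_nonneg F') hint (ε := C * lam * Real.log (1 + η))
      (mul_pos hm (Real.log_pos (by linarith)))
    refine ⟨C * r₀ / 2, by positivity, fun x t ht htδ n _ => ?_⟩
    have h := pullbackRatio_mem_Icc hmono hbij hderiv hC hlam₀ hexp hB (u := x) ht ht
      (two_mul t).ge (hsmall (2 * t / C) (by positivity) (by rw [div_le_iff₀ hC]; linarith) n)
    rwa [div_self ht.ne', one_mul, one_mul, mul_div_cancel_left₀ _ hm.ne',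
      Real.exp_log (by linarith)] at h

/-- a `C¹` Dini expanding circle endomorphism is uniformly
symmetric. -/
theorem stmt_3 (d : ℕ) (hd : 2 ≤ d) (F F' : ℝ → ℝ)
    (hmono : StrictMono F) (hbij : Function.Bijective F)
    (hdeg : ∀ x : ℝ, F (x + 1) = F x + d) (hF0 : F 0 = 0)
    (hderiv : ∀ x : ℝ, HasDerivAt F (F' x) x) (hcont : Continuous F')
    (C lam : ℝ) (hC : 0 < C) (hlam : 1 < lam)
    (hexp : ∀ (n : ℕ) (x : ℝ), 1 ≤ n → C * lam ^ n ≤ deriv (F^[n]) x)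
    (hDini : MeasureTheory.IntegrableOn (fun t => modCont F' t / t) (Set.Ioc 0 1)) :
    (∃ M : ℝ, 1 ≤ M ∧ ∀ x t : ℝ, 0 < t → ∀ n : ℕ, 1 ≤ n →
      M⁻¹ ≤ (Finv F n (x + t) - Finv F n x) / (Finv F n x - Finv F n (x - t)) ∧
        (Finv F n (x + t) - Finv F n x) / (Finv F n x - Finv F n (x - t)) ≤ M) ∧
    (∀ η : ℝ, 0 < η → ∃ δ : ℝ, 0 < δ ∧ ∀ x t : ℝ, 0 < t → t ≤ δ → ∀ n : ℕ, 1 ≤ n →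
      (1 + η)⁻¹ ≤ (Finv F n (x + t) - Finv F n x) / (Finv F n x - Finv F n (x - t)) ∧
        (Finv F n (x + t) - Finv F n x) / (Finv F n x - Finv F n (x - t)) ≤ 1 + η) :=
  stmt_3_general d hd F F' hmono hbij hdeg hderiv hcont C lam hC hlam hexp hDini
end

section
/- Let F, G : ℝ → ℝ be increasing homeomorphisms with F(x+1) = F(x) + d_F, G(x+1) = G(x) + d_G (integers d_F, d_G ≥ 2) and F(0) = G(0) = 0. Define ι_{n,F} = max{F⁻ⁿ(m+1) − F⁻ⁿ(m) : m ∈ ℤ, 0 ≤ m < d_F^n} and similarly ι_{n,G}. Assume ι_{n,F} → 0 and ι_{n,G} → 0 as n → ∞. Then there exists an increasing homeomorphism H : ℝ → ℝ with H(x+1) = H(x) + 1 and F ∘ H = H ∘ G if and only if d_F = d_G. -/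
/-!
If the degrees agree, the conjugacy is `H = lim F⁻ⁿ ∘ Gⁿ`. Both `F⁻ᵏ ∘ Gᵏ x` for `k ≥ n` and the
limit lie in the level-`n` Markov interval of `F` indexed by `⌊Gⁿ x⌋`, so the convergence is
uniform once the mesh of `F` tends to zero; hence `H` is a continuous degree-one lift, and
therefore surjective. `H` maps the Markov points `G⁻ⁿ m` to `F⁻ⁿ m`; as the mesh of `G` tends
to zero, every interval contains a Markov interval of `G`, which makes `H` injective.
Conversely, evaluating `F ∘ H = H ∘ G` at `0` and `1` gives `d_F = d_G`.
-/

open Filter Topology Function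

/-- The level-`(n+1)` partition refines the level-`n` one, so this says `ι_{n,F} → 0`. -/
def HasFineMarkovPartitions (F : ℝ → ℝ) : Prop :=
  ∀ ε > 0, ∃ n, ∀ m : ℤ, Finv F n (m + 1) - Finv F n m < ε

structure IsLiftOfDegree (d : ℕ) (F : ℝ → ℝ) : Prop where
  strictMono : StrictMono F
  bijective : Bijective F
  map_add_one : ∀ x, F (x + 1) = F x + d
  map_zero : F 0 = 0

section FunctionalEquation

variable {f : ℝ → ℝ}

theorem map_add_int_of_map_add_one {d : ℝ} (h : ∀ x, f (x + 1) = f x + d) (x : ℝ) (k : ℤ) :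
    f (x + k) = f x + k * d := by
  have hper : Periodic (fun y => f y - d * y) 1 := fun y => by simp only [h]; ring
  have := hper.int_mul k x
  simp only [mul_one] at this
  linear_combination this

theorem iterate_map_add_one {d : ℕ} (h : ∀ x, f (x + 1) = f x + d) (n : ℕ) (x : ℝ) :
    f^[n] (x + 1) = f^[n] x + (d : ℝ) ^ n := by
  induction n generalizing x with
  | zero => simp
  | succ n ih =>
    rw [iterate_succ_apply', iterate_succ_apply', ih, pow_succ]
    exact_mod_cast map_add_int_of_map_add_one h (f^[n] x) ((d : ℤ) ^ n)

theorem iterate_map_add_int {d : ℕ} (h : ∀ x, f (x + 1) = f x + d) (n : ℕ) (x : ℝ) (k : ℤ) :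
    f^[n] (x + k) = f^[n] x + k * (d : ℝ) ^ n :=
  map_add_int_of_map_add_one (iterate_map_add_one h n) x k

theorem iterate_intCast {d : ℕ} (h : ∀ x, f (x + 1) = f x + d) (h0 : f 0 = 0) (n : ℕ) (k : ℤ) :
    f^[n] k = k * (d : ℝ) ^ n := by
  simpa [iterate_fixed h0] using iterate_map_add_int h n 0 k

theorem eq_of_semiconj_of_map_add_one {F G H : ℝ → ℝ} {dF dG : ℕ}
    (hF : ∀ x, F (x + 1) = F x + dF) (hG : ∀ x, G (x + 1) = G x + dG) (hG0 : G 0 = 0)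
    (hH : ∀ x, H (x + 1) = H x + 1) (hconj : ∀ x, F (H x) = H (G x)) : dF = dG := by
  have hG1 : G 1 = dG := by simpa [hG0] using hG 0
  have hHdG : H dG = H 0 + dG := by simpa using map_add_int_of_map_add_one hH 0 dG
  have key : H 0 + dF = H 0 + dG :=
    calc H 0 + dF = F (H 0) + dF := by rw [hconj, hG0]
      _ = F (H 1) := by rw [← hF, ← hH, zero_add]
      _ = H (G 1) := hconj 1
      _ = H 0 + dG := by rw [hG1, hHdG]
  exact_mod_cast add_left_cancel key

end FunctionalEquation

section Finv

variable {f : ℝ → ℝ}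

theorem Finv_iterate_s5 (hf : Injective f) (n : ℕ) (x : ℝ) : Finv f n (f^[n] x) = x :=
  leftInverse_invFun (hf.iterate n) x

theorem iterate_Finv_s5 (hf : Surjective f) (n : ℕ) (x : ℝ) : f^[n] (Finv f n x) = x :=
  rightInverse_invFun (hf.iterate n) x

theorem Finv_surjective (hf : Injective f) (n : ℕ) : Surjective (Finv f n) :=
  fun x => ⟨_, Finv_iterate_s5 hf n x⟩

theorem Finv_strictMono (hf : StrictMono f) (hs : Surjective f) (n : ℕ) :
    StrictMono (Finv f n) := fun a b hab =>
  (hf.iterate n).lt_iff_lt.1 (by rwa [iterate_Finv_s5 hs, iterate_Finv_s5 hs])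

theorem continuous_Finv (hf : StrictMono f) (hs : Surjective f) (n : ℕ) :
    Continuous (Finv f n) :=
  (Finv_strictMono hf hs n).monotone.continuous_of_surjective (Finv_surjective hf.injective n)

end Finv

namespace IsLiftOfDegree

variable {d : ℕ} {F : ℝ → ℝ}

theorem pos (hF : IsLiftOfDegree d F) : 0 < d := by
  have := hF.strictMono (lt_add_one 0)
  rw [hF.map_add_one] at this
  exact_mod_cast (lt_add_iff_pos_right _).1 this

theorem continuous (hF : IsLiftOfDegree d F) : Continuous F :=
  hF.strictMono.monotone.continuous_of_surjective hF.bijective.2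

theorem Finv_add_int_mul_pow (hF : IsLiftOfDegree d F) (n : ℕ) (x : ℝ) (k : ℤ) :
    Finv F n (x + k * (d : ℝ) ^ n) = Finv F n x + k := by
  apply hF.bijective.1.iterate n
  rw [iterate_Finv_s5 hF.bijective.2, iterate_map_add_int hF.map_add_one,
    iterate_Finv_s5 hF.bijective.2]

theorem Finv_add_pow (hF : IsLiftOfDegree d F) (n : ℕ) (x : ℝ) :
    Finv F n (x + (d : ℝ) ^ n) = Finv F n x + 1 := by
  simpa using hF.Finv_add_int_mul_pow n x 1

theorem Finv_intCast_mul_pow (hF : IsLiftOfDegree d F) (n j : ℕ) (m : ℤ) :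
    Finv F (n + j) (m * (d : ℝ) ^ j) = Finv F n m := by
  have : F^[n + j] (Finv F n m) = m * (d : ℝ) ^ j := by
    rw [add_comm, iterate_add_apply, iterate_Finv_s5 hF.bijective.2,
      iterate_intCast hF.map_add_one hF.map_zero]
  rw [← this, Finv_iterate_s5 hF.bijective.1]

theorem map_Finv_succ (hF : IsLiftOfDegree d F) (n : ℕ) (y : ℝ) :
    F (Finv F (n + 1) y) = Finv F n y := by
  apply hF.bijective.1.iterate n
  rw [← iterate_succ_apply F n, iterate_Finv_s5 hF.bijective.2, iterate_Finv_s5 hF.bijective.2]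

/-- The Markov intervals are periodic in their index with period `dⁿ`, so a mesh bound over one
period bounds all of them. -/
theorem hasFineMarkovPartitions_of_mesh_tendsto_zero (hF : IsLiftOfDegree d F)
    (hι : ∀ ε : ℝ, 0 < ε → ∃ N : ℕ, ∀ n ≥ N, ∀ m : ℕ, m < d ^ n →
      Finv F n ((m : ℝ) + 1) - Finv F n (m : ℝ) < ε) :
    HasFineMarkovPartitions F := by
  intro ε hε
  obtain ⟨n, hn⟩ := hι ε hε
  refine ⟨n, fun m => ?_⟩
  have hdn : (0 : ℤ) < (d : ℤ) ^ n := pow_pos (by exact_mod_cast hF.pos) n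
  obtain ⟨r, hr⟩ := Int.eq_ofNat_of_zero_le (Int.emod_nonneg m hdn.ne')
  have hrlt : r < d ^ n := by exact_mod_cast hr ▸ Int.emod_lt_of_pos m hdn
  have hm : (m : ℝ) = r + (m / (d : ℤ) ^ n : ℤ) * (d : ℝ) ^ n := by
    have := Int.emod_add_ediv_mul m ((d : ℤ) ^ n)
    rw [hr] at this
    exact_mod_cast this.symm
  rw [hm, add_right_comm, hF.Finv_add_int_mul_pow, hF.Finv_add_int_mul_pow]
  simpa using hn n le_rfl r hrlt

end IsLiftOfDegree

noncomputable def conjApprox (F G : ℝ → ℝ) (n : ℕ) (x : ℝ) : ℝ := Finv F n (G^[n] x)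

noncomputable def conjLimit (F G : ℝ → ℝ) (x : ℝ) : ℝ := limUnder atTop (conjApprox F G · x)

section Conjugacy

variable {d : ℕ} {F G : ℝ → ℝ}

theorem continuous_conjApprox (hF : IsLiftOfDegree d F) (hG : IsLiftOfDegree d G) (n : ℕ) :
    Continuous (conjApprox F G n) :=
  (continuous_Finv hF.strictMono hF.bijective.2 n).comp (hG.continuous.iterate n)

theorem monotone_conjApprox (hF : IsLiftOfDegree d F) (hG : IsLiftOfDegree d G) (n : ℕ) :
    Monotone (conjApprox F G n) :=
  (Finv_strictMono hF.strictMono hF.bijective.2 n).monotone.comp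
    (hG.strictMono.iterate n).monotone

theorem conjApprox_add_one (hF : IsLiftOfDegree d F) (hG : IsLiftOfDegree d G) (n : ℕ)
    (x : ℝ) : conjApprox F G n (x + 1) = conjApprox F G n x + 1 := by
  rw [conjApprox, iterate_map_add_one hG.map_add_one, hF.Finv_add_pow, conjApprox]

theorem map_conjApprox_succ (hF : IsLiftOfDegree d F) (n : ℕ) (x : ℝ) :
    F (conjApprox F G (n + 1) x) = conjApprox F G n (G x) := by
  rw [conjApprox, hF.map_Finv_succ, iterate_succ_apply, conjApprox]

theorem conjApprox_Finv (hF : IsLiftOfDegree d F) (hG : IsLiftOfDegree d G) {n k : ℕ}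
    (hnk : n ≤ k) (m : ℤ) : conjApprox F G k (Finv G n m) = Finv F n m := by
  obtain ⟨j, rfl⟩ := Nat.exists_eq_add_of_le hnk
  rw [conjApprox, add_comm n j, iterate_add_apply, iterate_Finv_s5 hG.bijective.2,
    iterate_intCast hG.map_add_one hG.map_zero, add_comm j n, hF.Finv_intCast_mul_pow]

/-- `Gᵏ x` lies between `dᵏ⁻ⁿ ⌊Gⁿ x⌋` and `dᵏ⁻ⁿ (⌊Gⁿ x⌋ + 1)`, which `F⁻ᵏ` maps to the level-`n`
Markov points of `F`. -/
theorem conjApprox_mem_Icc (hF : IsLiftOfDegree d F) (hG : IsLiftOfDegree d G) {n k : ℕ}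
    (hnk : n ≤ k) (x : ℝ) :
    conjApprox F G k x ∈ Set.Icc (Finv F n ⌊G^[n] x⌋) (Finv F n (⌊G^[n] x⌋ + 1)) := by
  obtain ⟨j, rfl⟩ := Nat.exists_eq_add_of_le hnk
  have hGk : G^[n + j] x = G^[j] (G^[n] x) := by rw [add_comm, iterate_add_apply]
  have hGj := fun m : ℤ => iterate_intCast hG.map_add_one hG.map_zero j m
  have hlo : (⌊G^[n] x⌋ : ℝ) * (d : ℝ) ^ j ≤ G^[n + j] x := by
    rw [hGk, ← hGj]
    exact (hG.strictMono.iterate j).monotone (Int.floor_le _)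
  have hhi : G^[n + j] x ≤ ((⌊G^[n] x⌋ + 1 : ℤ) : ℝ) * (d : ℝ) ^ j := by
    rw [hGk, ← hGj]
    exact (hG.strictMono.iterate j).monotone (by push_cast; exact (Int.lt_floor_add_one _).le)
  have hmono := (Finv_strictMono hF.strictMono hF.bijective.2 (n + j)).monotone
  constructor
  · rw [conjApprox, ← hF.Finv_intCast_mul_pow]
    exact hmono hlo
  · have := hmono hhi
    rwa [hF.Finv_intCast_mul_pow, Int.cast_add, Int.cast_one] at this

theorem tendsto_conjApprox (hF : IsLiftOfDegree d F) (hG : IsLiftOfDegree d G)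
    (hmesh : HasFineMarkovPartitions F) (x : ℝ) :
    Tendsto (conjApprox F G · x) atTop (𝓝 (conjLimit F G x)) := by
  refine tendsto_nhds_limUnder (cauchySeq_tendsto_of_complete ?_)
  refine Metric.cauchySeq_iff'.2 fun ε hε => ?_
  obtain ⟨N, hN⟩ := hmesh ε hε
  exact ⟨N, fun k hk => (Real.dist_le_of_mem_Icc (conjApprox_mem_Icc hF hG hk x)
    (conjApprox_mem_Icc hF hG le_rfl x)).trans_lt (hN _)⟩

theorem conjLimit_mem_Icc (hF : IsLiftOfDegree d F) (hG : IsLiftOfDegree d G)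
    (hmesh : HasFineMarkovPartitions F) (n : ℕ) (x : ℝ) :
    conjLimit F G x ∈ Set.Icc (Finv F n ⌊G^[n] x⌋) (Finv F n (⌊G^[n] x⌋ + 1)) :=
  isClosed_Icc.mem_of_tendsto (tendsto_conjApprox hF hG hmesh x)
    (eventually_atTop.2 ⟨n, fun _ hk => conjApprox_mem_Icc hF hG hk x⟩)

theorem tendstoUniformly_conjApprox (hF : IsLiftOfDegree d F) (hG : IsLiftOfDegree d G)
    (hmesh : HasFineMarkovPartitions F) :
    TendstoUniformly (conjApprox F G) (conjLimit F G) atTop := by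
  refine Metric.tendstoUniformly_iff.2 fun ε hε => ?_
  obtain ⟨N, hN⟩ := hmesh ε hε
  exact eventually_atTop.2 ⟨N, fun k hk x => (Real.dist_le_of_mem_Icc
    (conjLimit_mem_Icc hF hG hmesh N x) (conjApprox_mem_Icc hF hG hk x)).trans_lt (hN _)⟩

theorem continuous_conjLimit (hF : IsLiftOfDegree d F) (hG : IsLiftOfDegree d G)
    (hmesh : HasFineMarkovPartitions F) :
    Continuous (conjLimit F G) :=
  (tendstoUniformly_conjApprox hF hG hmesh).continuous
    (Frequently.of_forall (continuous_conjApprox hF hG))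

theorem monotone_conjLimit (hF : IsLiftOfDegree d F) (hG : IsLiftOfDegree d G)
    (hmesh : HasFineMarkovPartitions F) :
    Monotone (conjLimit F G) := fun x y hxy =>
  le_of_tendsto_of_tendsto' (tendsto_conjApprox hF hG hmesh x) (tendsto_conjApprox hF hG hmesh y)
    fun n => monotone_conjApprox hF hG n hxy

theorem conjLimit_add_one (hF : IsLiftOfDegree d F) (hG : IsLiftOfDegree d G)
    (hmesh : HasFineMarkovPartitions F) (x : ℝ) :
    conjLimit F G (x + 1) = conjLimit F G x + 1 :=
  tendsto_nhds_unique (tendsto_conjApprox hF hG hmesh (x + 1)) <| by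
    simpa only [conjApprox_add_one hF hG] using (tendsto_conjApprox hF hG hmesh x).add_const 1

theorem map_conjLimit (hF : IsLiftOfDegree d F) (hG : IsLiftOfDegree d G)
    (hmesh : HasFineMarkovPartitions F) (x : ℝ) :
    F (conjLimit F G x) = conjLimit F G (G x) := by
  have h := (hF.continuous.tendsto _).comp
    ((tendsto_conjApprox hF hG hmesh x).comp (tendsto_add_atTop_nat 1))
  simp only [Function.comp_def, map_conjApprox_succ hF] at h
  exact tendsto_nhds_unique h (tendsto_conjApprox hF hG hmesh (G x))

theorem conjLimit_Finv (hF : IsLiftOfDegree d F) (hG : IsLiftOfDegree d G)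
    (hmesh : HasFineMarkovPartitions F) (n : ℕ) (m : ℤ) :
    conjLimit F G (Finv G n m) = Finv F n m :=
  tendsto_nhds_unique (tendsto_conjApprox hF hG hmesh _) <| tendsto_const_nhds.congr' <|
    eventually_atTop.2 ⟨n, fun _ hk => (conjApprox_Finv hF hG hk m).symm⟩

theorem HasFineMarkovPartitions.exists_Finv_mem_Ioo (hG : IsLiftOfDegree d G)
    (hmesh : HasFineMarkovPartitions G) {x y : ℝ} (hxy : x < y) :
    ∃ n, ∃ m : ℤ, x < Finv G n m ∧ Finv G n (m + 1) < y := by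
  obtain ⟨n, hn⟩ := hmesh ((y - x) / 2) (by linarith)
  have hmono := Finv_strictMono hG.strictMono hG.bijective.2 n
  set m := ⌊G^[n] x⌋
  have hlo : Finv G n m ≤ x := by
    simpa only [Finv_iterate_s5 hG.bijective.1] using hmono.monotone (Int.floor_le (G^[n] x))
  have hhi : x < Finv G n (m + 1) := by
    simpa only [Finv_iterate_s5 hG.bijective.1] using hmono (Int.lt_floor_add_one (G^[n] x))
  refine ⟨n, m + 1, by exact_mod_cast hhi, ?_⟩
  have h0 := hn m
  have h1 := hn (m + 1)
  push_cast at h1 ⊢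
  linarith

theorem strictMono_conjLimit (hF : IsLiftOfDegree d F) (hG : IsLiftOfDegree d G)
    (hmeshF : HasFineMarkovPartitions F) (hmeshG : HasFineMarkovPartitions G) :
    StrictMono (conjLimit F G) := by
  intro x y hxy
  obtain ⟨n, m, hx, hy⟩ := hmeshG.exists_Finv_mem_Ioo hG hxy
  have hmono := monotone_conjLimit hF hG hmeshF
  have hm1 := conjLimit_Finv hF hG hmeshF n (m + 1)
  push_cast at hm1
  calc conjLimit F G x ≤ conjLimit F G (Finv G n m) := hmono hx.le
    _ = Finv F n m := conjLimit_Finv hF hG hmeshF n m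
    _ < Finv F n (m + 1) := Finv_strictMono hF.strictMono hF.bijective.2 n (lt_add_one _)
    _ = conjLimit F G (Finv G n (m + 1)) := hm1.symm
    _ ≤ conjLimit F G y := hmono hy.le

theorem surjective_conjLimit (hF : IsLiftOfDegree d F) (hG : IsLiftOfDegree d G)
    (hmesh : HasFineMarkovPartitions F) : Surjective (conjLimit F G) :=
  (CircleDeg1Lift.mk ⟨conjLimit F G, monotone_conjLimit hF hG hmesh⟩
    (conjLimit_add_one hF hG hmesh)).continuous_iff_surjective.1
    (continuous_conjLimit hF hG hmesh)

end Conjugacy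

theorem stmt_5_general (dF dG : ℕ) (F G : ℝ → ℝ)
    (hFmono : StrictMono F) (hFbij : Function.Bijective F)
    (hFdeg : ∀ x : ℝ, F (x + 1) = F x + dF) (hF0 : F 0 = 0)
    (hGmono : StrictMono G) (hGbij : Function.Bijective G)
    (hGdeg : ∀ x : ℝ, G (x + 1) = G x + dG) (hG0 : G 0 = 0)
    (hιF : ∀ ε : ℝ, 0 < ε → ∃ N : ℕ, ∀ n ≥ N, ∀ m : ℕ, m < dF ^ n →
      Finv F n ((m : ℝ) + 1) - Finv F n (m : ℝ) < ε)
    (hιG : ∀ ε : ℝ, 0 < ε → ∃ N : ℕ, ∀ n ≥ N, ∀ m : ℕ, m < dG ^ n →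
      Finv G n ((m : ℝ) + 1) - Finv G n (m : ℝ) < ε) :
    (∃ H : ℝ → ℝ, StrictMono H ∧ Function.Bijective H ∧
      (∀ x : ℝ, H (x + 1) = H x + 1) ∧ ∀ x : ℝ, F (H x) = H (G x)) ↔ dF = dG := by
  refine ⟨fun ⟨H, _, _, hH, hconj⟩ => eq_of_semiconj_of_map_add_one hFdeg hGdeg hG0 hH hconj, ?_⟩
  rintro rfl
  have hF : IsLiftOfDegree dF F := ⟨hFmono, hFbij, hFdeg, hF0⟩
  have hG : IsLiftOfDegree dF G := ⟨hGmono, hGbij, hGdeg, hG0⟩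
  have hmeshF := hF.hasFineMarkovPartitions_of_mesh_tendsto_zero hιF
  have hmeshG := hG.hasFineMarkovPartitions_of_mesh_tendsto_zero hιG
  have hH := strictMono_conjLimit hF hG hmeshF hmeshG
  exact ⟨conjLimit F G, hH, ⟨hH.injective, surjective_conjLimit hF hG hmeshF⟩,
    conjLimit_add_one hF hG hmeshF, map_conjLimit hF hG hmeshF⟩

/-- two circle endomorphisms whose Markov partitions have mesh
tending to zero are topologically conjugate if and only if their degrees
agree. -/
theorem stmt_5 (dF dG : ℕ) (hdF : 2 ≤ dF) (hdG : 2 ≤ dG) (F G : ℝ → ℝ)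
    (hFmono : StrictMono F) (hFbij : Function.Bijective F)
    (hFdeg : ∀ x : ℝ, F (x + 1) = F x + dF) (hF0 : F 0 = 0)
    (hGmono : StrictMono G) (hGbij : Function.Bijective G)
    (hGdeg : ∀ x : ℝ, G (x + 1) = G x + dG) (hG0 : G 0 = 0)
    (hιF : ∀ ε : ℝ, 0 < ε → ∃ N : ℕ, ∀ n ≥ N, ∀ m : ℕ, m < dF ^ n →
      Finv F n ((m : ℝ) + 1) - Finv F n (m : ℝ) < ε)
    (hιG : ∀ ε : ℝ, 0 < ε → ∃ N : ℕ, ∀ n ≥ N, ∀ m : ℕ, m < dG ^ n →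
      Finv G n ((m : ℝ) + 1) - Finv G n (m : ℝ) < ε) :
    (∃ H : ℝ → ℝ, StrictMono H ∧ Function.Bijective H ∧
      (∀ x : ℝ, H (x + 1) = H x + 1) ∧ ∀ x : ℝ, F (H x) = H (G x)) ↔ dF = dG :=
  stmt_5_general dF dG F G hFmono hFbij hFdeg hF0 hGmono hGbij hGdeg hG0 hιF hιG
end

section
/- Let d ≥ 2 and let F, G : ℝ → ℝ be increasing homeomorphisms with F(x+1) = F(x) + d, G(x+1) = G(x) + d for all x and F(0) = G(0) = 0, and suppose both F and G are uniformly symmetric. Then there exists an increasing homeomorphism H : ℝ → ℝ with H(x+1) = H(x) + 1 and F ∘ H = H ∘ G, and moreover H is quasisymmetric: there exists M ≥ 1 such that M⁻¹ ≤ (H(x+t) − H(x))/(H(x) − H(x−t)) ≤ M for all x ∈ ℝ and t > 0. -/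
open Filter

/-!
The points `F⁻ⁿ(m)`, `m ∈ ℤ`, cut `ℝ` into the level-`n` cells of `F`, and each cell is the
union of its `d` children at level `n + 1`. Uniform symmetry makes all inverse iterates `F⁻ⁿ`
quasisymmetric with one constant `K`, so these partitions have bounded geometry: adjacent cells
have comparable lengths, each cell is comparable to each of its children, and hence lengths
shrink geometrically with the level.

The conjugacy is the monotone map sending `G⁻ⁿ(m)` to `F⁻ⁿ(m)`. Partition points are dense, so
it is a homeomorphism, and it commutes with `x ↦ x + 1` and conjugates `G` to `F` because it does
so on partition points. For quasisymmetry at a scale `t < 1`, take the level `n` at which the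
cell of `x` first becomes small compared to `t`: then `[x - t, x]` contains a whole level-`n + 1`
cell of `G`, while `[x, x + t]` is covered by boundedly many level-`n` cells, and bounded geometry
of the `F`-partition compares the images. The reverse inequality is the same statement for the
maps conjugated by `x ↦ -x`.
-/

theorem exists_lt_and_succ_le {α : Type*} [LinearOrder α] {u : ℕ → α} {t : α} (h₀ : t < u 0)
    (hN : ∃ N, u N ≤ t) : ∃ n, t < u n ∧ u (n + 1) ≤ t := by
  by_contra! h
  obtain ⟨N, hN⟩ := hN
  exact (Nat.rec h₀ (fun n ih => h n ih) N : t < u N).not_ge hN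

theorem sub_le_two_mul_sub_of_one_le {h : ℝ → ℝ} (hmono : Monotone h)
    (hper : ∀ x, h (x + 1) = h x + 1) {x t : ℝ} (ht : 1 ≤ t) :
    h (x + t) - h x ≤ 2 * (h x - h (x - t)) := by
  have hadd : ∀ y (r : ℕ), h (y + r) = h y + r := (⟨⟨h, hmono⟩, hper⟩ : CircleDeg1Lift).map_add_nat
  have h₁ := hmono (show x + t ≤ x + (⌊t⌋₊ + 1 : ℕ) by push_cast; linarith [Nat.lt_floor_add_one t])
  have h₂ := hmono (show x - t + ⌊t⌋₊ ≤ x by linarith [Nat.floor_le (zero_le_one.trans ht)])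
  have : (1 : ℝ) ≤ ⌊t⌋₊ := by exact_mod_cast Nat.le_floor (by exact_mod_cast ht)
  rw [hadd] at h₁ h₂
  push_cast at h₁
  linarith

namespace CircleLift

structure IsLift (d : ℕ) (E : ℝ → ℝ) : Prop where
  strictMono : StrictMono E
  bijective : Function.Bijective E
  map_add_one : ∀ x, E (x + 1) = E x + d
  map_zero : E 0 = 0

def reflect (E : ℝ → ℝ) (x : ℝ) : ℝ := -E (-x)

noncomputable def pt (E : ℝ → ℝ) (n : ℕ) (m : ℤ) : ℝ := Finv E n m

noncomputable def len (E : ℝ → ℝ) (n : ℕ) (m : ℤ) : ℝ := pt E n (m + 1) - pt E n m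

variable {d : ℕ} {E F G h : ℝ → ℝ} {K : ℝ}

theorem Finv_zero : Finv E 0 = id := by
  funext y
  exact Function.invFun_eq (f := (id : ℝ → ℝ)) ⟨y, rfl⟩

theorem iterate_reflect (n : ℕ) : (reflect E)^[n] = reflect (E^[n]) := by
  induction n with
  | zero => funext x; simp [reflect]
  | succ n ih => funext x; simp [ih, reflect]

theorem pt_zero (m : ℤ) : pt E 0 m = m := by simp [pt, Finv_zero]

theorem len_zero (m : ℤ) : len E 0 m = 1 := by simp [len, pt_zero]

theorem pt_add_sub_eq_sum (n : ℕ) (m : ℤ) (j : ℕ) :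
    pt E n (m + j) - pt E n m = ∑ i ∈ Finset.range j, len E n (m + i) := by
  have := Finset.sum_range_sub (fun i : ℕ => pt E n (m + i)) j
  simp only [Nat.cast_add, Nat.cast_one, Nat.cast_zero, add_zero, ← add_assoc] at this
  simpa [len] using this.symm

namespace IsLift

variable (hE : IsLift d E)
include hE

theorem iterate_bijective (n : ℕ) : Function.Bijective E^[n] := hE.bijective.iterate n

theorem iterate_Finv (n : ℕ) (y : ℝ) : E^[n] (Finv E n y) = y :=
  Function.invFun_eq ((hE.iterate_bijective n).surjective y)

theorem Finv_iterate (n : ℕ) (x : ℝ) : Finv E n (E^[n] x) = x :=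
  Function.leftInverse_invFun (hE.iterate_bijective n).injective x

theorem Finv_strictMono (n : ℕ) : StrictMono (Finv E n) := fun a b hab =>
  (hE.strictMono.iterate n).lt_iff_lt.1 (by rwa [hE.iterate_Finv, hE.iterate_Finv])

theorem degree_pos : 0 < d := by
  have := hE.strictMono (lt_add_one 0)
  rw [hE.map_add_one, hE.map_zero, zero_add] at this
  exact_mod_cast this

theorem map_add_int (x : ℝ) (m : ℤ) : E (x + m) = E x + m * d := by
  induction m using Int.induction_on with
  | zero => simp
  | succ k ih =>
    have := hE.map_add_one (x + k)
    push_cast at ih ⊢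
    rw [← add_assoc, this, ih]; ring
  | pred k ih =>
    have := hE.map_add_one (x + (-k - 1))
    push_cast at ih ⊢
    rw [add_assoc, sub_add_cancel, ih] at this
    linarith

theorem map_intCast (m : ℤ) : E m = m * d := by
  simpa [hE.map_zero] using hE.map_add_int 0 m

theorem iterate_add_int (n : ℕ) (x : ℝ) (m : ℤ) :
    E^[n] (x + m) = E^[n] x + m * (d : ℝ) ^ n := by
  induction n generalizing m with
  | zero => simp
  | succ n ih =>
    have := hE.map_add_int (E^[n] x) (m * (d : ℤ) ^ n)
    push_cast at this
    rw [Function.iterate_succ_apply', Function.iterate_succ_apply', ih, this]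
    ring

theorem floor_map_mem (y : ℝ) : d * ⌊y⌋ ≤ ⌊E y⌋ ∧ ⌊E y⌋ < d * ⌊y⌋ + d := by
  rw [Int.le_floor, Int.floor_lt]
  have h₁ := hE.strictMono.monotone (Int.floor_le y)
  have h₂ := hE.strictMono (Int.lt_floor_add_one y)
  rw [← Int.cast_one, ← Int.cast_add, hE.map_intCast] at h₂
  rw [hE.map_intCast] at h₁
  push_cast at h₁ h₂ ⊢
  constructor <;> linarith

theorem continuous : Continuous E :=
  hE.strictMono.monotone.continuous_of_surjective hE.bijective.surjective

theorem pt_strictMono (n : ℕ) : StrictMono (pt E n) :=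
  (hE.Finv_strictMono n).comp Int.cast_strictMono

theorem len_pos (n : ℕ) (m : ℤ) : 0 < len E n m :=
  sub_pos.2 (hE.pt_strictMono n (lt_add_one m))

theorem pt_succ_mul (n : ℕ) (m : ℤ) : pt E (n + 1) (d * m) = pt E n m :=
  (hE.iterate_bijective (n + 1)).injective <| by
    rw [pt, pt, hE.iterate_Finv, Function.iterate_succ_apply', hE.iterate_Finv, hE.map_intCast]
    push_cast; ring

theorem pt_pow_mul (n k : ℕ) (m : ℤ) : pt E (n + k) (d ^ k * m) = pt E n m := by
  induction k with
  | zero => simp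
  | succ k ih => rw [← add_assoc, pow_succ', mul_assoc, hE.pt_succ_mul, ih]

theorem pt_le_pt_iff {n n' : ℕ} {a b : ℤ} :
    pt E n a ≤ pt E n' b ↔ d ^ n' * a ≤ d ^ n * b := by
  rw [← hE.pt_pow_mul n n' a, ← hE.pt_pow_mul n' n b, add_comm n' n]
  exact (hE.pt_strictMono _).le_iff_le

theorem pt_add_pow (n : ℕ) (m : ℤ) : pt E n (m + d ^ n) = pt E n m + 1 :=
  (hE.iterate_bijective n).injective <| by
    have := hE.iterate_add_int n (pt E n m) 1
    rw [Int.cast_one, one_mul] at this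
    rw [this, pt, pt, hE.iterate_Finv, hE.iterate_Finv]
    push_cast; ring

theorem map_pt_succ (n : ℕ) (m : ℤ) : E (pt E (n + 1) m) = pt E n m :=
  (hE.iterate_bijective n).injective <| by
    rw [← Function.iterate_succ_apply E n, pt, pt, hE.iterate_Finv, hE.iterate_Finv]

theorem pt_floor_le (n : ℕ) (x : ℝ) : pt E n ⌊E^[n] x⌋ ≤ x := by
  simpa [pt, hE.Finv_iterate] using
    (hE.Finv_strictMono n).monotone (Int.floor_le (E^[n] x))

theorem lt_pt_floor_add_one (n : ℕ) (x : ℝ) : x < pt E n (⌊E^[n] x⌋ + 1) := by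
  simpa [pt, hE.Finv_iterate] using hE.Finv_strictMono n (Int.lt_floor_add_one (E^[n] x))

theorem len_eq_sum_len_succ (n : ℕ) (m : ℤ) :
    len E n m = ∑ i ∈ Finset.range d, len E (n + 1) (d * m + i) := by
  rw [← pt_add_sub_eq_sum, hE.pt_succ_mul, ← mul_add_one, hE.pt_succ_mul, len]

theorem len_add_len_le {n : ℕ} {m a b : ℤ} (ha : d * m ≤ a) (hab : a < b) (hb : b < d * m + d) :
    len E (n + 1) a + len E (n + 1) b ≤ len E n m := by
  have hmono := (hE.pt_strictMono (n + 1)).monotone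
  have h₁ := hmono ha
  have h₂ := hmono (show a + 1 ≤ b by omega)
  have h₃ := hmono (show b + 1 ≤ d * (m + 1) by linarith)
  rw [hE.pt_succ_mul] at h₁ h₃
  simp only [len]
  linarith

theorem reflect : IsLift d (reflect E) where
  strictMono _ _ h := neg_lt_neg (hE.strictMono (neg_lt_neg h))
  bijective := (Equiv.neg ℝ).bijective.comp (hE.bijective.comp (Equiv.neg ℝ).bijective)
  map_add_one x := by
    have := hE.map_add_one (-(x + 1))
    simp only [CircleLift.reflect]
    rw [show -(x + 1) + 1 = -x by ring] at this
    linarith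
  map_zero := by simp [CircleLift.reflect, hE.map_zero]

theorem Finv_reflect (n : ℕ) (y : ℝ) : Finv (CircleLift.reflect E) n y = -Finv E n (-y) := by
  apply ((hE.reflect).iterate_bijective n).injective
  rw [(hE.reflect).iterate_Finv, iterate_reflect]
  simp only [CircleLift.reflect, neg_neg, hE.iterate_Finv]

theorem pt_reflect (n : ℕ) (m : ℤ) : pt (CircleLift.reflect E) n m = -pt E n (-m) := by
  simp [pt, hE.Finv_reflect]

end IsLift

def InvIterQuasisymm (K : ℝ) (E : ℝ → ℝ) : Prop :=
  ∀ (n : ℕ) (x t : ℝ), 0 < t →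
    Finv E n x - Finv E n (x - t) ≤ K * (Finv E n (x + t) - Finv E n x) ∧
    Finv E n (x + t) - Finv E n x ≤ K * (Finv E n x - Finv E n (x - t))

namespace InvIterQuasisymm

theorem one_le (hK : InvIterQuasisymm K E) : 1 ≤ K := by
  simpa [Finv_zero] using (hK 0 0 1 one_pos).1

theorem mono (hE : IsLift d E) (hK : InvIterQuasisymm K E) {K' : ℝ} (hKK' : K ≤ K') :
    InvIterQuasisymm K' E := by
  intro n x t ht
  have hl := sub_pos.2 (hE.Finv_strictMono n (sub_lt_self x ht))
  have hr := sub_pos.2 (hE.Finv_strictMono n (lt_add_of_pos_right x ht))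
  obtain ⟨h₁, h₂⟩ := hK n x t ht
  exact ⟨h₁.trans (by gcongr), h₂.trans (by gcongr)⟩

theorem reflect (hE : IsLift d E) (hK : InvIterQuasisymm K E) :
    InvIterQuasisymm K (reflect E) := by
  intro n x t ht
  simp only [hE.Finv_reflect, neg_sub, neg_add', sub_neg_eq_add]
  obtain ⟨h₁, h₂⟩ := hK n (-x) t ht
  rw [neg_add_eq_sub] at h₁ h₂
  constructor <;> linarith

variable (hK : InvIterQuasisymm K E)
include hK

theorem len_succ_le (n : ℕ) (m : ℤ) : len E n (m + 1) ≤ K * len E n m := by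
  have := (hK n (m + 1 : ℤ) 1 one_pos).2
  push_cast at this
  simpa [len, pt, add_assoc, one_add_one_eq_two] using this

theorem len_le_mul_len_succ (n : ℕ) (m : ℤ) : len E n m ≤ K * len E n (m + 1) := by
  have := (hK n (m + 1 : ℤ) 1 one_pos).1
  push_cast at this
  simpa [len, pt, add_assoc, one_add_one_eq_two] using this

theorem pow_mul_len_le (n : ℕ) (m : ℤ) (i : ℕ) :
    (1 + K⁻¹) ^ i * len E n m ≤ pt E n (m + 2 ^ i) - pt E n m := by
  have hK₀ : 0 < K := zero_lt_one.trans_le hK.one_le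
  induction i with
  | zero => simp [len]
  | succ i ih =>
    have h := (hK n (m + 2 ^ i : ℤ) (2 ^ i) (by positivity)).1
    push_cast at h
    rw [add_sub_cancel_right, add_assoc, ← two_mul, ← pow_succ'] at h
    have h' : K⁻¹ * (pt E n (m + 2 ^ i) - pt E n m) ≤
        pt E n (m + 2 ^ (i + 1)) - pt E n (m + 2 ^ i) := by
      rw [inv_mul_le_iff₀ hK₀]
      simpa [pt] using h
    calc (1 + K⁻¹) ^ (i + 1) * len E n m
        = (1 + K⁻¹) * ((1 + K⁻¹) ^ i * len E n m) := by ring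
      _ ≤ (1 + K⁻¹) * (pt E n (m + 2 ^ i) - pt E n m) := by gcongr
      _ ≤ pt E n (m + 2 ^ (i + 1)) - pt E n m := by linarith

theorem len_le_pow_natAbs (n : ℕ) (a b : ℤ) :
    len E n a ≤ K ^ (a - b).natAbs * len E n b := by
  have hK₀ : 0 ≤ K := zero_le_one.trans hK.one_le
  have hrun : ∀ (c : ℤ) (j : ℕ),
      len E n (c + j) ≤ K ^ j * len E n c ∧ len E n c ≤ K ^ j * len E n (c + j) := by
    intro c j
    induction j with
    | zero => simp
    | succ j ih =>
      rw [Nat.cast_succ, ← add_assoc, pow_succ', mul_assoc, mul_assoc]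
      exact ⟨(hK.len_succ_le n _).trans (mul_le_mul_of_nonneg_left ih.1 hK₀),
        ih.2.trans (by
          rw [mul_left_comm]
          exact mul_le_mul_of_nonneg_left (hK.len_le_mul_len_succ n _) (by positivity))⟩
  rcases Int.natAbs_eq (a - b) with h | h
  · simpa [← h] using (hrun b (a - b).natAbs).1
  · have hb : b = a + (a - b).natAbs := by omega
    have := (hrun a (a - b).natAbs).2
    rwa [← hb] at this

end InvIterQuasisymm

theorem IsLift.exists_invIterQuasisymm (hE : IsLift d E) (hus : UnifSymm E) :
    ∃ K, InvIterQuasisymm K E := by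
  obtain ⟨ε, hε, ⟨B, hB⟩, -, hsymm⟩ := hus
  refine ⟨1 + B, fun n x t ht => ?_⟩
  have hB₀ : 0 ≤ B := (hε 1 one_pos).le.trans (hB 1 one_pos)
  rcases Nat.eq_zero_or_pos n with rfl | hn
  · simp only [Finv_zero, id, add_sub_cancel_left, sub_sub_cancel]
    constructor <;> nlinarith
  have hl := sub_pos.2 (hE.Finv_strictMono n (sub_lt_self x ht))
  have hr := sub_pos.2 (hE.Finv_strictMono n (lt_add_of_pos_right x ht))
  have hεt : 1 + ε t ≤ 1 + B := by linarith [hB t ht]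
  obtain ⟨h₁, h₂⟩ := hsymm x t ht n hn
  rw [div_le_div_iff₀ (by linarith [hε t ht]) hl] at h₁
  rw [div_le_iff₀ hl] at h₂
  constructor <;> nlinarith

namespace IsLift

variable (hE : IsLift d E) (hK : InvIterQuasisymm K E)
include hE hK

theorem sum_len_le_card_mul {ι : Type*} {n : ℕ} {s : Finset ι} {f : ι → ℤ} {b : ℤ} {r : ℕ}
    (hs : ∀ i ∈ s, (f i - b).natAbs ≤ r) :
    ∑ i ∈ s, len E n (f i) ≤ s.card * K ^ r * len E n b := by
  rw [mul_assoc, ← nsmul_eq_mul]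
  refine Finset.sum_le_card_nsmul _ _ _ fun i hi => (hK.len_le_pow_natAbs n (f i) b).trans ?_
  gcongr
  · exact (hE.len_pos n b).le
  · exact hK.one_le
  · exact hs i hi

theorem pt_add_sub_le (n : ℕ) (m : ℤ) (j : ℕ) :
    pt E n (m + j) - pt E n m ≤ j * K ^ j * len E n m := by
  rw [pt_add_sub_eq_sum]
  simpa using hE.sum_len_le_card_mul hK (s := Finset.range j) (f := fun i => m + i) (b := m)
    (r := j) (by simp; omega)

theorem len_le_mul_len_child {n : ℕ} {m c : ℤ} (h₁ : d * m ≤ c) (h₂ : c < d * m + d) :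
    len E n m ≤ d * K ^ (d - 1) * len E (n + 1) c := by
  rw [hE.len_eq_sum_len_succ]
  simpa using hE.sum_len_le_card_mul hK (s := Finset.range d) (f := fun i => d * m + i)
    (b := c) (r := d - 1) (by simp; omega)

theorem len_child_le (hd : 2 ≤ d) {n : ℕ} {m c : ℤ} (h₁ : d * m ≤ c) (h₂ : c < d * m + d) :
    len E (n + 1) c ≤ (1 - (d * K ^ (d - 1))⁻¹) * len E n m := by
  obtain ⟨c', hsum, h₁', h₂'⟩ : ∃ c', len E (n + 1) c + len E (n + 1) c' ≤ len E n m ∧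
      d * m ≤ c' ∧ c' < d * m + d := by
    by_cases hc : c = d * m
    · exact ⟨c + 1, hE.len_add_len_le h₁ (lt_add_one c) (by omega), by omega, by omega⟩
    · exact ⟨d * m, by rw [add_comm]; exact hE.len_add_len_le le_rfl (by omega) h₂, le_rfl,
        by omega⟩
  have hL : 0 < (d : ℝ) * K ^ (d - 1) := by
    have := hK.one_le; have := hE.degree_pos; positivity
  have hc' : len E n m / (d * K ^ (d - 1)) ≤ len E (n + 1) c' := by
    rw [div_le_iff₀' hL]; exact hE.len_le_mul_len_child hK h₁' h₂'
  calc len E (n + 1) c ≤ len E n m - len E n m / (d * K ^ (d - 1)) := by linarith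
    _ = (1 - (d * K ^ (d - 1))⁻¹) * len E n m := by ring

theorem len_le_pow (hd : 2 ≤ d) (n : ℕ) (m : ℤ) :
    len E n m ≤ (1 - (d * K ^ (d - 1))⁻¹) ^ n := by
  have hθ : 0 ≤ 1 - ((d : ℝ) * K ^ (d - 1))⁻¹ :=
    sub_nonneg.2 (inv_le_one_of_one_le₀ (one_le_mul_of_one_le_of_one_le
      (by norm_cast; omega) (one_le_pow₀ hK.one_le)))
  induction n generalizing m with
  | zero => simp [len_zero]
  | succ n ih =>
    have hd₀ : (0 : ℤ) < d := by omega
    have := Int.mul_ediv_add_emod m d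
    have := Int.emod_nonneg m hd₀.ne'
    have := Int.emod_lt_of_pos m hd₀
    calc len E (n + 1) m ≤ (1 - (d * K ^ (d - 1))⁻¹) * len E n (m / d) :=
          hE.len_child_le hK hd (by omega) (by omega)
      _ ≤ (1 - (d * K ^ (d - 1))⁻¹) * (1 - (d * K ^ (d - 1))⁻¹) ^ n := by gcongr; exact ih _
      _ = (1 - (d * K ^ (d - 1))⁻¹) ^ (n + 1) := (pow_succ' _ _).symm

theorem exists_forall_len_le (hd : 2 ≤ d) {δ : ℝ} (hδ : 0 < δ) : ∃ n, ∀ m, len E n m ≤ δ := by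
  have hL : 0 < (d : ℝ) * K ^ (d - 1) := by
    have := hK.one_le; have := hE.degree_pos; positivity
  obtain ⟨n, hn⟩ := exists_pow_lt_of_lt_one hδ (sub_lt_self 1 (inv_pos.2 hL))
  exact ⟨n, fun m => (hE.len_le_pow hK hd n m).trans hn.le⟩

theorem exists_pt_mem_Ioo (hd : 2 ≤ d) {x y : ℝ} (hxy : x < y) :
    ∃ n a, x < pt E n a ∧ pt E n (a + 1) < y := by
  obtain ⟨n, hn⟩ := hE.exists_forall_len_le hK hd (show 0 < (y - x) / 3 by linarith)
  refine ⟨n, ⌊E^[n] x⌋ + 1, hE.lt_pt_floor_add_one n x, ?_⟩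
  have h₁ := hn ⌊E^[n] x⌋
  have h₂ := hn (⌊E^[n] x⌋ + 1)
  have := hE.pt_floor_le n x
  simp only [len] at h₁ h₂
  linarith

theorem dense_range_pt (hd : 2 ≤ d) :
    Dense (Set.range fun p : ℕ × ℤ => pt E p.1 p.2) :=
  dense_of_exists_between fun _ _ hxy =>
    let ⟨n, a, ha, ha'⟩ := hE.exists_pt_mem_Ioo hK hd hxy
    ⟨_, ⟨(n, a), rfl⟩, ha, (hE.pt_strictMono n (lt_add_one a)).trans ha'⟩

end IsLift

noncomputable def conjugacy (F G : ℝ → ℝ) (x : ℝ) : ℝ :=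
  sSup {y | ∃ (n : ℕ) (m : ℤ), pt G n m ≤ x ∧ pt F n m = y}

section Conjugacy

variable (hF : IsLift d F) (hG : IsLift d G)
include hF hG

theorem pt_le_pt_iff_pt_le_pt {n n' : ℕ} {a b : ℤ} :
    pt G n a ≤ pt G n' b ↔ pt F n a ≤ pt F n' b := by
  rw [hF.pt_le_pt_iff, hG.pt_le_pt_iff]

theorem bddAbove_conjugacy_set (x : ℝ) :
    BddAbove {y | ∃ (n : ℕ) (m : ℤ), pt G n m ≤ x ∧ pt F n m = y} := by
  refine ⟨⌊x⌋ + 1, ?_⟩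
  rintro _ ⟨n, m, hm, rfl⟩
  have : pt G n m ≤ pt G 0 (⌊x⌋ + 1) := by
    rw [pt_zero]; push_cast; linarith [Int.lt_floor_add_one x]
  rw [pt_le_pt_iff_pt_le_pt hF hG, pt_zero] at this
  exact_mod_cast this

theorem conjugacy_pt (n : ℕ) (m : ℤ) : conjugacy F G (pt G n m) = pt F n m := by
  refine le_antisymm (csSup_le ⟨_, n, m, le_rfl, rfl⟩ ?_)
    (le_csSup (bddAbove_conjugacy_set hF hG _) ⟨n, m, le_rfl, rfl⟩)
  rintro _ ⟨n', m', h, rfl⟩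
  exact (pt_le_pt_iff_pt_le_pt hF hG).1 h

theorem conjugacy_intCast (m : ℤ) : conjugacy F G m = m := by
  simpa [pt_zero] using conjugacy_pt hF hG 0 m

theorem monotone_conjugacy : Monotone (conjugacy F G) := fun x x' hxx' =>
  csSup_le_csSup (bddAbove_conjugacy_set hF hG x')
    ⟨_, 0, ⌊x⌋, by simp [pt_zero, Int.floor_le], rfl⟩
    fun _ ⟨n, m, h, hy⟩ => ⟨n, m, h.trans hxx', hy⟩

variable (hd : 2 ≤ d)
include hd

theorem strictMono_conjugacy (hGK : InvIterQuasisymm K G) : StrictMono (conjugacy F G) := by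
  intro x y hxy
  obtain ⟨n, a, ha, ha'⟩ := hG.exists_pt_mem_Ioo hGK hd hxy
  have hmono := monotone_conjugacy hF hG
  calc conjugacy F G x ≤ conjugacy F G (pt G n a) := hmono ha.le
    _ = pt F n a := conjugacy_pt hF hG n a
    _ < pt F n (a + 1) := hF.pt_strictMono n (lt_add_one a)
    _ = conjugacy F G (pt G n (a + 1)) := (conjugacy_pt hF hG n _).symm
    _ ≤ conjugacy F G y := hmono ha'.le

theorem continuous_conjugacy (hFK : InvIterQuasisymm K F) : Continuous (conjugacy F G) :=
  (monotone_conjugacy hF hG).continuous_of_denseRange <| (hF.dense_range_pt hFK hd).mono <| by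
    rintro _ ⟨⟨n, m⟩, rfl⟩
    exact ⟨_, conjugacy_pt hF hG n m⟩

theorem surjective_conjugacy (hFK : InvIterQuasisymm K F) :
    Function.Surjective (conjugacy F G) := fun y => by
  have := intermediate_value_Icc (show (⌊y⌋ : ℝ) ≤ ((⌊y⌋ + 1 : ℤ) : ℝ) by push_cast; linarith)
    (continuous_conjugacy hF hG hd hFK).continuousOn
  rw [conjugacy_intCast hF hG, conjugacy_intCast hF hG] at this
  obtain ⟨x, -, hx⟩ := this ⟨Int.floor_le y, by push_cast; exact (Int.lt_floor_add_one y).le⟩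
  exact ⟨x, hx⟩

variable (hFK : InvIterQuasisymm K F) (hGK : InvIterQuasisymm K G)
include hFK hGK

theorem conjugacy_add_one (x : ℝ) : conjugacy F G (x + 1) = conjugacy F G x + 1 := by
  have hc := continuous_conjugacy hF hG hd hFK
  refine congrFun (Continuous.ext_on (hG.dense_range_pt hGK hd)
    (hc.comp (continuous_add_const 1)) (hc.add continuous_const) ?_) x
  rintro _ ⟨⟨n, m⟩, rfl⟩
  simp only [Function.comp_apply, Pi.add_apply]
  rw [← hG.pt_add_pow, conjugacy_pt hF hG, conjugacy_pt hF hG, hF.pt_add_pow]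

theorem map_conjugacy (x : ℝ) : F (conjugacy F G x) = conjugacy F G (G x) := by
  have hc := continuous_conjugacy hF hG hd hFK
  refine congrFun (Continuous.ext_on (hG.dense_range_pt hGK hd)
    (hF.continuous.comp hc) (hc.comp hG.continuous) ?_) x
  rintro _ ⟨⟨n, m⟩, rfl⟩
  simp only [Function.comp_apply]
  rw [← hG.pt_succ_mul, conjugacy_pt hF hG, hF.map_pt_succ, hG.map_pt_succ, conjugacy_pt hF hG]

end Conjugacy

section Quasisymmetry

variable (hF : IsLift d F) (hG : IsLift d G) (hFK : InvIterQuasisymm K F)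
  (hGK : InvIterQuasisymm K G) (hmono : Monotone h) (hpt : ∀ n m, h (pt G n m) = pt F n m)

include hG hFK hGK hmono hpt in
theorem len_le_mul_sub_sub {x t : ℝ} {n : ℕ} (hn : 2 * K * len G n ⌊G^[n] x⌋ ≤ t) :
    len F n ⌊G^[n] x⌋ ≤ K * (h x - h (x - t)) := by
  set c := ⌊G^[n] x⌋
  have hx₁ := hG.pt_floor_le n x
  have hx₂ := hG.lt_pt_floor_add_one n x
  have hGc := hGK.len_le_mul_len_succ n (c - 1)
  have hFc := hFK.len_succ_le n (c - 1)
  rw [sub_add_cancel] at hGc hFc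
  have := hG.len_pos n c
  have := hGK.one_le
  have hxt : x - t ≤ pt G n (c - 1) := by
    simp only [len, sub_add_cancel] at hGc hn
    nlinarith
  have h₁ := hpt n (c - 1) ▸ hmono hxt
  have h₂ := hpt n c ▸ hmono hx₁
  have : len F n (c - 1) ≤ h x - h (x - t) := by
    simp only [len, sub_add_cancel]; linarith
  exact hFc.trans (mul_le_mul_of_nonneg_left this (by linarith))

include hF hG hFK hGK hmono hpt in
theorem sub_le_mul_len {x t : ℝ} {n i : ℕ} (hi : 2 * K ^ 2 < (1 + K⁻¹) ^ i)
    (hn : t < 2 * K * len G n ⌊G^[n] x⌋) :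
    h (x + t) - h x ≤ (2 ^ i + 1 : ℕ) * K ^ (2 ^ i + 1) * len F n ⌊G^[n] x⌋ := by
  set m := ⌊G^[n] x⌋
  have hK₀ : 0 < K := zero_lt_one.trans_le hGK.one_le
  have hgrow : t < pt G n (m + 1 + 2 ^ i) - pt G n (m + 1) :=
    calc t < 2 * K * len G n m := hn
      _ ≤ 2 * K * (K * len G n (m + 1)) := by gcongr; exact hGK.len_le_mul_len_succ n m
      _ = 2 * K ^ 2 * len G n (m + 1) := by ring
      _ ≤ (1 + K⁻¹) ^ i * len G n (m + 1) := by gcongr; exact (hG.len_pos n _).le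
      _ ≤ _ := hGK.pow_mul_len_le n (m + 1) i
  have h₁ := hpt n _ ▸ hmono (show x + t ≤ pt G n (m + 1 + 2 ^ i) by
    linarith [hG.lt_pt_floor_add_one n x])
  have h₂ := hpt n m ▸ hmono (hG.pt_floor_le n x)
  have h₃ := hF.pt_add_sub_le hFK n m (2 ^ i + 1)
  rw [show m + ((2 ^ i + 1 : ℕ) : ℤ) = m + 1 + 2 ^ i by push_cast; ring] at h₃
  linarith

include hF hG hFK hGK hmono hpt

theorem exists_sub_le_mul_sub_of_lt_one (hd : 2 ≤ d) :
    ∃ M, ∀ x t, 0 < t → t < 1 → h (x + t) - h x ≤ M * (h x - h (x - t)) := by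
  have hK₁ := hGK.one_le
  have hK₀ : 0 < K := zero_lt_one.trans_le hK₁
  obtain ⟨i, hi⟩ := pow_unbounded_of_one_lt (2 * K ^ 2) (lt_add_of_pos_right 1 (inv_pos.2 hK₀))
  refine ⟨(2 ^ i + 1 : ℕ) * K ^ (2 ^ i + 1) * (d * K ^ (d - 1)) * K, fun x t ht ht₁ => ?_⟩
  -- `n` is the last level at which the `G`-cell of `x` is long compared with `t`.
  obtain ⟨n, hn, hn₁⟩ := exists_lt_and_succ_le (u := fun n => 2 * K * len G n ⌊G^[n] x⌋)
    (by simp only [len_zero]; linarith) <| by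
      obtain ⟨N, hN⟩ := hG.exists_forall_len_le hGK hd (show 0 < t / (2 * K) by positivity)
      refine ⟨N, ?_⟩
      have := hN ⌊G^[N] x⌋
      rw [le_div_iff₀' (by positivity)] at this
      exact this
  have hchild := hG.floor_map_mem (G^[n] x)
  rw [← Function.iterate_succ_apply' G n x] at hchild
  calc h (x + t) - h x ≤ (2 ^ i + 1 : ℕ) * K ^ (2 ^ i + 1) * len F n ⌊G^[n] x⌋ :=
        sub_le_mul_len hF hG hFK hGK hmono hpt hi hn
    _ ≤ (2 ^ i + 1 : ℕ) * K ^ (2 ^ i + 1) * (d * K ^ (d - 1) * len F (n + 1) ⌊G^[n + 1] x⌋) := by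
        gcongr; exact hF.len_le_mul_len_child hFK hchild.1 hchild.2
    _ ≤ (2 ^ i + 1 : ℕ) * K ^ (2 ^ i + 1) * (d * K ^ (d - 1) * (K * (h x - h (x - t)))) := by
        gcongr; exact len_le_mul_sub_sub hG hFK hGK hmono hpt hn₁
    _ = _ := by ring

theorem exists_sub_le_mul_sub (hd : 2 ≤ d) (hper : ∀ x, h (x + 1) = h x + 1) :
    ∃ M, ∀ x t, 0 < t → h (x + t) - h x ≤ M * (h x - h (x - t)) := by
  obtain ⟨M, hM⟩ := exists_sub_le_mul_sub_of_lt_one hF hG hFK hGK hmono hpt hd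
  refine ⟨max 2 M, fun x t ht => ?_⟩
  have hden : 0 ≤ h x - h (x - t) := sub_nonneg.2 (hmono (by linarith))
  rcases lt_or_ge t 1 with ht₁ | ht₁
  · exact (hM x t ht ht₁).trans (by gcongr; exact le_max_right _ _)
  · exact (sub_le_two_mul_sub_of_one_le hmono hper ht₁).trans (by gcongr; exact le_max_left _ _)

theorem exists_quasisymm (hd : 2 ≤ d) (hper : ∀ x, h (x + 1) = h x + 1) :
    ∃ M, ∀ x t, 0 < t →
      h (x + t) - h x ≤ M * (h x - h (x - t)) ∧ h x - h (x - t) ≤ M * (h (x + t) - h x) := by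
  obtain ⟨M₁, hM₁⟩ := exists_sub_le_mul_sub hF hG hFK hGK hmono hpt hd hper
  obtain ⟨M₂, hM₂⟩ := exists_sub_le_mul_sub hF.reflect hG.reflect (hFK.reflect hF)
    (hGK.reflect hG) (h := reflect h) (fun a b hab => neg_le_neg (hmono (neg_le_neg hab)))
    (fun n m => by simp [reflect, hF.pt_reflect, hG.pt_reflect, hpt]) hd
    (fun x => by
      have := hper (-x - 1)
      simp only [reflect, sub_add_cancel, show -(x + 1) = -x - 1 by ring] at this ⊢
      linarith)
  refine ⟨max M₁ M₂, fun x t ht => ⟨?_, ?_⟩⟩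
  · refine (hM₁ x t ht).trans (mul_le_mul_of_nonneg_right (le_max_left _ _) ?_)
    exact sub_nonneg.2 (hmono (by linarith))
  · have := hM₂ (-x) t ht
    simp only [reflect, show -(-x + t) = x - t by ring, show -(-x - t) = x + t by ring,
      neg_neg] at this
    refine (by linarith : h x - h (x - t) ≤ M₂ * (h (x + t) - h x)).trans
      (mul_le_mul_of_nonneg_right (le_max_right _ _) ?_)
    exact sub_nonneg.2 (hmono (by linarith))

end Quasisymmetry

end CircleLift

open CircleLift in
/-- any two uniformly symmetric circle endomorphisms of the same
degree are topologically conjugate, and the conjugacy is quasisymmetric. -/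
theorem stmt_7 (d : ℕ) (hd : 2 ≤ d) (F G : ℝ → ℝ)
    (hFmono : StrictMono F) (hFbij : Function.Bijective F)
    (hFdeg : ∀ x : ℝ, F (x + 1) = F x + d) (hF0 : F 0 = 0)
    (hGmono : StrictMono G) (hGbij : Function.Bijective G)
    (hGdeg : ∀ x : ℝ, G (x + 1) = G x + d) (hG0 : G 0 = 0)
    (hFus : UnifSymm F) (hGus : UnifSymm G) :
    ∃ H : ℝ → ℝ, StrictMono H ∧ Function.Bijective H ∧
      (∀ x : ℝ, H (x + 1) = H x + 1) ∧ (∀ x : ℝ, F (H x) = H (G x)) ∧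
      ∃ M : ℝ, 1 ≤ M ∧ ∀ x t : ℝ, 0 < t →
        M⁻¹ ≤ (H (x + t) - H x) / (H x - H (x - t)) ∧
          (H (x + t) - H x) / (H x - H (x - t)) ≤ M := by
  have hF : IsLift d F := ⟨hFmono, hFbij, hFdeg, hF0⟩
  have hG : IsLift d G := ⟨hGmono, hGbij, hGdeg, hG0⟩
  obtain ⟨KF, hKF⟩ := hF.exists_invIterQuasisymm hFus
  obtain ⟨KG, hKG⟩ := hG.exists_invIterQuasisymm hGus
  have hFK := hKF.mono hF (le_max_left KF KG)
  have hGK := hKG.mono hG (le_max_right KF KG)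
  have hH := strictMono_conjugacy hF hG hd hGK
  have hper := conjugacy_add_one hF hG hd hFK hGK
  obtain ⟨M, hM⟩ := exists_quasisymm hF hG hFK hGK (monotone_conjugacy hF hG)
    (conjugacy_pt hF hG) hd hper
  refine ⟨conjugacy F G, hH, ⟨hH.injective, surjective_conjugacy hF hG hd hFK⟩, hper,
    map_conjugacy hF hG hd hFK hGK, max 1 M, le_max_left 1 M, fun x t ht => ?_⟩
  have hden : 0 < conjugacy F G x - conjugacy F G (x - t) := sub_pos.2 (hH (by linarith))
  have hnum : 0 ≤ conjugacy F G (x + t) - conjugacy F G x :=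
    sub_nonneg.2 (hH.monotone (by linarith))
  obtain ⟨h₁, h₂⟩ := hM x t ht
  rw [le_div_iff₀ hden, inv_mul_le_iff₀ (by positivity), div_le_iff₀ hden]
  constructor
  · exact h₂.trans (mul_le_mul_of_nonneg_right (le_max_right 1 M) hnum)
  · exact h₁.trans (mul_le_mul_of_nonneg_right (le_max_right 1 M) hden.le)
end

section
/- Let d ≥ 2 and let F : ℝ → ℝ be an increasing homeomorphism with F(x+1) = F(x) + d for all x, F(0) = 0, which is continuously differentiable with α-Hölder derivative (0 < α ≤ 1) and expanding ((Fⁿ)′(x) ≥ Cλⁿ for some C > 0, λ > 1 and all x, n). Then the dual derivative D*(F) : Σ* → ℝ exists and is Hölder continuous: there are constants C′ > 0 and 0 < τ < 1 such that |D*(F)(w) − D*(F)(w′)| ≤ C′ τⁿ whenever w(q) = w′(q) for all q < n. -/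
open Filter

/-- `kseq d w n = Σ_{q<n} w(q) d^q`. -/
def kseq (d : ℕ) (w : ℕ → Fin d) (n : ℕ) : ℕ :=
  ∑ q ∈ Finset.range n, (w q : ℕ) * d ^ q

/-- The shift `σ*` on the dual symbolic space. -/
def shft {d : ℕ} (w : ℕ → Fin d) : ℕ → Fin d := fun q => w (q + 1)

/-- The `n`-th approximant `D*_n(F)(w)` of the dual derivative. -/
noncomputable def DstarSeq (F : ℝ → ℝ) {d : ℕ} (w : ℕ → Fin d) (n : ℕ) : ℝ :=
  (Finv F (n - 1) ((kseq d (shft w) (n - 1) : ℝ) + 1) -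
      Finv F (n - 1) (kseq d (shft w) (n - 1) : ℝ)) /
  (Finv F n ((kseq d w n : ℝ) + 1) - Finv F n (kseq d w n : ℝ))

/-!
Write `G = F⁻¹`. With `k = k_m(σ*w)`, the approximant `D*_{m+1}(F)(w)` is the ratio of the
lengths of `G^m [k, k + 1]` and of the nested interval `G^m [k + G(w 0), k + G(w 0 + 1)]`, and
passing from `m` to `m + 1` applies the same branch `G (· + w (m + 1))` to both intervals. By the
mean value theorem this multiplies the ratio by `F'(θ₂) / F'(θ₁)` with `θ₁, θ₂` in an interval of
length `O(λ^{-m})` (expansion), so the Hölder continuity of `F'` makes the relative change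
`O(λ^{-α m})`. Hence the approximants stay bounded and converge geometrically fast, and since
`D*_n(F)(w)` depends only on `w 0, …, w (n - 1)`, the limit is Hölder continuous.
-/

open Function Set Topology

theorem invFun_iterate_eq {α : Type*} [Nonempty α] {f g : α → α} (hgf : LeftInverse g f)
    (hfg : RightInverse g f) (n : ℕ) : invFun f^[n] = g^[n] :=
  invFun_eq_of_injective_of_rightInverse (hgf.iterate n).injective (hfg.iterate n)

theorem Monotone.strictMono_of_rightInverse {α β : Type*} [LinearOrder α] [Preorder β]
    {f : α → β} {g : β → α} (hf : Monotone f) (hfg : RightInverse g f) : StrictMono g := by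
  intro u v huv
  by_contra! h
  have := hf h
  rw [hfg u, hfg v] at this
  exact huv.not_ge this

section Lift

variable {F G : ℝ → ℝ} {d : ℕ}

theorem lift_add_natCast (hdeg : ∀ x, F (x + 1) = F x + d) (x : ℝ) (j : ℕ) :
    F (x + j) = F x + d * j := by
  induction j with
  | zero => simp
  | succ j ih =>
    rw [Nat.cast_succ, ← add_assoc, hdeg, ih]
    ring

theorem inv_add_mul_natCast (hdeg : ∀ x, F (x + 1) = F x + d) (hGF : LeftInverse G F)
    (hFG : RightInverse G F) (y : ℝ) (j : ℕ) : G (y + d * j) = G y + j := by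
  rw [← hGF (G y + j), lift_add_natCast hdeg, hFG y]

theorem inv_iterate_add_pow_mul_natCast (hdeg : ∀ x, F (x + 1) = F x + d)
    (hGF : LeftInverse G F) (hFG : RightInverse G F) (m : ℕ) (y : ℝ) (j : ℕ) :
    G^[m] (y + d ^ m * j) = G^[m] y + j := by
  induction m generalizing y j with
  | zero => simp
  | succ m ih =>
    have : y + (d : ℝ) ^ (m + 1) * j = y + d * (d ^ m * j : ℕ) := by push_cast; ring
    rw [iterate_succ_apply, iterate_succ_apply, this, inv_add_mul_natCast hdeg hGF hFG,
      Nat.cast_mul, Nat.cast_pow, ih]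

end Lift

theorem kseq_succ_eq_add_mul_kseq_shft (d : ℕ) (w : ℕ → Fin d) (n : ℕ) :
    kseq d w (n + 1) = w 0 + d * kseq d (shft w) n := by
  rw [kseq, kseq, Finset.sum_range_succ', Finset.mul_sum, add_comm, pow_zero, mul_one]
  exact congrArg _ (Finset.sum_congr rfl fun q _ => by rw [shft, pow_succ]; ring)

theorem kseq_congr {d : ℕ} {w w' : ℕ → Fin d} {n : ℕ} (h : ∀ q < n, w q = w' q) :
    kseq d w n = kseq d w' n :=
  Finset.sum_congr rfl fun q hq => by rw [h q (Finset.mem_range.1 hq)]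

theorem DstarSeq_congr (F : ℝ → ℝ) {d : ℕ} {w w' : ℕ → Fin d} {n : ℕ}
    (h : ∀ q < n, w q = w' q) : DstarSeq F w n = DstarSeq F w' n := by
  have hshft : ∀ q < n - 1, shft w q = shft w' q := fun q hq => h (q + 1) (by omega)
  simp only [DstarSeq, kseq_congr h, kseq_congr hshft]

theorem DstarSeq_zero {F G : ℝ → ℝ} (hGF : LeftInverse G F) (hFG : RightInverse G F) {d : ℕ}
    (w : ℕ → Fin d) : DstarSeq F w 0 = 1 := by
  simp only [DstarSeq, Finv, invFun_iterate_eq hGF hFG]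
  simp [kseq]

/-- The branch `G^m` of `F^{-m}` on `[k_m(v), k_m(v) + 1]`, parametrised by `s ∈ [0, 1]`. -/
def invBranch (G : ℝ → ℝ) {d : ℕ} (v : ℕ → Fin d) (m : ℕ) (s : ℝ) : ℝ :=
  G^[m] (kseq d v m + s)

theorem invBranch_strictMono {G : ℝ → ℝ} (hG : StrictMono G) {d : ℕ} (v : ℕ → Fin d) (m : ℕ) :
    StrictMono (invBranch G v m) :=
  (hG.iterate m).comp (strictMono_id.const_add _)

section InvBranch

variable {F G : ℝ → ℝ} {d : ℕ} (hdeg : ∀ x, F (x + 1) = F x + d) (hGF : LeftInverse G F)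
  (hFG : RightInverse G F)
include hdeg hGF hFG

theorem invBranch_succ (v : ℕ → Fin d) (m : ℕ) (s : ℝ) :
    invBranch G v (m + 1) s = G (invBranch G v m s + v m) := by
  have : (kseq d v (m + 1) : ℝ) + s = kseq d v m + s + d ^ m * (v m : ℕ) := by
    simp only [kseq, Finset.sum_range_succ]
    push_cast
    ring
  rw [invBranch, iterate_succ_apply', this, inv_iterate_add_pow_mul_natCast hdeg hGF hFG,
    invBranch]

theorem DstarSeq_succ_eq (w : ℕ → Fin d) (m : ℕ) :
    DstarSeq F w (m + 1) =
      (invBranch G (shft w) m 1 - invBranch G (shft w) m 0) /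
        (invBranch G (shft w) m (G (w 0 + 1)) - invBranch G (shft w) m (G (w 0))) := by
  have hpull : ∀ s : ℝ,
      G^[m + 1] (kseq d w (m + 1) + s) = invBranch G (shft w) m (G (w 0 + s)) := by
    intro s
    rw [kseq_succ_eq_add_mul_kseq_shft, iterate_succ_apply]
    push_cast
    rw [show (w 0 : ℝ) + d * kseq d (shft w) m + s = w 0 + s + d * kseq d (shft w) m by ring,
      inv_add_mul_natCast hdeg hGF hFG, add_comm, invBranch]
  have hpull0 := hpull 0
  rw [add_zero, add_zero] at hpull0
  simp only [DstarSeq, Finv, Nat.add_sub_cancel, invFun_iterate_eq hGF hFG, hpull 1, hpull0]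
  simp only [invBranch, add_zero]

end InvBranch

theorem nonneg_of_forall_abs_sub_le_mul_rpow {f : ℝ → ℝ} {L α : ℝ}
    (h : ∀ x y, |f x - f y| ≤ L * |x - y| ^ α) : 0 ≤ L :=
  (abs_nonneg _).trans (by simpa using h 1 0)

section InverseMeanValue

variable {f f' g : ℝ → ℝ} (hf : ∀ x, HasDerivAt f (f' x) x) (hfg : RightInverse g f)
  (hg : StrictMono g)
include hf hfg hg

theorem exists_mem_Icc_sub_eq_mul_sub {u v : ℝ} (huv : u < v) :
    ∃ θ ∈ Icc (g u) (g v), v - u = f' θ * (g v - g u) := by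
  have hlt : g u < g v := hg huv
  obtain ⟨θ, hθ, hslope⟩ := exists_hasDerivAt_eq_slope f f' hlt
    (continuous_iff_continuousAt.2 fun x => (hf x).continuousAt).continuousOn
    fun x _ => hf x
  refine ⟨θ, Ioo_subset_Icc_self hθ, ?_⟩
  rw [hslope, hfg u, hfg v, div_mul_cancel₀ _ (sub_pos.2 hlt).ne']

theorem sub_le_div_of_forall_le {c : ℝ} (hc : 0 < c) (hf' : ∀ x, c ≤ f' x) {u v : ℝ}
    (huv : u < v) : g v - g u ≤ (v - u) / c := by
  obtain ⟨θ, -, hθ⟩ := exists_mem_Icc_sub_eq_mul_sub hf hfg hg huv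
  rw [le_div_iff₀ hc, hθ, mul_comm]
  exact mul_le_mul_of_nonneg_right (hf' θ) (sub_pos.2 (hg huv)).le

/-- Bounded distortion: pulling back by `g` changes the ratio of the lengths of nested intervals
by a factor `f' θ₂ / f' θ₁` with `θ₁, θ₂ ∈ [g A, g B]`, which is close to `1` when `f'` is
Hölder. -/
theorem abs_div_sub_div_le {c L α : ℝ} (hc : 0 < c) (hf' : ∀ x, c ≤ f' x) (hα : 0 ≤ α)
    (hHolder : ∀ x y, |f' x - f' y| ≤ L * |x - y| ^ α) {A a b B : ℝ} (hAa : A ≤ a)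
    (hab : a < b) (hbB : b ≤ B) :
    |(g B - g A) / (g b - g a) - (B - A) / (b - a)| ≤
      (B - A) / (b - a) * (L * (g B - g A) ^ α / c) := by
  have hL : 0 ≤ L := nonneg_of_forall_abs_sub_le_mul_rpow hHolder
  obtain ⟨θ₁, hθ₁, h₁⟩ := exists_mem_Icc_sub_eq_mul_sub hf hfg hg (hAa.trans_lt (hab.trans_le hbB))
  obtain ⟨θ₂, hθ₂, h₂⟩ := exists_mem_Icc_sub_eq_mul_sub hf hfg hg hab
  have hθ₂' : θ₂ ∈ Icc (g A) (g B) :=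
    ⟨(hg.monotone hAa).trans hθ₂.1, hθ₂.2.trans (hg.monotone hbB)⟩
  have hc₁ : 0 < f' θ₁ := hc.trans_le (hf' θ₁)
  have hc₂ : 0 < f' θ₂ := hc.trans_le (hf' θ₂)
  have hratio : (g B - g A) / (g b - g a) - (B - A) / (b - a) =
      (B - A) / (b - a) * ((f' θ₂ - f' θ₁) / f' θ₁) := by
    rw [h₁, h₂]
    field_simp
  have hdist : |θ₂ - θ₁| ≤ g B - g A := abs_sub_le_iff.2
    ⟨by linarith [hθ₁.1, hθ₂'.2], by linarith [hθ₁.2, hθ₂'.1]⟩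
  have hBA : 0 ≤ g B - g A := hdist.trans' (abs_nonneg _)
  rw [hratio, abs_mul, abs_of_nonneg (div_nonneg (by linarith) (by linarith)), abs_div,
    abs_of_pos hc₁]
  refine mul_le_mul_of_nonneg_left ?_ (div_nonneg (by linarith) (by linarith))
  calc |f' θ₂ - f' θ₁| / f' θ₁ ≤ L * |θ₂ - θ₁| ^ α / f' θ₁ := by gcongr; exact hHolder θ₂ θ₁
    _ ≤ L * (g B - g A) ^ α / f' θ₁ := by gcongr
    _ ≤ L * (g B - g A) ^ α / c := by gcongr; exact hf' θ₁

end InverseMeanValue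

section GeometricRatio

variable {ψ : ℕ → ℝ} {K τ : ℝ} (hψ : ∀ m, 0 ≤ ψ m) (hK : 0 ≤ K) (hτ0 : 0 ≤ τ) (hτ1 : τ < 1)
  (hstep : ∀ m, |ψ (m + 1) - ψ m| ≤ ψ m * (K * τ ^ m))
include hψ hK hτ0 hτ1 hstep

theorem le_mul_exp_of_abs_sub_le_mul_geometric (m : ℕ) :
    ψ m ≤ ψ 0 * Real.exp (K / (1 - τ)) := by
  have hprod : ∀ m, ψ m ≤ ψ 0 * Real.exp (K * ∑ j ∈ Finset.range m, τ ^ j) := by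
    intro m
    induction m with
    | zero => simp
    | succ m ih =>
      calc ψ (m + 1) ≤ ψ m * (1 + K * τ ^ m) := by
            linarith [(abs_le.1 (hstep m)).2]
        _ ≤ ψ m * Real.exp (K * τ ^ m) := by
            gcongr
            · exact hψ m
            · linarith [Real.add_one_le_exp (K * τ ^ m)]
        _ ≤ ψ 0 * Real.exp (K * ∑ j ∈ Finset.range m, τ ^ j) * Real.exp (K * τ ^ m) := by
            gcongr
        _ = ψ 0 * Real.exp (K * ∑ j ∈ Finset.range (m + 1), τ ^ j) := by
            rw [Finset.sum_range_succ, mul_add, Real.exp_add, mul_assoc]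
  refine (hprod m).trans (mul_le_mul_of_nonneg_left ?_ (hψ 0))
  rw [div_eq_mul_inv]
  gcongr
  simpa using geom_sum_Ico_le_of_lt_one (m := 0) (n := m) hτ0 hτ1

theorem exists_tendsto_of_abs_sub_le_mul_geometric :
    ∃ l, Tendsto ψ atTop (𝓝 l) ∧
      ∀ m, |ψ m - l| ≤ ψ 0 * (Real.exp (K / (1 - τ)) * K / (1 - τ)) * τ ^ m := by
  have hdist : ∀ m, dist (ψ m) (ψ (m + 1)) ≤ ψ 0 * Real.exp (K / (1 - τ)) * K * τ ^ m := by
    intro m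
    rw [Real.dist_eq, abs_sub_comm, mul_assoc _ K]
    exact (hstep m).trans (mul_le_mul_of_nonneg_right
      (le_mul_exp_of_abs_sub_le_mul_geometric hψ hK hτ0 hτ1 hstep m) (by positivity))
  obtain ⟨l, hl⟩ := cauchySeq_tendsto_of_complete (cauchySeq_of_le_geometric _ _ hτ1 hdist)
  refine ⟨l, hl, fun m => ?_⟩
  have := dist_le_of_le_geometric_of_tendsto _ _ hτ1 hdist hl m
  rw [Real.dist_eq] at this
  exact this.trans_eq (by ring)

end GeometricRatio


section DualDerivative

variable {F F' G : ℝ → ℝ} {d : ℕ} (hmono : StrictMono F) (hdeg : ∀ x, F (x + 1) = F x + d)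
  (hGF : LeftInverse G F) (hFG : RightInverse G F)
include hmono hdeg hGF hFG

theorem DstarSeq_succ_pos (w : ℕ → Fin d) (m : ℕ) : 0 < DstarSeq F w (m + 1) := by
  have hG := hmono.monotone.strictMono_of_rightInverse hFG
  have hP := invBranch_strictMono hG (shft w) m
  rw [DstarSeq_succ_eq hdeg hGF hFG]
  exact div_pos (sub_pos.2 (hP one_pos)) (sub_pos.2 (hP (hG (lt_add_one _))))

theorem Icc_inv_subset_unitInterval (hF0 : F 0 = 0) (j : Fin d) :
    Icc (G j) (G (j + 1)) ⊆ Icc 0 1 := by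
  have hG := hmono.monotone.strictMono_of_rightInverse hFG
  have hG0 : G 0 = 0 := by simpa [hF0] using hGF 0
  have hGd : G d = 1 := by simpa [hG0] using inv_add_mul_natCast hdeg hGF hFG 0 1
  have hj : (j : ℝ) + 1 ≤ d := by exact_mod_cast j.isLt
  exact Icc_subset_Icc (hG0 ▸ hG.monotone (Nat.cast_nonneg _)) ((hG.monotone hj).trans_eq hGd)

theorem DstarSeq_one_le (hF0 : F 0 = 0) (hderiv : ∀ x, HasDerivAt F (F' x) x)
    {L α : ℝ} (hα : 0 ≤ α) (hHolder : ∀ x y, |F' x - F' y| ≤ L * |x - y| ^ α)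
    (w : ℕ → Fin d) : DstarSeq F w 1 ≤ F' 0 + L := by
  have hG := hmono.monotone.strictMono_of_rightInverse hFG
  have hL : 0 ≤ L := nonneg_of_forall_abs_sub_le_mul_rpow hHolder
  obtain ⟨θ, hθ, hslope⟩ :=
    exists_mem_Icc_sub_eq_mul_sub hderiv hFG hG (lt_add_one (w 0 : ℝ))
  have hD : DstarSeq F w 1 = F' θ := by
    rw [DstarSeq_succ_eq hdeg hGF hFG]
    simp only [invBranch, kseq, Finset.range_zero, Finset.sum_empty, iterate_zero, id,
      CharP.cast_eq_zero, zero_add, sub_zero]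
    rw [div_eq_iff (sub_pos.2 (hG (lt_add_one _))).ne', ← hslope]
    ring
  have hθ01 := Icc_inv_subset_unitInterval hmono hdeg hGF hFG hF0 (w 0) hθ
  calc DstarSeq F w 1 = F' 0 + (F' θ - F' 0) := by rw [hD]; ring
    _ ≤ F' 0 + L * |θ - 0| ^ α := by gcongr; exact (le_abs_self _).trans (hHolder θ 0)
    _ ≤ F' 0 + L := by
        gcongr
        refine mul_le_of_le_one_right hL (Real.rpow_le_one (abs_nonneg _) ?_ hα)
        rw [sub_zero, abs_of_nonneg hθ01.1]
        exact hθ01.2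

theorem abs_DstarSeq_succ_succ_sub_le (hF0 : F 0 = 0) (hderiv : ∀ x, HasDerivAt F (F' x) x)
    {L α C lam : ℝ} (hα : 0 ≤ α) (hHolder : ∀ x y, |F' x - F' y| ≤ L * |x - y| ^ α) (hC : 0 < C)
    (hlam : 1 < lam) (hexp : ∀ (n : ℕ) (x : ℝ), 1 ≤ n → C * lam ^ n ≤ deriv (F^[n]) x)
    (w : ℕ → Fin d) (m : ℕ) :
    |DstarSeq F w (m + 2) - DstarSeq F w (m + 1)| ≤
      DstarSeq F w (m + 1) * (L * ((C * lam)⁻¹) ^ α / (C * lam) * (lam⁻¹ ^ α) ^ m) := by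
  have hG := hmono.monotone.strictMono_of_rightInverse hFG
  have hlam0 : 0 < lam := one_pos.trans hlam
  have hL : 0 ≤ L := nonneg_of_forall_abs_sub_le_mul_rpow hHolder
  have hF' : ∀ x, C * lam ≤ F' x := fun x => by simpa [(hderiv x).deriv] using hexp 1 x le_rfl
  set P := invBranch G (shft w) m
  have hP := invBranch_strictMono hG (shft w) m
  have hlen : invBranch G (shft w) (m + 1) 1 - invBranch G (shft w) (m + 1) 0 ≤
      (C * lam ^ (m + 1))⁻¹ := by
    have hdiff : Differentiable ℝ F := fun x => (hderiv x).differentiableAt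
    have := sub_le_div_of_forall_le (fun x => (hdiff.iterate (m + 1) x).hasDerivAt)
      (hFG.iterate _) (hG.iterate _) (by positivity) (fun x => hexp (m + 1) x (by omega))
      (lt_add_one ((kseq d (shft w) (m + 1) : ℝ) + 0))
    simpa [invBranch, add_assoc] using this
  have hpow : ((C * lam ^ (m + 1))⁻¹) ^ α = ((C * lam)⁻¹) ^ α * (lam⁻¹ ^ α) ^ m := by
    rw [Real.rpow_pow_comm (by positivity), ← Real.mul_rpow (by positivity) (by positivity)]
    congr 1
    simp only [inv_pow]
    field_simp
    ring
  have hnest := Icc_inv_subset_unitInterval hmono hdeg hGF hFG hF0 (w 0)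
  have hdigit : G (w 0) < G (w 0 + 1) := hG (lt_add_one _)
  have hdistortion := abs_div_sub_div_le hderiv hFG hG (mul_pos hC hlam0) hF' hα hHolder
    (A := P 0 + shft w m) (a := P (G (w 0)) + shft w m) (b := P (G (w 0 + 1)) + shft w m)
    (B := P 1 + shft w m) (by gcongr; exact hP.monotone (hnest ⟨le_rfl, hdigit.le⟩).1)
    (by gcongr; exact hP hdigit) (by gcongr; exact hP.monotone (hnest ⟨hdigit.le, le_rfl⟩).2)
  simp only [add_sub_add_right_eq_sub] at hdistortion
  rw [show m + 2 = m + 1 + 1 by rfl, DstarSeq_succ_eq hdeg hGF hFG, DstarSeq_succ_eq hdeg hGF hFG]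
  simp only [invBranch_succ hdeg hGF hFG] at hlen ⊢
  refine hdistortion.trans (mul_le_mul_of_nonneg_left ?_
    (div_nonneg (sub_pos.2 (hP one_pos)).le (sub_pos.2 (hP hdigit)).le))
  calc L * (G (P 1 + shft w m) - G (P 0 + shft w m)) ^ α / (C * lam)
      ≤ L * ((C * lam ^ (m + 1))⁻¹) ^ α / (C * lam) := by
        gcongr
        exact sub_nonneg.2 (hG.monotone (add_le_add_left (hP.monotone zero_le_one) _))
    _ = _ := by rw [hpow]; ring

theorem exists_tendsto_DstarSeq_geometric (hF0 : F 0 = 0) (hderiv : ∀ x, HasDerivAt F (F' x) x)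
    {L α C lam : ℝ} (hα : 0 < α) (hHolder : ∀ x y, |F' x - F' y| ≤ L * |x - y| ^ α)
    (hC : 0 < C) (hlam : 1 < lam)
    (hexp : ∀ (n : ℕ) (x : ℝ), 1 ≤ n → C * lam ^ n ≤ deriv (F^[n]) x) :
    ∃ K τ : ℝ, 0 < K ∧ 0 < τ ∧ τ < 1 ∧ ∀ w : ℕ → Fin d, ∃ l,
      Tendsto (fun n => DstarSeq F w n) atTop (𝓝 l) ∧ ∀ n, |DstarSeq F w n - l| ≤ K * τ ^ n := by
  have hL : 0 ≤ L := nonneg_of_forall_abs_sub_le_mul_rpow hHolder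
  have hM : 0 < F' 0 + L := by
    have := hexp 1 0 le_rfl
    rw [pow_one, iterate_one, (hderiv 0).deriv] at this
    nlinarith
  set κ := L * ((C * lam)⁻¹) ^ α / (C * lam)
  set τ := lam⁻¹ ^ α
  have hκ : 0 ≤ κ := by positivity
  have hτ0 : 0 < τ := by positivity
  have hτ1 : τ < 1 := Real.rpow_lt_one (by positivity) (inv_lt_one_of_one_lt₀ hlam) hα
  set E := Real.exp (κ / (1 - τ)) * κ / (1 - τ)
  have hE : 0 ≤ E := div_nonneg (by positivity) (by linarith)
  refine ⟨1 + (F' 0 + L) + (F' 0 + L) * (E / τ), τ, by positivity, hτ0, hτ1, fun w => ?_⟩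
  obtain ⟨l, hl, hrate⟩ := exists_tendsto_of_abs_sub_le_mul_geometric
    (ψ := fun m => DstarSeq F w (m + 1)) (fun m => (DstarSeq_succ_pos hmono hdeg hGF hFG w m).le)
    hκ hτ0.le hτ1
    (abs_DstarSeq_succ_succ_sub_le hmono hdeg hGF hFG hF0 hderiv hα.le hHolder hC hlam hexp w)
  simp only [zero_add] at hrate
  refine ⟨l, (tendsto_add_atTop_iff_nat 1).1 hl, ?_⟩
  have hD1 := DstarSeq_one_le hmono hdeg hGF hFG hF0 hderiv hα.le hHolder w
  have hD1pos := DstarSeq_succ_pos hmono hdeg hGF hFG w 0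
  rintro (_ | n)
  · have h0 := hrate 0
    simp only [zero_add, pow_zero, mul_one] at h0
    rw [DstarSeq_zero hGF hFG, pow_zero, mul_one]
    have : DstarSeq F w 1 * E ≤ (F' 0 + L) * (E / τ) := by
      gcongr
      exact le_div_self hE hτ0 hτ1.le
    rw [abs_le] at h0 ⊢
    constructor <;> linarith
  · calc |DstarSeq F w (n + 1) - l| ≤ DstarSeq F w 1 * E * τ ^ n := hrate n
      _ ≤ (F' 0 + L) * E * τ ^ n := by gcongr
      _ = (F' 0 + L) * (E / τ) * τ ^ (n + 1) := by field_simp; ring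
      _ ≤ _ := by gcongr; linarith

end DualDerivative

theorem stmt_9_general (d : ℕ) (F F' : ℝ → ℝ)
    (hmono : StrictMono F) (hbij : Function.Bijective F)
    (hdeg : ∀ x : ℝ, F (x + 1) = F x + d) (hF0 : F 0 = 0)
    (hderiv : ∀ x : ℝ, HasDerivAt F (F' x) x)
    (α : ℝ) (hα0 : 0 < α) (L : ℝ)
    (hHolder : ∀ x y : ℝ, |F' x - F' y| ≤ L * |x - y| ^ α)
    (C lam : ℝ) (hC : 0 < C) (hlam : 1 < lam)
    (hexp : ∀ (n : ℕ) (x : ℝ), 1 ≤ n → C * lam ^ n ≤ deriv (F^[n]) x) :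
    ∃ DF : (ℕ → Fin d) → ℝ,
      (∀ w : ℕ → Fin d, Tendsto (fun n => DstarSeq F w n) atTop (nhds (DF w))) ∧
      ∃ C' τ : ℝ, 0 < C' ∧ 0 < τ ∧ τ < 1 ∧
        ∀ (w w' : ℕ → Fin d) (n : ℕ), (∀ q < n, w q = w' q) →
          |DF w - DF w'| ≤ C' * τ ^ n := by
  obtain ⟨K, τ, hK, hτ0, hτ1, hlim⟩ := exists_tendsto_DstarSeq_geometric hmono hdeg
    (leftInverse_invFun hbij.1) (rightInverse_invFun hbij.2) hF0 hderiv hα0 hHolder hC hlam hexp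
  choose DF hDF hrate using hlim
  refine ⟨DF, hDF, 2 * K, τ, by positivity, hτ0, hτ1, fun w w' n hww' => ?_⟩
  have hrate' := hrate w' n
  rw [← DstarSeq_congr F hww'] at hrate'
  calc |DF w - DF w'| = |(DstarSeq F w n - DF w') - (DstarSeq F w n - DF w)| := by ring_nf
    _ ≤ |DstarSeq F w n - DF w'| + |DstarSeq F w n - DF w| := abs_sub _ _
    _ ≤ 2 * K * τ ^ n := by linarith [hrate w n]

/-- for a `C^{1+α}` expanding circle endomorphism, the dual
derivative exists and is Hölder continuous on the dual symbolic space. -/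
theorem stmt_9 (d : ℕ) (hd : 2 ≤ d) (F F' : ℝ → ℝ)
    (hmono : StrictMono F) (hbij : Function.Bijective F)
    (hdeg : ∀ x : ℝ, F (x + 1) = F x + d) (hF0 : F 0 = 0)
    (hderiv : ∀ x : ℝ, HasDerivAt F (F' x) x) (hcont : Continuous F')
    (α : ℝ) (hα0 : 0 < α) (hα1 : α ≤ 1) (L : ℝ)
    (hHolder : ∀ x y : ℝ, |F' x - F' y| ≤ L * |x - y| ^ α)
    (C lam : ℝ) (hC : 0 < C) (hlam : 1 < lam)
    (hexp : ∀ (n : ℕ) (x : ℝ), 1 ≤ n → C * lam ^ n ≤ deriv (F^[n]) x) :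
    ∃ DF : (ℕ → Fin d) → ℝ,
      (∀ w : ℕ → Fin d, Tendsto (fun n => DstarSeq F w n) atTop (nhds (DF w))) ∧
      ∃ C' τ : ℝ, 0 < C' ∧ 0 < τ ∧ τ < 1 ∧
        ∀ (w w' : ℕ → Fin d) (n : ℕ), (∀ q < n, w q = w' q) →
          |DF w - DF w'| ≤ C' * τ ^ n :=
  stmt_9_general d F F' hmono hbij hdeg hF0 hderiv α hα0 L hHolder C lam hC hlam hexp
end
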